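/- arXiv:2102.01949 — 9 statements merged into one kernel-verified Lean document; each statement's English description precedes it below -/
import Mathlib

section
/- Let $c_1 \in \mathbb{C}$ be nonzero, $\lambda \in \mathbb{C}$ with $|\lambda| > 1$, $B \in \mathbb{R}$, and let $Q \in \mathbb{C}[X]$ be a non-constant polynomial. Then there is a constant $C$ (depending on the data) such that for all $N \geq 2$, the number of positive integers $n \leq N$ for which there exists an integer $k_1$ with $|Q(n) - c_1 \lambda^{k_1}| \leq B$ is at most $C \log N$. -/
open Polynomial Finset

lemma auxA (Q : Polynomial ℂ) (n : ℕ) (hn : 1 ≤ n) :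
    ‖Q.eval (n:ℂ) - Q.leadingCoeff * (n:ℂ)^Q.natDegree‖ ≤
      (∑ i ∈ Finset.range Q.natDegree, ‖Q.coeff i‖) * (n:ℝ)^(Q.natDegree - 1) := by
  have h1 : Q.eval (n:ℂ) - Q.leadingCoeff * (n:ℂ)^Q.natDegree
      = ∑ i ∈ Finset.range Q.natDegree, Q.coeff i * (n:ℂ)^i := by
    rw [Polynomial.eval_eq_sum_range, Finset.sum_range_succ, Polynomial.coeff_natDegree]
    ring
  rw [h1]
  calc ‖∑ i ∈ Finset.range Q.natDegree, Q.coeff i * (n:ℂ)^i‖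
      ≤ ∑ i ∈ Finset.range Q.natDegree, ‖Q.coeff i * (n:ℂ)^i‖ :=
        norm_sum_le _ _
    _ ≤ ∑ i ∈ Finset.range Q.natDegree, ‖Q.coeff i‖ * (n:ℝ)^(Q.natDegree - 1) := by
        apply Finset.sum_le_sum
        intro i hi
        rw [norm_mul, norm_pow, Complex.norm_natCast]
        apply mul_le_mul_of_nonneg_left _ (norm_nonneg _)
        apply pow_le_pow_right₀ (by exact_mod_cast hn)
        · simp only [Finset.mem_range] at hi; omega
    _ = _ := by rw [Finset.sum_mul]

lemma auxB (Q : Polynomial ℂ) (hQ : 0 < Q.natDegree) (B : ℝ) (M : ℕ)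
    (hM : 2 * (∑ i ∈ Finset.range Q.natDegree, ‖Q.coeff i‖) + 2*|B| + 1
          ≤ ‖Q.leadingCoeff‖ * M)
    (n n' : ℕ) (hn : 1 ≤ n) (hnn' : n + M ≤ n') :
    2*B < ‖Q.eval (n':ℂ) - Q.eval (n:ℂ)‖ := by
  set d := Q.natDegree with hdd
  set e := d - 1 with hee
  have hde : d = e + 1 := by omega
  set a := ‖Q.leadingCoeff‖ with haa
  have ha0 : 0 ≤ a := norm_nonneg _
  set C₂ := ∑ i ∈ Finset.range Q.natDegree, ‖Q.coeff i‖ with hC₂def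
  have hC₂ : 0 ≤ C₂ := Finset.sum_nonneg fun i _ => norm_nonneg _
  have hn' : 1 ≤ n' := by omega
  have h1 := auxA Q n hn
  have h2 := auxA Q n' hn'
  set x := (n:ℝ) with hxdef
  set x' := (n':ℝ) with hx'def
  have hx : (1:ℝ) ≤ x := by rw [hxdef]; exact_mod_cast hn
  have hx' : (1:ℝ) ≤ x' := by rw [hx'def]; exact_mod_cast hn'
  have hxx' : x + M ≤ x' := by rw [hxdef, hx'def]; exact_mod_cast hnn'
  have hxle : x ≤ x' := by
    have : (0:ℝ) ≤ M := Nat.cast_nonneg M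
    linarith
  have hpowle : x^d ≤ x'^d := pow_le_pow_left₀ (by linarith) hxle d
  have key : ‖Q.leadingCoeff * (n':ℂ)^d - Q.leadingCoeff * (n:ℂ)^d‖
      = a * (x'^d - x^d) := by
    rw [← mul_sub, norm_mul]
    congr 1
    have hcast : ((n':ℂ)^d - (n:ℂ)^d) = (((x'^d - x^d : ℝ)) : ℂ) := by
      push_cast [hxdef, hx'def]; ring
    rw [hcast, Complex.norm_real, Real.norm_eq_abs, abs_of_nonneg (by linarith)]
  have tri : a * (x'^d - x^d)
      ≤ ‖Q.eval (n':ℂ) - Q.eval (n:ℂ)‖ + C₂*x'^e + C₂*x^e := by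
    have hid : Q.leadingCoeff * (n':ℂ)^d - Q.leadingCoeff * (n:ℂ)^d
        = (Q.eval (n':ℂ) - Q.eval (n:ℂ))
          + (-(Q.eval (n':ℂ) - Q.leadingCoeff * (n':ℂ)^d))
          + (Q.eval (n:ℂ) - Q.leadingCoeff * (n:ℂ)^d) := by ring
    calc a * (x'^d - x^d) = ‖Q.leadingCoeff * (n':ℂ)^d - Q.leadingCoeff * (n:ℂ)^d‖ :=
          key.symm
      _ ≤ ‖Q.eval (n':ℂ) - Q.eval (n:ℂ)‖
          + ‖Q.eval (n':ℂ) - Q.leadingCoeff * (n':ℂ)^d‖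
          + ‖Q.eval (n:ℂ) - Q.leadingCoeff * (n:ℂ)^d‖ := by
          rw [hid]
          have u1 := norm_add_le (Q.eval (n':ℂ) - Q.eval (n:ℂ)
            + -(Q.eval (n':ℂ) - Q.leadingCoeff * (n':ℂ)^d))
            (Q.eval (n:ℂ) - Q.leadingCoeff * (n:ℂ)^d)
          have u2 := norm_add_le (Q.eval (n':ℂ) - Q.eval (n:ℂ))
            (-(Q.eval (n':ℂ) - Q.leadingCoeff * (n':ℂ)^d))
          rw [norm_neg] at u2
          linarith
      _ ≤ _ := by gcongr
  have hxe : x^e ≤ x'^e := pow_le_pow_left₀ (by linarith) hxle e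
  have hx'e1 : (1:ℝ) ≤ x'^e := one_le_pow₀ hx'
  have hxd : x^d = x^e * x := by rw [hde]; ring
  have hx'd : x'^d = x'^e * x' := by rw [hde]; ring
  have hpow : x'^e * (x' - x) ≤ x'^d - x^d := by
    rw [hxd, hx'd]
    nlinarith [mul_le_mul_of_nonneg_right hxe (by linarith : (0:ℝ) ≤ x)]
  have hM' : 2*|B| + 1 ≤ a*M - 2*C₂ := by linarith
  have s1 : a * (x'^e * (x' - x)) ≤ a * (x'^d - x^d) := mul_le_mul_of_nonneg_left hpow ha0
  have t3 : x'^e * (M:ℝ) ≤ x'^e * (x'-x) := mul_le_mul_of_nonneg_left (by linarith) (by positivity)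
  have s2 : a * (x'^e * (M:ℝ)) ≤ a * (x'^e * (x' - x)) := mul_le_mul_of_nonneg_left t3 ha0
  have t1 : (2*|B|+1) * x'^e ≤ (a*(M:ℝ) - 2*C₂) * x'^e :=
    mul_le_mul_of_nonneg_right hM' (by positivity)
  have t2 : (2*|B|+1) * 1 ≤ (2*|B|+1) * x'^e :=
    mul_le_mul_of_nonneg_left hx'e1 (by positivity)
  nlinarith [le_abs_self B, s1, s2, t1, t2, tri, hxe]

lemma absLead (Q : Polynomial ℂ) (n : ℕ) (d : ℕ) :
    ‖Q.leadingCoeff * (n:ℂ)^d‖ = ‖Q.leadingCoeff‖ * (n:ℝ)^d := by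
  rw [norm_mul, norm_pow, Complex.norm_natCast]

lemma auxUp (Q : Polynomial ℂ) (n : ℕ) (hn : 1 ≤ n) :
    ‖Q.eval (n:ℂ)‖
      ≤ (‖Q.leadingCoeff‖ + ∑ i ∈ Finset.range Q.natDegree, ‖Q.coeff i‖)
        * (n:ℝ)^Q.natDegree := by
  have h1 := auxA Q n hn
  have hx : (1:ℝ) ≤ (n:ℝ) := by exact_mod_cast hn
  have h2 : ((n:ℝ))^(Q.natDegree - 1) ≤ (n:ℝ)^Q.natDegree :=
    pow_le_pow_right₀ hx (Nat.sub_le _ _)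
  have tri := norm_add_le (Q.eval (n:ℂ) - Q.leadingCoeff * (n:ℂ)^Q.natDegree)
    (Q.leadingCoeff * (n:ℂ)^Q.natDegree)
  simp only [sub_add_cancel] at tri
  rw [absLead] at tri
  have hC₂ : (0:ℝ) ≤ ∑ i ∈ Finset.range Q.natDegree, ‖Q.coeff i‖ :=
    Finset.sum_nonneg fun i _ => norm_nonneg _
  nlinarith [norm_nonneg Q.leadingCoeff]

lemma auxLow (Q : Polynomial ℂ) (hQ : 0 < Q.natDegree) (n : ℕ) (hn : 1 ≤ n) :
    (‖Q.leadingCoeff‖ * (n:ℝ) - ∑ i ∈ Finset.range Q.natDegree, ‖Q.coeff i‖)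
        * (n:ℝ)^(Q.natDegree - 1) ≤ ‖Q.eval (n:ℂ)‖ := by
  have h1 := auxA Q n hn
  have hx : (1:ℝ) ≤ (n:ℝ) := by exact_mod_cast hn
  have tri := norm_add_le (Q.eval (n:ℂ))
    (Q.leadingCoeff * (n:ℂ)^Q.natDegree - Q.eval (n:ℂ))
  simp only [add_sub_cancel] at tri
  rw [absLead, norm_sub_rev] at tri
  have hxd : ((n:ℝ))^Q.natDegree = (n:ℝ) * (n:ℝ)^(Q.natDegree - 1) := by
    conv_lhs => rw [show Q.natDegree = (Q.natDegree - 1) + 1 by omega]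
    ring
  rw [hxd] at tri
  nlinarith [tri, h1]
set_option maxHeartbeats 1600000 in
/-- Base case m=1: the number of positive integers n ≤ N with
|Q(n) - c₁ λ^{k₁}| ≤ B for some integer k₁ is O(log N). -/
theorem stmt0 (c₁ lam : ℂ) (hc : c₁ ≠ 0) (hlam : 1 < ‖lam‖) (B : ℝ)
    (Q : Polynomial ℂ) (hQ : 0 < Q.natDegree) :
    ∃ C : ℝ, ∀ N : ℕ, 2 ≤ N →
      ({n : ℕ | 1 ≤ n ∧ n ≤ N ∧ ∃ k : ℤ,
        ‖Q.eval (n : ℂ) - c₁ * lam ^ k‖ ≤ B}.ncard : ℝ) ≤ C * Real.log N := by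
  classical
  have hQ0 : Q ≠ 0 := fun h => by simp [h] at hQ
  obtain ⟨d, hdd⟩ : ∃ x, x = Q.natDegree := ⟨_, rfl⟩
  obtain ⟨a, haa⟩ : ∃ x, x = ‖Q.leadingCoeff‖ := ⟨_, rfl⟩
  obtain ⟨C₂, hC2⟩ : ∃ x, x = ∑ i ∈ Finset.range Q.natDegree, ‖Q.coeff i‖ := ⟨_, rfl⟩
  have hQd : 0 < d := by rw [hdd]; exact hQ
  have ha : 0 < a := by
    rw [haa, norm_pos_iff]
    exact Polynomial.leadingCoeff_ne_zero.mpr hQ0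
  have hC₂ : 0 ≤ C₂ := by
    rw [hC2]; exact Finset.sum_nonneg fun i _ => norm_nonneg _
  obtain ⟨M, hMdef⟩ : ∃ m : ℕ, m = ⌈(2*C₂ + 2*|B| + 1)/a⌉₊ := ⟨_, rfl⟩
  have hM : 2*C₂ + 2*|B| + 1 ≤ a * M := by
    have h := Nat.le_ceil ((2*C₂ + 2*|B| + 1)/a)
    rw [div_le_iff₀ ha] at h
    rw [hMdef]; linarith
  obtain ⟨c, hcc⟩ : ∃ x, x = ‖c₁‖ := ⟨_, rfl⟩
  have hc0 : 0 < c := by rw [hcc, norm_pos_iff]; exact hc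
  obtain ⟨n₁, hn₁def⟩ : ∃ m : ℕ, m = ⌈(C₂ + |B| + c + 1)/a⌉₊ + 1 := ⟨_, rfl⟩
  have hn₁pos : 1 ≤ n₁ := by rw [hn₁def]; omega
  have hn₁ : ∀ n : ℕ, n₁ ≤ n → |B| + c + 1 ≤ ‖Q.eval (n:ℂ)‖ := by
    intro n hn
    have hn1 : 1 ≤ n := le_trans hn₁pos hn
    have hlow := auxLow Q hQ n hn1
    rw [← haa, ← hC2, ← hdd] at hlow
    have hx : (1:ℝ) ≤ (n:ℝ) := by exact_mod_cast hn1
    have hceil : (C₂ + |B| + c + 1)/a ≤ (n:ℝ) := by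
      calc (C₂+|B|+c+1)/a ≤ (⌈(C₂+|B|+c+1)/a⌉₊ : ℝ) := Nat.le_ceil _
        _ ≤ (n₁ : ℝ) := by rw [hn₁def]; push_cast; linarith
        _ ≤ (n:ℝ) := by exact_mod_cast hn
    have han : C₂ + |B| + c + 1 ≤ a * n := by rw [div_le_iff₀ ha] at hceil; linarith
    have hpe : (1:ℝ) ≤ (n:ℝ)^(d-1) := one_le_pow₀ hx
    nlinarith [hlow, hpe, han, hc0.le, abs_nonneg B]
  obtain ⟨C₃, hC₃def⟩ : ∃ x : ℝ, x = a + C₂ := ⟨_, rfl⟩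
  have hC₃0 : 0 ≤ C₃ := by rw [hC₃def]; linarith
  obtain ⟨C₅, hC₅def⟩ : ∃ x : ℝ, x = (C₃ + |B| + 1)/c + 1 := ⟨_, rfl⟩
  have hC₅ : 1 ≤ C₅ := by
    have h0 : 0 ≤ (C₃+|B|+1)/c := div_nonneg (by linarith [abs_nonneg B]) hc0.le
    rw [hC₅def]; linarith
  have hlam0 : (0:ℝ) < ‖lam‖ := lt_trans one_pos hlam
  have hloglam : 0 < Real.log (‖lam‖) := Real.log_pos hlam
  have hlog2 : 0 < Real.log 2 := Real.log_pos one_lt_two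
  have hlogC₅ : 0 ≤ Real.log C₅ := Real.log_nonneg hC₅
  refine ⟨(↑n₁ + (Real.log C₅ / Real.log (‖lam‖) + 1) * M) / Real.log 2
      + ((d:ℝ) / Real.log (‖lam‖)) * M, ?_⟩
  intro N hN
  have hN1 : (1:ℝ) ≤ (N:ℝ) := by exact_mod_cast le_trans one_le_two hN
  have hNx : (1:ℝ) ≤ (N:ℝ)^d := one_le_pow₀ hN1
  obtain ⟨kmax, hkmax⟩ : ∃ x : ℤ,
      x = ⌊Real.log (C₅ * (N:ℝ)^d) / Real.log (‖lam‖)⌋ := ⟨_, rfl⟩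
  obtain ⟨T, hT⟩ : ∃ t : ℤ → Finset ℕ, ∀ k, t k = (Finset.Icc n₁ N).filter
      (fun n : ℕ => ‖Q.eval (n:ℂ) - c₁ * lam ^ k‖ ≤ B) := ⟨_, fun _ => rfl⟩
  obtain ⟨F, hF⟩ : ∃ f : Finset ℕ,
      f = Finset.Ico 1 n₁ ∪ (Finset.Icc (0:ℤ) kmax).biUnion T := ⟨_, rfl⟩
  -- subset claim
  have hsub : {n : ℕ | 1 ≤ n ∧ n ≤ N ∧ ∃ k : ℤ,
      ‖Q.eval (n : ℂ) - c₁ * lam ^ k‖ ≤ B} ⊆ ↑F := by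
    rintro n ⟨h1, h2, k, hk⟩
    rw [Finset.mem_coe, hF, Finset.mem_union]
    by_cases hcase : n < n₁
    · exact Or.inl (Finset.mem_Ico.mpr ⟨h1, hcase⟩)
    · right
      push_neg at hcase
      have hQn := hn₁ n hcase
      have hup := auxUp Q n h1
      rw [← haa, ← hC2, ← hdd, ← hC₃def] at hup
      have habs : ‖c₁ * lam ^ k‖ = c * (‖lam‖)^k := by
        rw [norm_mul, norm_zpow, ← hcc]
      have tri1 : ‖Q.eval (n:ℂ)‖ - B ≤ c * (‖lam‖)^k := by
        have h := norm_add_le (Q.eval (n:ℂ) - c₁*lam^k) (c₁*lam^k)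
        rw [sub_add_cancel, habs] at h
        linarith
      have tri2 : c * (‖lam‖)^k ≤ ‖Q.eval (n:ℂ)‖ + B := by
        have h := norm_add_le (c₁*lam^k - Q.eval (n:ℂ)) (Q.eval (n:ℂ))
        rw [sub_add_cancel, norm_sub_rev, habs] at h
        linarith
      have hk0 : (0:ℤ) ≤ k := by
        have hck : c * 1 ≤ c * (‖lam‖)^k := by
          have hB := le_abs_self B
          linarith
        have h1' : (1:ℝ) ≤ (‖lam‖)^k := le_of_mul_le_mul_left hck hc0
        have h2' : (‖lam‖)^(0:ℤ) ≤ (‖lam‖)^k := by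
          rw [zpow_zero]; exact h1'
        exact (zpow_le_zpow_iff_right₀ hlam).mp h2'
      have hkub : k ≤ kmax := by
        rw [hkmax]
        apply Int.le_floor.mpr
        rw [le_div_iff₀ hloglam]
        have hnN : ((n:ℝ))^d ≤ (N:ℝ)^d := by
          apply pow_le_pow_left₀ (by positivity)
          exact_mod_cast h2
        have step : c * (‖lam‖)^k ≤ (C₃ + |B| + 1) * (N:ℝ)^d := by
          nlinarith [tri2, hup, hnN, hC₃0, hNx, le_abs_self B]
        have h3 : (‖lam‖)^k ≤ ((C₃+|B|+1)/c) * (N:ℝ)^d := by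
          rw [div_mul_eq_mul_div, le_div_iff₀ hc0]
          linarith
        have h4 : ((C₃+|B|+1)/c) * (N:ℝ)^d ≤ C₅ * (N:ℝ)^d := by
          apply mul_le_mul_of_nonneg_right _ (by positivity)
          rw [hC₅def]; linarith
        have hzp : (‖lam‖)^k ≤ C₅ * (N:ℝ)^d := h3.trans h4
        calc (k:ℝ) * Real.log (‖lam‖)
            = Real.log ((‖lam‖)^k) := (Real.log_zpow _ _).symm
          _ ≤ Real.log (C₅ * (N:ℝ)^d) := Real.log_le_log (zpow_pos hlam0 k) hzp
      refine Finset.mem_biUnion.mpr ⟨k, Finset.mem_Icc.mpr ⟨hk0, hkub⟩, ?_⟩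
      simp only [hT, Finset.mem_filter, Finset.mem_Icc]
      exact ⟨⟨hcase, h2⟩, hk⟩
  -- fiber bound
  have hTcard : ∀ k : ℤ, (T k).card ≤ M := by
    intro k
    by_cases hne : (T k).Nonempty
    · obtain ⟨n0, hn0⟩ : ∃ x : ℕ, x = (T k).min' hne := ⟨_, rfl⟩
      have hsub2 : T k ⊆ Finset.Ico n0 (n0 + M) := by
        intro n' hn'
        rw [Finset.mem_Ico]
        refine ⟨hn0 ▸ Finset.min'_le _ _ hn', ?_⟩
        by_contra hcon
        push_neg at hcon
        have hmem0 : n0 ∈ T k := hn0 ▸ Finset.min'_mem (T k) hne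
        rw [hT k, Finset.mem_filter, Finset.mem_Icc] at hmem0 hn'
        obtain ⟨⟨hn0a, _⟩, hb0⟩ := hmem0
        obtain ⟨⟨_, _⟩, hb'⟩ := hn'
        have h1n0 : 1 ≤ n0 := le_trans hn₁pos hn0a
        have hsp := auxB Q hQ B M (by rw [haa, hC2] at hM; exact hM) n0 n' h1n0 hcon
        have htri := norm_add_le (Q.eval (n':ℂ) - c₁*lam^k)
          (c₁*lam^k - Q.eval (n0:ℂ))
        rw [sub_add_sub_cancel, norm_sub_rev (c₁*lam^k)] at htri
        linarith
      calc (T k).card ≤ (Finset.Ico n0 (n0 + M)).card :=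
            Finset.card_le_card hsub2
        _ = M := by rw [Nat.card_Ico]; omega
    · rw [Finset.not_nonempty_iff_eq_empty] at hne
      simp [hne]
  have hFcard : F.card ≤ (n₁ - 1) + (Finset.Icc (0:ℤ) kmax).card * M := by
    rw [hF]
    refine le_trans (Finset.card_union_le _ _) ?_
    apply add_le_add
    · rw [Nat.card_Ico]
    · refine le_trans (Finset.card_biUnion_le) ?_
      calc ∑ k ∈ Finset.Icc (0:ℤ) kmax, (T k).card
          ≤ ∑ _k ∈ Finset.Icc (0:ℤ) kmax, M := Finset.sum_le_sum fun k _ => hTcard k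
        _ = (Finset.Icc (0:ℤ) kmax).card * M := by rw [Finset.sum_const, smul_eq_mul]
  -- casting to ℝ
  have hIcc : ((Finset.Icc (0:ℤ) kmax).card : ℝ)
      ≤ Real.log (C₅ * (N:ℝ)^d) / Real.log (‖lam‖) + 1 := by
    have hy : 0 ≤ Real.log (C₅ * (N:ℝ)^d) / Real.log (‖lam‖) := by
      apply div_nonneg _ hloglam.le
      apply Real.log_nonneg
      nlinarith
    rw [Int.card_Icc]
    have hfl : (kmax:ℝ) ≤ Real.log (C₅ * (N:ℝ)^d) / Real.log (‖lam‖) := by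
      rw [hkmax]; exact Int.floor_le _
    rcases le_or_gt 0 (kmax + 1 - 0) with h | h
    · have heq : (((kmax + 1 - 0).toNat : ℤ) : ℝ) = ((kmax + 1 - 0 : ℤ) : ℝ) := by
        rw [Int.toNat_of_nonneg h]
      push_cast at heq ⊢
      rw [heq]
      linarith
    · rw [Int.toNat_of_nonpos h.le]
      push_cast
      linarith
  have hC₅pos : (0:ℝ) < C₅ := lt_of_lt_of_le one_pos hC₅
  have hNd0 : (0:ℝ) < (N:ℝ)^d := lt_of_lt_of_le one_pos hNx
  have hlogsplit : Real.log (C₅ * (N:ℝ)^d) = Real.log C₅ + (d:ℝ) * Real.log N := by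
    rw [Real.log_mul hC₅pos.ne' hNd0.ne', Real.log_pow]
  have hlogN : Real.log 2 ≤ Real.log (N:ℝ) := Real.log_le_log two_pos (by exact_mod_cast hN)
  have hncard : ({n : ℕ | 1 ≤ n ∧ n ≤ N ∧ ∃ k : ℤ,
      ‖Q.eval (n : ℂ) - c₁ * lam ^ k‖ ≤ B}.ncard : ℝ) ≤ (F.card : ℝ) := by
    have h := Set.ncard_le_ncard hsub F.finite_toSet
    rw [Set.ncard_coe_finset] at h
    exact_mod_cast h
  have hcast : ((n₁ - 1 + (Finset.Icc (0:ℤ) kmax).card * M : ℕ) : ℝ)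
      ≤ (n₁:ℝ) + (Real.log C₅ / Real.log (‖lam‖)
          + (d:ℝ) * Real.log N / Real.log (‖lam‖) + 1) * M := by
    have h1 : ((n₁ - 1 : ℕ) : ℝ) ≤ (n₁ : ℝ) := by
      have h' : (n₁ - 1 : ℕ) ≤ n₁ := Nat.sub_le _ _
      exact_mod_cast h'
    have h2 : ((Finset.Icc (0:ℤ) kmax).card : ℝ) * M
        ≤ (Real.log C₅ / Real.log (‖lam‖)
          + (d:ℝ) * Real.log N / Real.log (‖lam‖) + 1) * M := by
      apply mul_le_mul_of_nonneg_right _ (Nat.cast_nonneg M)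
      rw [hlogsplit, add_div] at hIcc
      linarith
    push_cast
    push_cast at h1 h2
    linarith
  obtain ⟨α, hα⟩ : ∃ x : ℝ,
      x = (n₁:ℝ) + (Real.log C₅ / Real.log (‖lam‖) + 1) * M := ⟨_, rfl⟩
  have hα0 : 0 ≤ α := by
    rw [hα]
    have h1 : 0 ≤ (Real.log C₅ / Real.log (‖lam‖) + 1) * M := by
      apply mul_nonneg _ (Nat.cast_nonneg M)
      have := div_nonneg hlogC₅ hloglam.le
      linarith
    have h2 : (0:ℝ) ≤ n₁ := Nat.cast_nonneg _
    linarith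
  have hkey : α ≤ α / Real.log 2 * Real.log N := by
    rw [div_mul_eq_mul_div, le_div_iff₀ hlog2]
    nlinarith [mul_le_mul_of_nonneg_left hlogN hα0]
  calc ({n : ℕ | 1 ≤ n ∧ n ≤ N ∧ ∃ k : ℤ,
      ‖Q.eval (n : ℂ) - c₁ * lam ^ k‖ ≤ B}.ncard : ℝ)
      ≤ (F.card : ℝ) := hncard
    _ ≤ ((n₁ - 1 + (Finset.Icc (0:ℤ) kmax).card * M : ℕ) : ℝ) := by exact_mod_cast hFcard
    _ ≤ (n₁:ℝ) + (Real.log C₅ / Real.log (‖lam‖)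
          + (d:ℝ) * Real.log N / Real.log (‖lam‖) + 1) * M := hcast
    _ = α + ((d:ℝ) / Real.log (‖lam‖)) * M * Real.log N := by rw [hα]; ring
    _ ≤ α / Real.log 2 * Real.log N
        + ((d:ℝ) / Real.log (‖lam‖)) * M * Real.log N := by linarith
    _ = ((n₁:ℝ) + (Real.log C₅ / Real.log (‖lam‖) + 1) * M) / Real.log 2
        * Real.log N + ((d:ℝ) / Real.log (‖lam‖)) * M * Real.log N := by rw [hα]
    _ = (((n₁:ℝ) + (Real.log C₅ / Real.log (‖lam‖) + 1) * M) / Real.log 2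
        + ((d:ℝ) / Real.log (‖lam‖)) * M) * Real.log N := by ring
end

section
/- Define a sequence of positive integers by $b_2 = 2$ and $b_{j+1} = 2^{b_j} + b_j + 1$ for $j \geq 2$, and set $\alpha = \sum_{j=2}^{\infty} (j-1)/2^{b_j}$ and $t_n = \sum_{j=n+1}^{\infty} (j-1)/2^{b_j - b_n}$ for $n \geq 2$. Then for every $n \geq 2$: $0 < t_n - n/2^{b_{n+1} - b_n} < 1/2^{2^{b_{n+1}}}$. -/
private lemma stmt5_div_le (x : ℝ) (p q : ℕ) (hx : 0 ≤ x) (hxp : x ≤ 2 ^ p)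
    (hpq : p ≤ q) : x / 2 ^ q ≤ ((1 : ℝ) / 2) ^ (q - p) := by
  rw [div_le_iff₀ (by positivity)]
  have he : ((1 : ℝ) / 2) ^ (q - p) * 2 ^ q = 2 ^ p := by
    have h2 : (2 : ℝ) ^ q = 2 ^ (q - p) * 2 ^ p := by
      rw [← pow_add]; congr 1; omega
    rw [h2, one_div, inv_pow, inv_mul_cancel_left₀ (pow_ne_zero _ two_ne_zero)]
  rw [he]; exact hxp

private lemma stmt5_aux (b : ℕ → ℕ) (hb2 : b 2 = 2)
    (hbrec : ∀ j, 2 ≤ j → b (j + 1) = 2 ^ (b j) + b j + 1)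
    (n : ℕ) (hn : 2 ≤ n) :
    0 < (∑' j : ℕ, if n + 1 ≤ j then ((j : ℝ) - 1) / 2 ^ (b j - b n) else 0)
          - (n : ℝ) / 2 ^ (b (n + 1) - b n) ∧
    (∑' j : ℕ, if n + 1 ≤ j then ((j : ℝ) - 1) / 2 ^ (b j - b n) else 0)
          - (n : ℝ) / 2 ^ (b (n + 1) - b n) < 1 / 2 ^ (2 ^ (b (n + 1))) := by
  set F : ℕ → ℝ := fun j => if n + 1 ≤ j then ((j : ℝ) - 1) / 2 ^ (b j - b n) else 0 with hF
  -- basic nat facts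
  have hstep : ∀ j, 2 ≤ j → b j + 2 ≤ b (j + 1) := by
    intro j hj
    rw [hbrec j hj]
    have h1 : 1 ≤ 2 ^ (b j) := Nat.one_le_two_pow
    omega
  have hge : ∀ j, 2 ≤ j → j ≤ b j := by
    intro j hj
    induction j, hj using Nat.le_induction with
    | base => omega
    | succ j hj ih => have := hstep j hj; omega
  have h2n : ∀ m, 2 ≤ m → m + 2 ≤ 2 ^ m := by
    intro m hm
    induction m, hm using Nat.le_induction with
    | base => norm_num
    | succ m hm ih =>
      have : 2 ^ (m + 1) = 2 ^ m * 2 := pow_succ 2 m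
      omega
  have h2bn : n + 2 ≤ 2 ^ (b n) := by
    have h1 := h2n n hn
    have h2 : 2 ^ n ≤ 2 ^ (b n) := Nat.pow_le_pow_right (by norm_num) (hge n hn)
    omega
  have hBpos : 1 ≤ 2 ^ (b (n + 1)) := Nat.one_le_two_pow
  -- growth: b (n+k) ≥ b n + n + 2k for k ≥ 1
  have hC : ∀ k, 1 ≤ k → b n + n + 2 * k ≤ b (n + k) := by
    intro k hk
    induction k, hk using Nat.le_induction with
    | base => rw [hbrec n hn]; omega
    | succ k hk ih =>
      have h := hstep (n + k) (by omega)
      rw [show n + (k + 1) = (n + k) + 1 from rfl]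
      omega
  -- main growth: b (n+2+k) ≥ b n + 2^{b (n+1)} + n + 2k + 4
  have hM : ∀ k, b n + 2 ^ (b (n + 1)) + n + 2 * k + 4 ≤ b (n + 2 + k) := by
    intro k
    induction k with
    | zero =>
      rw [show n + 2 + 0 = (n + 1) + 1 from rfl, hbrec (n + 1) (by omega), hbrec n hn]
      omega
    | succ k ih =>
      have h := hstep (n + 2 + k) (by omega)
      rw [show n + 2 + (k + 1) = (n + 2 + k) + 1 from rfl]
      omega
  have hFnonneg : ∀ j, 0 ≤ F j := by
    intro j
    simp only [hF]
    by_cases hj : n + 1 ≤ j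
    · rw [if_pos hj]
      have hj1 : (1 : ℝ) ≤ (j : ℝ) := by exact_mod_cast (by omega : 1 ≤ j)
      apply div_nonneg (by linarith) (by positivity)
    · rw [if_neg hj]
  have hnum : ∀ j : ℕ, ((j : ℝ) - 1) ≤ 2 ^ j := by
    intro j
    have := @Nat.lt_two_pow_self j
    have : (j : ℝ) < 2 ^ j := by exact_mod_cast this
    linarith
  -- summability
  have hsum : Summable F := by
    have hgeos : Summable fun j : ℕ => (2 : ℝ) ^ n * ((1 : ℝ) / 2) ^ j :=
      summable_geometric_two.mul_left _
    refine Summable.of_nonneg_of_le hFnonneg (fun j => ?_) hgeos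
    ·
      by_cases hj : n + 1 ≤ j
      · simp only [hF]; rw [if_pos hj]
        have hjk := hC (j - n) (by omega)
        rw [show n + (j - n) = j by omega] at hjk
        have h0 : (0 : ℝ) ≤ (j : ℝ) - 1 := by
          have : (1 : ℝ) ≤ (j : ℝ) := by exact_mod_cast (by omega : 1 ≤ j)
          linarith
        have h1 : ((j : ℝ) - 1) / 2 ^ (b j - b n) ≤ ((1 : ℝ) / 2) ^ ((b j - b n) - j) :=
          stmt5_div_le _ j _ h0 (hnum j) (by omega)
        have h2 : ((1 : ℝ) / 2) ^ ((b j - b n) - j) ≤ ((1 : ℝ) / 2) ^ (j - n) :=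
          pow_le_pow_of_le_one (by norm_num) (by norm_num) (by omega)
        have h3 : ((1 : ℝ) / 2) ^ (j - n) = 2 ^ n * ((1 : ℝ) / 2) ^ j := by
          rw [pow_sub₀ ((1 : ℝ) / 2) (by norm_num) (by omega : n ≤ j)]
          rw [one_div, inv_pow, inv_pow, inv_inv, mul_comm]
        linarith
      · simp only [hF]; rw [if_neg hj]; positivity
  -- split off the first n+2 terms
  have hsplit := Summable.sum_add_tsum_nat_add (f := F) (n + 2) hsum
  have hrange : ∑ i ∈ Finset.range (n + 2), F i = (n : ℝ) / 2 ^ (b (n + 1) - b n) := by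
    rw [Finset.sum_range_succ]
    have h0 : ∑ i ∈ Finset.range (n + 1), F i = 0 := by
      apply Finset.sum_eq_zero
      intro i hi
      simp only [hF]
      rw [if_neg (by have := Finset.mem_range.mp hi; omega)]
    rw [h0, zero_add]
    simp only [hF]
    rw [if_pos le_rfl]
    push_cast
    ring_nf
  have htsum : Summable fun i => F (i + (n + 2)) := (summable_nat_add_iff (n + 2)).2 hsum
  have hkey : (∑' j : ℕ, F j) - (n : ℝ) / 2 ^ (b (n + 1) - b n) = ∑' i, F (i + (n + 2)) := by
    rw [← hsplit, hrange]; ring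
  rw [hF] at hkey
  constructor
  · rw [hkey]
    have h0 : 0 < F (0 + (n + 2)) := by
      simp only [hF]
      rw [if_pos (by omega)]
      apply div_pos _ (by positivity)
      have : (1 : ℝ) ≤ ((0 + (n + 2) : ℕ) : ℝ) := by exact_mod_cast (by omega : 1 ≤ 0 + (n + 2))
      push_cast
      push_cast at this
      linarith
    calc (0 : ℝ) < F (0 + (n + 2)) := h0
    _ ≤ ∑' i, F (i + (n + 2)) := Summable.le_tsum htsum 0 (fun j _ => hFnonneg _)
  · rw [hkey]
    have hub : ∀ i : ℕ, F (i + (n + 2)) ≤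
        ((1 : ℝ) / 2) ^ (2 ^ (b (n + 1)) + 2) * ((1 : ℝ) / 2) ^ i := by
      intro i
      have hMi := hM i
      rw [show n + 2 + i = i + (n + 2) by omega] at hMi
      simp only [hF]
      rw [if_pos (by omega)]
      have h0 : (0 : ℝ) ≤ ((i + (n + 2) : ℕ) : ℝ) - 1 := by
        have : (1 : ℝ) ≤ ((i + (n + 2) : ℕ) : ℝ) := by exact_mod_cast (by omega : 1 ≤ i + (n + 2))
        linarith
      have h1 := stmt5_div_le (((i + (n + 2) : ℕ) : ℝ) - 1) (i + (n + 2))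
        (b (i + (n + 2)) - b n) h0 (hnum _) (by omega)
      have h2 : ((1 : ℝ) / 2) ^ ((b (i + (n + 2)) - b n) - (i + (n + 2))) ≤
          ((1 : ℝ) / 2) ^ (2 ^ (b (n + 1)) + 2 + i) :=
        pow_le_pow_of_le_one (by norm_num) (by norm_num) (by omega)
      calc (((i + (n + 2) : ℕ) : ℝ) - 1) / 2 ^ (b (i + (n + 2)) - b n)
          ≤ ((1 : ℝ) / 2) ^ ((b (i + (n + 2)) - b n) - (i + (n + 2))) := h1
        _ ≤ ((1 : ℝ) / 2) ^ (2 ^ (b (n + 1)) + 2 + i) := h2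
        _ = ((1 : ℝ) / 2) ^ (2 ^ (b (n + 1)) + 2) * ((1 : ℝ) / 2) ^ i := pow_add _ _ _
    have hgeo : Summable fun i : ℕ =>
        ((1 : ℝ) / 2) ^ (2 ^ (b (n + 1)) + 2) * ((1 : ℝ) / 2) ^ i :=
      summable_geometric_two.mul_left _
    have hle : (∑' i, F (i + (n + 2))) ≤
        ∑' i : ℕ, ((1 : ℝ) / 2) ^ (2 ^ (b (n + 1)) + 2) * ((1 : ℝ) / 2) ^ i :=
      Summable.tsum_le_tsum hub htsum hgeo
    have hval : (∑' i : ℕ, ((1 : ℝ) / 2) ^ (2 ^ (b (n + 1)) + 2) * ((1 : ℝ) / 2) ^ i)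
        = ((1 : ℝ) / 2) ^ (2 ^ (b (n + 1)) + 2) * 2 := by
      rw [tsum_mul_left, tsum_geometric_two]
    have hfin : ((1 : ℝ) / 2) ^ (2 ^ (b (n + 1)) + 2) * 2 < 1 / 2 ^ (2 ^ (b (n + 1))) := by
      have hp : (0 : ℝ) < ((1 : ℝ) / 2) ^ (2 ^ (b (n + 1))) := by positivity
      have he : (1 : ℝ) / 2 ^ (2 ^ (b (n + 1))) = ((1 : ℝ) / 2) ^ (2 ^ (b (n + 1))) := by
        rw [div_pow, one_pow]
      rw [he, pow_add]
      nlinarith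
    calc (∑' i, F (i + (n + 2))) ≤ _ := hle
      _ = ((1 : ℝ) / 2) ^ (2 ^ (b (n + 1)) + 2) * 2 := hval
      _ < 1 / 2 ^ (2 ^ (b (n + 1))) := hfin

/-- Tail estimates for the lacunary series built from b₂ = 2,
b_{j+1} = 2^{b_j} + b_j + 1. -/
theorem stmt5 (b : ℕ → ℕ) (hb2 : b 2 = 2)
    (hbrec : ∀ j, 2 ≤ j → b (j + 1) = 2 ^ (b j) + b j + 1)
    (t : ℕ → ℝ)
    (ht : ∀ n, t n = ∑' j : ℕ, if n + 1 ≤ j then ((j : ℝ) - 1) / 2 ^ (b j - b n) else 0) :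
    ∀ n, 2 ≤ n →
      0 < t n - (n : ℝ) / 2 ^ (b (n + 1) - b n) ∧
      t n - (n : ℝ) / 2 ^ (b (n + 1) - b n) < 1 / 2 ^ (2 ^ (b (n + 1))) := by
  intro n hn
  rw [ht n]
  exact stmt5_aux b hb2 hbrec n hn
end

section
/- Let $\lambda = 2 e^{2\pi i \alpha}$ where $\alpha = \sum_{j=2}^\infty (j-1)/2^{b_j}$ with $b_2 = 2$ and $b_{j+1} = 2^{b_j} + b_j + 1$. Then there is a constant $C > 0$ such that for every sufficiently large integer $n$, $\left| n - \frac{i}{\pi}\left(2^{2^{b_n}} - \lambda^{2^{b_n}}\right) \right| \leq C \cdot \frac{n}{b_{n+1}}$. -/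
set_option maxHeartbeats 1000000

open Complex Finset

private lemma natA : ∀ B : ℕ, 5 ≤ B → 2 * B + 6 ≤ 2 ^ B := by
  intro B hB
  induction B, hB using Nat.le_induction with
  | base => norm_num
  | succ B hB ih =>
    rw [pow_succ]
    omega

private lemma natB : ∀ B : ℕ, 5 ≤ B → 64 * B * 2 ^ B ≤ 2 ^ (2 ^ B) := by
  intro B hB
  have h1 : B ≤ 2 ^ B := (Nat.lt_two_pow_self).le
  calc 64 * B * 2 ^ B ≤ 64 * 2 ^ B * 2 ^ B := by
        exact Nat.mul_le_mul_right _ (Nat.mul_le_mul_left _ h1)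
    _ = 2 ^ (2 * B + 6) := by ring
    _ ≤ 2 ^ (2 ^ B) := Nat.pow_le_pow_right (by norm_num) (natA B hB)

private lemma natC : ∀ B : ℕ, 2 ≤ B → 4 * B ≤ 2 ^ (2 ^ B) := by
  intro B hB
  have h1 : B ≤ 2 ^ B := (Nat.lt_two_pow_self).le
  have h2 : B + 2 ≤ 2 ^ B := by
    clear h1
    induction B, hB using Nat.le_induction with
    | base => norm_num
    | succ B hB ih =>
      rw [pow_succ]
      omega
  calc 4 * B ≤ 4 * 2 ^ B := by omega
    _ = 2 ^ (B + 2) := by ring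
    _ ≤ 2 ^ (2 ^ B) := Nat.pow_le_pow_right (by norm_num) h2

/-- The counterexample: with λ = 2 e^{2πiα} for a suitable transcendental α,
every large n is well approximated by (i/π)(2^{2^{b_n}} - λ^{2^{b_n}}). -/
theorem stmt7 (b : ℕ → ℕ) (hb2 : b 2 = 2)
    (hbrec : ∀ j, 2 ≤ j → b (j + 1) = 2 ^ (b j) + b j + 1)
    (α : ℝ) (hα : α = ∑' j : ℕ, if 2 ≤ j then ((j : ℝ) - 1) / 2 ^ (b j) else 0)
    (lam : ℂ) (hlam : lam = 2 * Complex.exp (2 * Real.pi * Complex.I * α)) :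
    ∃ C : ℝ, 0 < C ∧ ∃ N : ℕ, ∀ n : ℕ, N ≤ n →
      ‖(n : ℂ) - Complex.I / (Real.pi : ℂ) *
          ((2 : ℂ) ^ (2 ^ (b n)) - lam ^ (2 ^ (b n)))‖ ≤
        C * (n : ℝ) / (b (n + 1) : ℝ) := by
  -- basic facts about b
  have hstep : ∀ j, 2 ≤ j → b j + 2 ≤ b (j + 1) := by
    intro j hj
    rw [hbrec j hj]
    have : 1 ≤ 2 ^ (b j) := Nat.one_le_two_pow
    omega
  have hble : ∀ i j, 2 ≤ i → i ≤ j → b i ≤ b j := by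
    intro i j hi hij
    induction j, hij using Nat.le_induction with
    | base => exact le_rfl
    | succ j hj ih => exact le_trans ih (by have := hstep j (le_trans hi hj); omega)
  have hbge : ∀ j, 2 ≤ j → j ≤ b j := by
    intro j hj
    induction j, hj using Nat.le_induction with
    | base => omega
    | succ j hj ih => have := hstep j hj; omega
  -- the series
  set g : ℕ → ℝ := fun j => if 2 ≤ j then ((j : ℝ) - 1) / 2 ^ (b j) else 0 with hgdef
  have hg0 : ∀ j, 0 ≤ g j := by
    intro j
    simp only [hgdef]
    split
    · rename_i hj
      have : (1:ℝ) ≤ (j:ℝ) := by exact_mod_cast Nat.one_le_of_lt hj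
      apply div_nonneg (by linarith) (by positivity)
    · exact le_rfl
  have hgs : Summable g := by
    have hbnd : Summable (fun j : ℕ => (j : ℝ) * (1/2 : ℝ) ^ j) := by
      have := summable_pow_mul_geometric_of_norm_lt_one (R := ℝ) 1
        (r := (1/2 : ℝ)) (by rw [Real.norm_of_nonneg] <;> norm_num)
      simpa using this
    have hle : ∀ j, g j ≤ (j : ℝ) * (1/2 : ℝ) ^ j := by
      intro j
      simp only [hgdef]
      split
      · rename_i hj
        have h1 : (2 : ℝ) ^ j ≤ 2 ^ (b j) := by
          exact pow_le_pow_right₀ (by norm_num) (hbge j hj)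
        have h2 : ((j : ℝ) - 1) ≤ (j:ℝ) := by linarith
        calc ((j:ℝ) - 1) / 2 ^ (b j) ≤ (j:ℝ) / 2 ^ j :=
              div_le_div₀ (by positivity) h2 (by positivity) h1
          _ = (j:ℝ) * (1/2)^j := by rw [div_pow, one_pow, div_eq_mul_inv, div_eq_mul_inv, one_mul]
      · positivity
    exact Summable.of_nonneg_of_le hg0 hle hbnd
  -- tail bound
  have htail : ∀ n, 2 ≤ n → (∑' m, g (m + (n+1))) ≤ 2 * n / 2 ^ (b (n+1)) := by
    intro n hn
    have hbshift : ∀ m, b (n+1) + 2*m ≤ b (m + (n+1)) := by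
      intro m
      induction m with
      | zero => simp
      | succ m ih =>
        have h := hstep (m + (n+1)) (by omega)
        have he : m + 1 + (n+1) = (m + (n+1)) + 1 := by omega
        rw [he]
        omega
    have hpt : ∀ m, g (m + (n+1)) ≤ ((n:ℝ) / 2 ^ (b (n+1))) * (1/2)^m := by
      intro m
      have hj : 2 ≤ m + (n+1) := by omega
      have hnum : ((m + (n+1) : ℕ) : ℝ) - 1 = (n:ℝ) + m := by push_cast; ring
      have hnm : ((n:ℝ) + m) ≤ (n:ℝ) * 2^m := by
        have h1 : n + m ≤ n * 2^m := by
          have h2 : m < 2 ^ m := Nat.lt_two_pow_self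
          have h3 : m ≤ n * m := Nat.le_mul_of_pos_left m (by omega)
          calc n + m ≤ n + n * m := by omega
            _ = n * (1 + m) := by ring
            _ ≤ n * 2^m := Nat.mul_le_mul_left _ (by omega)
        exact_mod_cast h1
      have hden : (2:ℝ) ^ (b (n+1)) * 4^m ≤ 2 ^ (b (m + (n+1))) := by
        calc (2:ℝ) ^ (b (n+1)) * 4^m = 2 ^ (b (n+1) + 2*m) := by
              rw [pow_add, pow_mul]; norm_num
          _ ≤ 2 ^ (b (m + (n+1))) := pow_le_pow_right₀ (by norm_num) (hbshift m)
      simp only [hgdef, if_pos hj, hnum]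
      calc ((n:ℝ) + m) / 2 ^ (b (m + (n+1))) ≤ ((n:ℝ) * 2^m) / (2 ^ (b (n+1)) * 4^m) :=
            div_le_div₀ (by positivity) hnm (by positivity) hden
        _ = ((n:ℝ) / 2 ^ (b (n+1))) * (1/2)^m := by
            rw [div_pow, one_pow,
              show (4:ℝ)^m = (2^m)*(2^m) by rw [show (4:ℝ) = 2*2 by norm_num, mul_pow]]
            field_simp
    have hsum1 : Summable (fun m => g (m + (n+1))) := (summable_nat_add_iff (n+1)).mpr hgs
    have hsum2 : Summable (fun m : ℕ => ((n:ℝ) / 2 ^ (b (n+1))) * (1/2)^m) :=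
      (summable_geometric_of_lt_one (by norm_num) (by norm_num)).mul_left _
    calc (∑' m, g (m + (n+1))) ≤ ∑' m : ℕ, ((n:ℝ) / 2 ^ (b (n+1))) * (1/2)^m :=
          Summable.tsum_le_tsum hpt hsum1 hsum2
      _ = ((n:ℝ) / 2 ^ (b (n+1))) * 2 := by rw [tsum_mul_left, tsum_geometric_two]
      _ = 2 * n / 2 ^ (b (n+1)) := by ring
  have htail0 : ∀ n, 0 ≤ (∑' m, g (m + (n+1))) :=
    fun n => tsum_nonneg (fun m => hg0 _)
  refine ⟨1, one_pos, 3, fun n hn3 => ?_⟩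
  have hn2 : 2 ≤ n := by omega
  set k := 2 ^ (b n) with hk
  set T : ℝ := ∑' m, g (m + (n+1)) with hTdef
  set T' : ℝ := ∑' m, g (m + (n+2)) with hT'def
  set F : ℝ := T * 2 ^ (b n) with hFdef
  have hbn1 : b (n+1) = k + b n + 1 := by rw [hbrec n hn2]
  have hbn2 : b (n+2) = 2 ^ (b (n+1)) + b (n+1) + 1 := hbrec (n+1) (by omega)
  -- b n ≥ 5
  have hb3 : b 3 = 7 := by have := hbrec 2 le_rfl; rw [hb2] at this; norm_num at this; omega
  have hbn5 : 5 ≤ b n := by have := hble 3 n (by norm_num) hn3; omega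
  -- integer part
  set M : ℕ := ∑ i ∈ range (n+1), (if 2 ≤ i then (i-1) * 2 ^ (b n - b i) else 0) with hMdef
  have hM : (M:ℝ) = (∑ i ∈ range (n+1), g i) * 2 ^ (b n) := by
    rw [hMdef, Finset.sum_mul, Nat.cast_sum]
    apply Finset.sum_congr rfl
    intro i hi
    rw [Finset.mem_range] at hi
    by_cases h2i : 2 ≤ i
    · simp only [hgdef, if_pos h2i]
      have hbi : b i ≤ b n := hble i n h2i (by omega)
      have : (2:ℝ) ^ (b n) = 2 ^ (b n - b i) * 2 ^ (b i) := by
        rw [← pow_add, Nat.sub_add_cancel hbi]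
      rw [this]
      have h1i : (1:ℕ) ≤ i := by omega
      push_cast [Nat.cast_sub h1i]
      field_simp
    · simp [hgdef, h2i]
  -- splitting sums
  have hsum_split : α = (∑ i ∈ range (n+1), g i) + T := by
    rw [hα, hTdef]
    exact (Summable.sum_add_tsum_nat_add (n+1) hgs).symm
  have hT_split : T = (n:ℝ) / 2 ^ (b (n+1)) + T' := by
    rw [hTdef, Summable.tsum_eq_zero_add ((summable_nat_add_iff (n+1)).mpr hgs)]
    congr 1
    · have h0 : (0:ℕ) + (n+1) = n+1 := by omega
      rw [h0]
      simp only [hgdef, if_pos (show 2 ≤ n+1 by omega)]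
      push_cast
      try ring
    · rw [hT'def]
      apply tsum_congr
      intro m
      congr 1
      omega
  -- key relation
  have hFrel : (2:ℝ) ^ (b (n+1)) * T' = 2 ^ (k+1) * F - n := by
    have hpow : (2:ℝ) ^ (b (n+1)) = 2 ^ (k+1) * 2 ^ (b n) := by
      rw [← pow_add, hbn1]; congr 1; omega
    have hpow0 : (0:ℝ) < 2 ^ (b (n+1)) := by positivity
    rw [hFdef, hT_split]
    rw [hpow] at hpow0 ⊢
    field_simp
    ring
  have hT'le : T' ≤ 2 * ((n:ℝ)+1) / 2 ^ (b (n+2)) := by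
    have h := htail (n+1) (by omega)
    push_cast at h
    exact h
  have hT'0 : 0 ≤ T' := tsum_nonneg (fun m => hg0 _)
  have hF0 : 0 ≤ F := by
    rw [hFdef]
    have := htail0 n
    positivity
  have hFle : F ≤ (n:ℝ) / 2 ^ k := by
    have hTle : T ≤ 2 * n / 2 ^ (b (n+1)) := htail n hn2
    have hpow : (2:ℝ) ^ (b (n+1)) = 2 ^ (k+1) * 2 ^ (b n) := by
      rw [← pow_add, hbn1]; congr 1; omega
    rw [hFdef]
    calc T * 2 ^ (b n) ≤ (2 * n / 2 ^ (b (n+1))) * 2 ^ (b n) := by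
          apply mul_le_mul_of_nonneg_right hTle (by positivity)
      _ = (n:ℝ) / 2 ^ k := by rw [hpow]; field_simp; ring
  -- nat inequality: 32 * n * b (n+1) ≤ 2 ^ k
  have h32 : 32 * n * b (n+1) ≤ 2 ^ k := by
    have h1 : b (n+1) ≤ 2 * k := by
      have : b n < 2 ^ (b n) := Nat.lt_two_pow_self
      omega
    have h2 : n ≤ b n := hbge n hn2
    calc 32 * n * b (n+1) ≤ 32 * (b n) * (2 * k) :=
          Nat.mul_le_mul (Nat.mul_le_mul_left _ h2) h1
      _ = 64 * (b n) * 2 ^ (b n) := by rw [hk]; ring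
      _ ≤ 2 ^ (2 ^ (b n)) := natB (b n) hbn5
      _ = 2 ^ k := by rw [hk]
  have hπpos := Real.pi_pos
  have hn0 : (0:ℝ) < n := by positivity
  have hπC : ((Real.pi : ℝ) : ℂ) ≠ 0 := by exact_mod_cast Real.pi_ne_zero
  have hkR : (k:ℝ) = 2 ^ (b n) := by rw [hk]; push_cast; rfl
  -- α * k = M + F
  have hαk : (k:ℝ) * α = (M:ℝ) + F := by
    rw [hsum_split, hFdef, hkR, hM]
    ring
  -- the exponential
  have hexpE : lam ^ k = 2 ^ k * Complex.exp (2 * (Real.pi:ℂ) * I * ((F:ℝ):ℂ)) := by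
    rw [hlam, mul_pow, ← Complex.exp_nat_mul]
    congr 1
    have h1 : (k : ℂ) * (2 * (Real.pi:ℂ) * I * ((α:ℝ):ℂ)) =
        (M:ℂ) * (2 * (Real.pi:ℂ) * I) + 2 * (Real.pi:ℂ) * I * ((F:ℝ):ℂ) := by
      calc (k:ℂ) * (2 * (Real.pi:ℂ) * I * ((α:ℝ):ℂ))
          = 2 * (Real.pi:ℂ) * I * ((((k:ℝ) * α : ℝ)):ℂ) := by push_cast; ring
        _ = 2 * (Real.pi:ℂ) * I * ((((M:ℝ) + F : ℝ)):ℂ) := by rw [hαk]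
        _ = (M:ℂ) * (2 * (Real.pi:ℂ) * I) + 2 * (Real.pi:ℂ) * I * ((F:ℝ):ℂ) := by
            push_cast; ring
    rw [h1, Complex.exp_add, Complex.exp_nat_mul_two_pi_mul_I, one_mul]
  set z : ℂ := 2 * (Real.pi:ℂ) * I * ((F:ℝ):ℂ) with hzdef
  set E : ℂ := Complex.exp z - 1 - z with hEdef
  have habsz : ‖z‖ = 2 * Real.pi * F := by
    rw [hzdef]
    rw [norm_mul, norm_mul, norm_mul, Complex.norm_two, Complex.norm_I, Complex.norm_real,
      Complex.norm_real, Real.norm_of_nonneg Real.pi_pos.le, Real.norm_of_nonneg hF0, mul_one]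
  have h8 : 8 * (n:ℝ) ≤ 2^k := by
    have h1 : 8 * n ≤ 2^k := by
      have hb1 : 1 ≤ b (n+1) := by
        have := hble 2 (n+1) le_rfl (by omega); omega
      calc 8 * n ≤ 32 * n * b (n+1) := by nlinarith
        _ ≤ 2^k := h32
    exact_mod_cast h1
  have h2kpos : (0:ℝ) < 2^k := by positivity
  have hz1 : ‖z‖ ≤ 1 := by
    rw [habsz]
    have hπ4 := Real.pi_le_four
    calc 2 * Real.pi * F ≤ 2 * 4 * F := by nlinarith
      _ ≤ 8 * ((n:ℝ)/2^k) := by nlinarith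
      _ = (8*(n:ℝ))/2^k := by ring
      _ ≤ 1 := by rw [div_le_one h2kpos]; linarith
  have hEle : ‖E‖ ≤ (2 * Real.pi * F)^2 := by
    rw [← habsz]
    exact Complex.norm_exp_sub_one_sub_id_le hz1
  -- the cast of the key relation
  have hcast : ((((2:ℝ) ^ (b (n+1)) * T' : ℝ)):ℂ) = 2^(k+1) * ((F:ℝ):ℂ) - (n:ℂ) := by
    have := congrArg (fun r : ℝ => (r:ℂ)) hFrel
    push_cast at this ⊢
    exact this
  have hIpi : I / ((Real.pi:ℝ):ℂ) * ((2:ℂ)^k * z) = -((2:ℂ)^(k+1) * ((F:ℝ):ℂ)) := by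
    rw [hzdef]
    field_simp
    simp only [Complex.I_sq]
    ring
  have hlamk : lam ^ k = 2^k * (1 + z + E) := by
    rw [hexpE]
    congr 1
    rw [hEdef]
    ring
  have hiden : (n:ℂ) - I / ((Real.pi:ℝ):ℂ) * ((2:ℂ)^k - lam^k) =
      -((((2:ℝ) ^ (b (n+1)) * T' : ℝ)):ℂ) + I / ((Real.pi:ℝ):ℂ) * (2:ℂ)^k * E := by
    rw [hlamk, hcast]
    linear_combination hIpi
  -- bounds on the two pieces
  have hB2 : 2 ≤ b (n+1) := by have := hble 2 (n+1) le_rfl (by omega); omega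
  have hBpos : (0:ℝ) < (b (n+1):ℝ) := by exact_mod_cast (by omega : 0 < b (n+1))
  have piece1 : (2:ℝ)^(b (n+1)) * T' ≤ (n:ℝ)/(2*(b (n+1))) := by
    have step1 : (2:ℝ)^(b (n+1)) * T' ≤ ((n:ℝ)+1) / 2^(2^(b (n+1))) := by
      calc (2:ℝ)^(b (n+1)) * T' ≤ 2^(b (n+1)) * (2*((n:ℝ)+1)/2^(b (n+2))) :=
            mul_le_mul_of_nonneg_left hT'le (by positivity)
        _ = ((n:ℝ)+1)/2^(2^(b (n+1))) := by
            rw [hbn2, pow_add, pow_add, pow_one]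
            field_simp
    refine step1.trans ?_
    rw [div_le_div_iff₀ (by positivity) (by positivity)]
    have hnat : (n+1) * (2*(b (n+1))) ≤ n * 2^(2^(b (n+1))) := by
      have h4 := natC (b (n+1)) hB2
      calc (n+1)*(2*(b (n+1))) ≤ (2*n)*(2*(b (n+1))) :=
            Nat.mul_le_mul_right _ (by omega)
        _ = n * (4*(b (n+1))) := by ring
        _ ≤ n * 2^(2^(b (n+1))) := Nat.mul_le_mul_left _ h4
    exact_mod_cast hnat
  have piece2 : 4*Real.pi*2^k*F^2 ≤ (n:ℝ)/(2*(b (n+1))) := by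
    have hF2 : F^2 ≤ ((n:ℝ)/2^k)^2 := by
      apply pow_le_pow_left₀ hF0 hFle
    have hπ4 := Real.pi_le_four
    have step1 : 4*Real.pi*2^k*F^2 ≤ 16*(n:ℝ)^2/2^k := by
      calc 4*Real.pi*2^k*F^2 ≤ 4*4*2^k*((n:ℝ)/2^k)^2 :=
            mul_le_mul (by nlinarith) hF2 (by positivity) (by positivity)
        _ = 16*(n:ℝ)^2/2^k := by field_simp; ring
    refine step1.trans ?_
    rw [div_le_div_iff₀ (by positivity) (by positivity)]
    have hnat : 16*n^2*(2*(b (n+1))) ≤ n * 2^k := by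
      calc 16*n^2*(2*(b (n+1))) = n*(32*n*(b (n+1))) := by ring
        _ ≤ n * 2^k := Nat.mul_le_mul_left _ h32
    exact_mod_cast hnat
  -- put it together
  calc ‖(n:ℂ) - I / ((Real.pi:ℝ):ℂ) * ((2:ℂ)^k - lam^k)‖
      = ‖-((((2:ℝ) ^ (b (n+1)) * T' : ℝ)):ℂ) +
          I / ((Real.pi:ℝ):ℂ) * (2:ℂ)^k * E‖ := by rw [hiden]
    _ ≤ ‖-((((2:ℝ) ^ (b (n+1)) * T' : ℝ)):ℂ)‖ +
          ‖I / ((Real.pi:ℝ):ℂ) * (2:ℂ)^k * E‖ := norm_add_le _ _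
    _ ≤ (2:ℝ)^(b (n+1)) * T' + 4*Real.pi*2^k*F^2 := by
        have e1 : ‖-((((2:ℝ) ^ (b (n+1)) * T' : ℝ)):ℂ)‖ =
            (2:ℝ)^(b (n+1)) * T' := by
          rw [norm_neg, Complex.norm_real,
            Real.norm_of_nonneg (by positivity)]
        have e2 : ‖I / ((Real.pi:ℝ):ℂ) * (2:ℂ)^k * E‖ =
            1/Real.pi * 2^k * ‖E‖ := by
          rw [norm_mul, norm_mul, norm_div, Complex.norm_I, Complex.norm_real,
            Real.norm_of_nonneg Real.pi_pos.le, norm_pow, Complex.norm_two]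
        rw [e1, e2]
        have e3 : 1/Real.pi * (2:ℝ)^k * ‖E‖ ≤
            1/Real.pi * 2^k * ((2*Real.pi*F)^2) :=
          mul_le_mul_of_nonneg_left hEle (by positivity)
        have e4 : 1/Real.pi * (2:ℝ)^k * ((2*Real.pi*F)^2) = 4*Real.pi*2^k*F^2 := by
          field_simp; ring
        linarith
    _ ≤ (n:ℝ)/(2*(b (n+1))) + (n:ℝ)/(2*(b (n+1))) := add_le_add piece1 piece2
    _ = 1 * (n:ℝ) / (b (n+1)) := by field_simp; ring
end

section
/- Let $\kappa \geq 1$, $\alpha \in (1/2, 1)$, and let $\mathcal{L}$ be a set of primes contained in $[z, C z]$ for some constant $C \geq 1$, such that every $\ell \in \mathcal{L}$ satisfies $P(\ell - 1) \geq z^\alpha$, where $P(k)$ is the largest prime factor of $k$. Then $\sum_{\ell, r \in \mathcal{L},\, P(\ell-1) \neq P(r-1)} \gcd(\ell-1, r-1)^\kappa \leq z^{\kappa + \alpha - \alpha\kappa + 1 + o(1)}$ as $z \to \infty$. -/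
open Finset Real Filter Asymptotics

/-- Largest prime factor of a natural number. -/
noncomputable def maxPrimeFac (k : ℕ) : ℕ := k.primeFactors.sup id

lemma maxPrimeFac_mem {k : ℕ} (h : maxPrimeFac k ≠ 0) : maxPrimeFac k ∈ k.primeFactors := by
  rcases Finset.eq_empty_or_nonempty k.primeFactors with he | hne
  · exfalso; apply h; simp [maxPrimeFac, he]
  · obtain ⟨b, hb, hbe⟩ := Finset.exists_mem_eq_sup k.primeFactors hne id
    rw [maxPrimeFac, hbe]; exact hb

lemma le_maxPrimeFac {p k : ℕ} (hp : p.Prime) (hk : k ≠ 0) (hd : p ∣ k) : p ≤ maxPrimeFac k :=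
  Finset.le_sup (f := id) (Nat.mem_primeFactors.mpr ⟨hp, hd, hk⟩)

lemma gcd_mul_maxPrimeFac_le (a b : ℕ) (ha : a ≠ 0) (hb : b ≠ 0)
    (hne : maxPrimeFac a ≠ maxPrimeFac b) :
    Nat.gcd a b * maxPrimeFac a ≤ a ∨ Nat.gcd a b * maxPrimeFac b ≤ b := by
  have hg : 0 < Nat.gcd a b := Nat.gcd_pos_of_pos_left b (Nat.pos_of_ne_zero ha)
  by_cases hpa : maxPrimeFac a ∣ Nat.gcd a b
  · by_cases hpb : maxPrimeFac b ∣ Nat.gcd a b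
    · exfalso
      have ha0 : maxPrimeFac a ≠ 0 := by
        intro h0; rw [h0] at hpa
        have := Nat.eq_zero_of_zero_dvd hpa; omega
      have hb0 : maxPrimeFac b ≠ 0 := by
        intro h0; rw [h0] at hpb
        exact absurd (Nat.eq_zero_of_zero_dvd hpb) (by omega)
      have hma := maxPrimeFac_mem ha0
      have hmb := maxPrimeFac_mem hb0
      have h1 : maxPrimeFac a ≤ maxPrimeFac b :=
        le_maxPrimeFac (Nat.prime_of_mem_primeFactors hma) hb
          (hpa.trans (Nat.gcd_dvd_right a b))
      have h2 : maxPrimeFac b ≤ maxPrimeFac a :=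
        le_maxPrimeFac (Nat.prime_of_mem_primeFactors hmb) ha
          (hpb.trans (Nat.gcd_dvd_left a b))
      exact hne (le_antisymm h1 h2)
    · right
      by_cases hb0 : maxPrimeFac b = 0
      · simp [hb0]
      · have hmem := maxPrimeFac_mem hb0
        have hpr : (maxPrimeFac b).Prime := Nat.prime_of_mem_primeFactors hmem
        have hdvd : maxPrimeFac b ∣ b := Nat.dvd_of_mem_primeFactors hmem
        have hcop : Nat.Coprime (Nat.gcd a b) (maxPrimeFac b) :=
          ((Nat.Prime.coprime_iff_not_dvd hpr).mpr hpb).symm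
        exact Nat.le_of_dvd (Nat.pos_of_ne_zero hb)
          (hcop.mul_dvd_of_dvd_of_dvd (Nat.gcd_dvd_right a b) hdvd)
  · left
    by_cases ha0 : maxPrimeFac a = 0
    · simp [ha0]
    · have hmem := maxPrimeFac_mem ha0
      have hpr : (maxPrimeFac a).Prime := Nat.prime_of_mem_primeFactors hmem
      have hdvd : maxPrimeFac a ∣ a := Nat.dvd_of_mem_primeFactors hmem
      have hcop : Nat.Coprime (Nat.gcd a b) (maxPrimeFac a) :=
        ((Nat.Prime.coprime_iff_not_dvd hpr).mpr hpa).symm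
      exact Nat.le_of_dvd (Nat.pos_of_ne_zero ha)
        (hcop.mul_dvd_of_dvd_of_dvd (Nat.gcd_dvd_left a b) hdvd)

lemma sum_Icc_inv_eq (N : ℕ) : ∑ h ∈ Finset.Icc 1 N, ((h:ℝ))⁻¹ = (harmonic N : ℝ) := by
  induction N with
  | zero => simp [harmonic]
  | succ n ih =>
    rw [Finset.sum_Icc_succ_top (by omega : 1 ≤ n+1), ih, harmonic_succ]
    push_cast
    ring

lemma ev_bound (ε A B : ℝ) (hε : 0 < ε) :
    ∀ᶠ z : ℝ in atTop, A + B * Real.log z ≤ z ^ ε := by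
  have h1 : (fun z : ℝ => A + B * Real.log z) =o[atTop] fun z : ℝ => z ^ ε := by
    have hc : (fun _ : ℝ => A) =o[atTop] fun z : ℝ => z ^ ε :=
      isLittleO_const_left.mpr (Or.inr (by
        exact tendsto_norm_atTop_atTop.comp (tendsto_rpow_atTop hε)))
    have hl : (fun z : ℝ => B * Real.log z) =o[atTop] fun z : ℝ => z ^ ε :=
      (isLittleO_log_rpow_atTop hε).const_mul_left B
    exact hc.add hl
  filter_upwards [h1.bound one_pos, eventually_ge_atTop (0:ℝ)] with z hz hz0
  calc A + B * Real.log z ≤ ‖A + B * Real.log z‖ := le_norm_self _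
    _ ≤ 1 * ‖z ^ ε‖ := hz
    _ = z ^ ε := by rw [one_mul, Real.norm_eq_abs, abs_of_nonneg (Real.rpow_nonneg hz0 ε)]

/-- Bound for the sum of κ-th powers of gcd(ℓ-1, r-1) over pairs of primes in
[z, Cz] whose shifted values have distinct (large) greatest prime factors. -/
theorem stmt10 (κ α : ℝ) (hκ : 1 ≤ κ) (hα1 : 1 / 2 < α) (hα2 : α < 1)
    (C : ℝ) (hC : 1 ≤ C) :
    ∀ ε : ℝ, 0 < ε → ∃ z₀ : ℝ, ∀ z : ℝ, z₀ ≤ z → ∀ ℒ : Finset ℕ,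
      (∀ ℓ ∈ ℒ, ℓ.Prime ∧ z ≤ (ℓ : ℝ) ∧ (ℓ : ℝ) ≤ C * z ∧
        z ^ α ≤ (maxPrimeFac (ℓ - 1) : ℝ)) →
      (∑ ℓ ∈ ℒ, ∑ r ∈ ℒ,
        if maxPrimeFac (ℓ - 1) ≠ maxPrimeFac (r - 1)
          then (Nat.gcd (ℓ - 1) (r - 1) : ℝ) ^ κ else 0)
        ≤ z ^ (κ + α - α * κ + 1 + ε) := by
  intro ε hε
  have hα0 : 0 < 1 - α := by linarith
  have hC0 : (0:ℝ) < C := by linarith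
  have hev : ∀ᶠ z : ℝ in atTop,
      (C ^ (κ+1) * (1 + Real.log C) + (C ^ (κ+1) * (1-α)) * Real.log z ≤ z ^ ε ∧ 2 ≤ z) := by
    filter_upwards [ev_bound ε (C ^ (κ+1) * (1 + Real.log C)) (C ^ (κ+1) * (1-α)) hε,
      eventually_ge_atTop (2:ℝ)] with z h1 h2
    exact ⟨h1, h2⟩
  obtain ⟨z₀, hz₀⟩ := eventually_atTop.mp hev
  refine ⟨z₀, fun z hz ℒ hℒ => ?_⟩
  obtain ⟨hB, hz2⟩ := hz₀ z hz
  have hz0 : (0:ℝ) < z := by linarith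
  have hz1 : (1:ℝ) ≤ z := by linarith
  set H : ℝ := C * z ^ (1-α) with hHdef
  set N : ℕ := ⌊H⌋₊ with hNdef
  have hzpow1 : (1:ℝ) ≤ z ^ (1-α) := Real.one_le_rpow hz1 (le_of_lt hα0)
  have hH1 : 1 ≤ H := by nlinarith
  have hH0 : 0 ≤ H := by linarith
  -- basic facts about elements of ℒ
  have hfacts : ∀ ℓ ∈ ℒ, ℓ - 1 ≠ 0 ∧ ((ℓ-1 : ℕ):ℝ) ≤ C * z ∧
      z ^ α ≤ (maxPrimeFac (ℓ-1) : ℝ) ∧ 2 ≤ ℓ := by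
    intro ℓ hℓ
    obtain ⟨hp, hge, hle, hP⟩ := hℒ ℓ hℓ
    have h2 : 2 ≤ ℓ := hp.two_le
    refine ⟨by omega, ?_, hP, h2⟩
    calc ((ℓ-1 : ℕ):ℝ) ≤ (ℓ:ℝ) := by exact_mod_cast Nat.cast_le.mpr (Nat.sub_le ℓ 1)
      _ ≤ C * z := hle
  have hzα : (0:ℝ) < z ^ α := Real.rpow_pos_of_pos hz0 α
  -- the gcd of any relevant pair lies in Icc 1 N
  have hgcdIcc : ∀ ℓ ∈ ℒ, ∀ r ∈ ℒ, maxPrimeFac (ℓ-1) ≠ maxPrimeFac (r-1) →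
      Nat.gcd (ℓ-1) (r-1) ∈ Finset.Icc 1 N := by
    intro ℓ hℓ r hr hne
    obtain ⟨hℓ0, hℓle, hℓP, hℓ2⟩ := hfacts ℓ hℓ
    obtain ⟨hr0, hrle, hrP, hr2⟩ := hfacts r hr
    have hg1 : 1 ≤ Nat.gcd (ℓ-1) (r-1) :=
      Nat.gcd_pos_of_pos_left _ (Nat.pos_of_ne_zero hℓ0)
    rw [Finset.mem_Icc]
    refine ⟨hg1, Nat.le_floor ?_⟩
    have main : ((Nat.gcd (ℓ-1) (r-1) : ℕ):ℝ) * z ^ α ≤ C * z := by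
      rcases gcd_mul_maxPrimeFac_le (ℓ-1) (r-1) hℓ0 hr0 hne with h | h
      · have hcast : ((Nat.gcd (ℓ-1) (r-1) : ℕ):ℝ) * (maxPrimeFac (ℓ-1) : ℝ)
            ≤ ((ℓ-1 : ℕ):ℝ) := by exact_mod_cast h
        calc ((Nat.gcd (ℓ-1) (r-1) : ℕ):ℝ) * z ^ α
            ≤ ((Nat.gcd (ℓ-1) (r-1) : ℕ):ℝ) * (maxPrimeFac (ℓ-1) : ℝ) :=
              mul_le_mul_of_nonneg_left hℓP (Nat.cast_nonneg _)
          _ ≤ ((ℓ-1 : ℕ):ℝ) := hcast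
          _ ≤ C * z := hℓle
      · have hcast : ((Nat.gcd (ℓ-1) (r-1) : ℕ):ℝ) * (maxPrimeFac (r-1) : ℝ)
            ≤ ((r-1 : ℕ):ℝ) := by exact_mod_cast h
        calc ((Nat.gcd (ℓ-1) (r-1) : ℕ):ℝ) * z ^ α
            ≤ ((Nat.gcd (ℓ-1) (r-1) : ℕ):ℝ) * (maxPrimeFac (r-1) : ℝ) :=
              mul_le_mul_of_nonneg_left hrP (Nat.cast_nonneg _)
          _ ≤ ((r-1 : ℕ):ℝ) := hcast
          _ ≤ C * z := hrle
    have hdiv : ((Nat.gcd (ℓ-1) (r-1) : ℕ):ℝ) ≤ C * z / z ^ α :=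
      (le_div_iff₀ hzα).mpr main
    have hid : C * z / z ^ α = H := by
      rw [div_eq_iff (ne_of_gt hzα), hHdef, mul_assoc, ← Real.rpow_add hz0]
      norm_num
    rwa [hid] at hdiv
  -- counting bound
  have hcnt : ∀ h : ℕ, 1 ≤ h →
      ((ℒ.filter (fun ℓ => h ∣ ℓ - 1)).card : ℝ) * h ≤ C * z := by
    intro h h1
    have hcard : (ℒ.filter (fun ℓ => h ∣ ℓ - 1)).card ≤ ⌊C*z⌋₊ / h := by
      have := Finset.card_le_card_of_injOn (fun ℓ => (ℓ-1)/h)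
        (s := ℒ.filter (fun ℓ => h ∣ ℓ - 1)) (t := Finset.Icc 1 (⌊C*z⌋₊/h))
        (fun ℓ hℓf => by
          rw [Finset.mem_coe, Finset.mem_filter] at hℓf
          obtain ⟨hℓ, hd⟩ := hℓf
          obtain ⟨hℓ0, hℓle, _, hℓ2⟩ := hfacts ℓ hℓ
          rw [Finset.mem_coe, Finset.mem_Icc]
          constructor
          · exact (Nat.one_le_div_iff (by omega)).mpr
              (Nat.le_of_dvd (Nat.pos_of_ne_zero hℓ0) hd)
          · exact Nat.div_le_div_right (Nat.le_floor hℓle))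
        (fun ℓ1 h1f ℓ2 h2f heq => by
          rw [Finset.mem_coe, Finset.mem_filter] at h1f h2f
          obtain ⟨hm1, hd1⟩ := h1f; obtain ⟨hm2, hd2⟩ := h2f
          have e1 : h * ((ℓ1-1)/h) = ℓ1 - 1 := Nat.mul_div_cancel' hd1
          have e2 : h * ((ℓ2-1)/h) = ℓ2 - 1 := Nat.mul_div_cancel' hd2
          have h21 := (hfacts ℓ1 hm1).2.2.2
          have h22 := (hfacts ℓ2 hm2).2.2.2
          have heq' : (ℓ1-1)/h = (ℓ2-1)/h := heq
          rw [heq'] at e1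
          omega)
      simpa [Nat.card_Icc] using this
    calc ((ℒ.filter (fun ℓ => h ∣ ℓ - 1)).card : ℝ) * h
        ≤ ((⌊C*z⌋₊/h : ℕ):ℝ) * h := by
          apply mul_le_mul_of_nonneg_right _ (Nat.cast_nonneg h)
          exact_mod_cast hcard
      _ = (((⌊C*z⌋₊/h)*h : ℕ):ℝ) := by push_cast; ring
      _ ≤ (⌊C*z⌋₊:ℝ) := by exact_mod_cast Nat.div_mul_le_self _ _
      _ ≤ C*z := Nat.floor_le (by positivity)
  -- step A: pointwise comparison with divisor-indexed sum
  have stepA : (∑ ℓ ∈ ℒ, ∑ r ∈ ℒ,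
        if maxPrimeFac (ℓ - 1) ≠ maxPrimeFac (r - 1)
          then (Nat.gcd (ℓ - 1) (r - 1) : ℝ) ^ κ else 0)
      ≤ ∑ h ∈ Finset.Icc 1 N, ∑ ℓ ∈ ℒ, ∑ r ∈ ℒ,
          (if h ∣ ℓ-1 ∧ h ∣ r-1 then (h:ℝ)^κ else 0) := by
    have swap : ∑ h ∈ Finset.Icc 1 N, ∑ ℓ ∈ ℒ, ∑ r ∈ ℒ,
          (if h ∣ ℓ-1 ∧ h ∣ r-1 then (h:ℝ)^κ else 0)
        = ∑ ℓ ∈ ℒ, ∑ r ∈ ℒ, ∑ h ∈ Finset.Icc 1 N,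
          (if h ∣ ℓ-1 ∧ h ∣ r-1 then (h:ℝ)^κ else 0) := by
      rw [Finset.sum_comm]
      exact Finset.sum_congr rfl (fun ℓ _ => Finset.sum_comm)
    rw [swap]
    apply Finset.sum_le_sum; intro ℓ hℓ
    apply Finset.sum_le_sum; intro r hr
    by_cases hne : maxPrimeFac (ℓ-1) ≠ maxPrimeFac (r-1)
    · rw [if_pos hne]
      have hg := hgcdIcc ℓ hℓ r hr hne
      have hsingle := Finset.single_le_sum
        (f := fun h => if h ∣ ℓ-1 ∧ h ∣ r-1 then (h:ℝ)^κ else 0)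
        (fun i _ => by
          show (0:ℝ) ≤ if i ∣ ℓ-1 ∧ i ∣ r-1 then (i:ℝ)^κ else 0
          split
          · exact Real.rpow_nonneg (Nat.cast_nonneg i) κ
          · exact le_refl 0) hg
      rwa [if_pos ⟨Nat.gcd_dvd_left _ _, Nat.gcd_dvd_right _ _⟩] at hsingle
    · rw [if_neg hne]
      apply Finset.sum_nonneg; intro i _
      split
      · exact Real.rpow_nonneg (Nat.cast_nonneg i) κ
      · exact le_refl 0
  -- step B: evaluate the inner double sum
  have stepB : ∀ h ∈ Finset.Icc 1 N, ∑ ℓ ∈ ℒ, ∑ r ∈ ℒ,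
        (if h ∣ ℓ-1 ∧ h ∣ r-1 then (h:ℝ)^κ else 0)
      = (h:ℝ)^κ * ((ℒ.filter (fun ℓ => h ∣ ℓ - 1)).card : ℝ)
          * ((ℒ.filter (fun ℓ => h ∣ ℓ - 1)).card : ℝ) := by
    intro h _
    have hsplit : ∀ ℓ r : ℕ, (if h ∣ ℓ-1 ∧ h ∣ r-1 then (h:ℝ)^κ else 0)
        = (if h ∣ ℓ-1 then (1:ℝ) else 0) * (if h ∣ r-1 then (h:ℝ)^κ else 0) := by
      intro ℓ r
      by_cases h1 : h ∣ ℓ-1 <;> by_cases h2 : h ∣ r-1 <;> simp [h1, h2]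
    calc ∑ ℓ ∈ ℒ, ∑ r ∈ ℒ, (if h ∣ ℓ-1 ∧ h ∣ r-1 then (h:ℝ)^κ else 0)
        = ∑ ℓ ∈ ℒ, ∑ r ∈ ℒ,
            (if h ∣ ℓ-1 then (1:ℝ) else 0) * (if h ∣ r-1 then (h:ℝ)^κ else 0) :=
          Finset.sum_congr rfl fun ℓ _ => Finset.sum_congr rfl fun r _ => hsplit ℓ r
      _ = (∑ ℓ ∈ ℒ, if h ∣ ℓ-1 then (1:ℝ) else 0)
            * (∑ r ∈ ℒ, if h ∣ r-1 then (h:ℝ)^κ else 0) :=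
          (Finset.sum_mul_sum ℒ ℒ _ _).symm
      _ = ((ℒ.filter (fun ℓ => h ∣ ℓ - 1)).card : ℝ)
            * ((ℒ.filter (fun ℓ => h ∣ ℓ - 1)).card • (h:ℝ)^κ) := by
          rw [Finset.sum_boole, ← Finset.sum_filter, Finset.sum_const]
      _ = (h:ℝ)^κ * ((ℒ.filter (fun ℓ => h ∣ ℓ - 1)).card : ℝ)
            * ((ℒ.filter (fun ℓ => h ∣ ℓ - 1)).card : ℝ) := by
          rw [nsmul_eq_mul]; ring
  -- step C: bound each term
  have stepC : ∀ h ∈ Finset.Icc 1 N,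
      (h:ℝ)^κ * ((ℒ.filter (fun ℓ => h ∣ ℓ - 1)).card : ℝ)
          * ((ℒ.filter (fun ℓ => h ∣ ℓ - 1)).card : ℝ)
      ≤ (C*z)^2 * H^(κ-1) * ((h:ℝ))⁻¹ := by
    intro h hh
    rw [Finset.mem_Icc] at hh
    obtain ⟨h1, hN⟩ := hh
    have hh0 : (0:ℝ) < h := by exact_mod_cast h1
    have hhH : (h:ℝ) ≤ H := le_trans (by exact_mod_cast hN) (Nat.floor_le hH0)
    have hcb := hcnt h h1
    set c : ℝ := ((ℒ.filter (fun ℓ => h ∣ ℓ - 1)).card : ℝ) with hc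
    have hc0 : 0 ≤ c := Nat.cast_nonneg _
    have e1 : (c * h) * (c * h) ≤ (C*z) * (C*z) :=
      mul_le_mul hcb hcb (by positivity) (by positivity)
    have e2 : (h:ℝ)^(κ-1) ≤ H^(κ-1) :=
      Real.rpow_le_rpow (le_of_lt hh0) hhH (by linarith)
    have hpow : (h:ℝ)^(κ-1) * (h:ℝ) = (h:ℝ)^κ := by
      have := Real.rpow_add_one (ne_of_gt hh0) (κ-1)
      rw [sub_add_cancel] at this
      rw [this]
    calc (h:ℝ)^κ * c * c
        = ((c*h)*(c*h)) * (h:ℝ)^(κ-1) * (h:ℝ)⁻¹ := by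
          rw [← hpow]; field_simp
      _ ≤ ((C*z)*(C*z)) * H^(κ-1) * (h:ℝ)⁻¹ := by
          apply mul_le_mul_of_nonneg_right _ (by positivity)
          exact mul_le_mul e1 e2 (Real.rpow_nonneg (le_of_lt hh0) _) (by positivity)
      _ = (C*z)^2 * H^(κ-1) * (h:ℝ)⁻¹ := by ring
  -- combine steps
  have total : (∑ ℓ ∈ ℒ, ∑ r ∈ ℒ,
        if maxPrimeFac (ℓ - 1) ≠ maxPrimeFac (r - 1)
          then (Nat.gcd (ℓ - 1) (r - 1) : ℝ) ^ κ else 0)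
      ≤ (C*z)^2 * H^(κ-1) * (1 + Real.log H) := by
    calc (∑ ℓ ∈ ℒ, ∑ r ∈ ℒ, _) ≤ _ := stepA
      _ = ∑ h ∈ Finset.Icc 1 N,
          (h:ℝ)^κ * ((ℒ.filter (fun ℓ => h ∣ ℓ - 1)).card : ℝ)
            * ((ℒ.filter (fun ℓ => h ∣ ℓ - 1)).card : ℝ) :=
          Finset.sum_congr rfl stepB
      _ ≤ ∑ h ∈ Finset.Icc 1 N, (C*z)^2 * H^(κ-1) * ((h:ℝ))⁻¹ :=
          Finset.sum_le_sum stepC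
      _ = (C*z)^2 * H^(κ-1) * ∑ h ∈ Finset.Icc 1 N, ((h:ℝ))⁻¹ := by
          rw [Finset.mul_sum]
      _ ≤ (C*z)^2 * H^(κ-1) * (1 + Real.log H) := by
          apply mul_le_mul_of_nonneg_left _ (by positivity)
          rw [sum_Icc_inv_eq]
          exact harmonic_floor_le_one_add_log H hH1
  -- final estimate
  have hlogH : 0 ≤ 1 + Real.log H := by
    have := Real.log_nonneg hH1; linarith
  have hB' : C^(κ+1) * (1 + Real.log H) ≤ z^ε := by
    have hlogeq : Real.log H = Real.log C + (1-α) * Real.log z := by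
      rw [hHdef, Real.log_mul (ne_of_gt hC0) (by positivity), Real.log_rpow hz0]
    rw [hlogeq]
    calc C^(κ+1) * (1 + (Real.log C + (1-α) * Real.log z))
        = C^(κ+1) * (1 + Real.log C) + (C^(κ+1) * (1-α)) * Real.log z := by ring
      _ ≤ z^ε := hB
  have hsplit2 : (C*z)^2 * H^(κ-1) = C^(κ+1) * z^(κ+α-α*κ+1) := by
    have c2 : (C*z)^2 = C^(2:ℝ) * z^(2:ℝ) := by
      rw [mul_pow, ← Real.rpow_natCast C 2, ← Real.rpow_natCast z 2]; norm_num
    rw [c2, hHdef, Real.mul_rpow (le_of_lt hC0) (by positivity), ← Real.rpow_mul (le_of_lt hz0)]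
    rw [mul_mul_mul_comm, ← Real.rpow_add hC0, ← Real.rpow_add hz0]
    congr 1
    · congr 1; ring
    · congr 1; ring
  calc (∑ ℓ ∈ ℒ, ∑ r ∈ ℒ,
        if maxPrimeFac (ℓ - 1) ≠ maxPrimeFac (r - 1)
          then (Nat.gcd (ℓ - 1) (r - 1) : ℝ) ^ κ else 0)
      ≤ (C*z)^2 * H^(κ-1) * (1 + Real.log H) := total
    _ = z^(κ+α-α*κ+1) * (C^(κ+1) * (1 + Real.log H)) := by rw [hsplit2]; ring
    _ ≤ z^(κ+α-α*κ+1) * z^ε :=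
        mul_le_mul_of_nonneg_left hB' (Real.rpow_nonneg (le_of_lt hz0) _)
    _ = z^(κ+α-α*κ+1+ε) := (Real.rpow_add hz0 _ _).symm
end

section
/- Let $q$ be an odd prime power, $d \geq 2$ an even integer coprime to $q$, $m \geq 1$, and $a_1, \ldots, a_m \in \mathbb{F}_q^*$. Let $\eta$ be the quadratic character of $\mathbb{F}_q^*$ (extended by $\eta(0) = 0$). Then $\left| \sum_{x_1, \ldots, x_m \in \mathbb{F}_q} \eta(a_1 x_1^d + \cdots + a_m x_m^d) \right| \leq d^{m-1}(q-1) q^{(m-1)/2}$. -/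
open Finset

namespace Stmt11Aux

variable {F : Type} [Field F] [Fintype F] [DecidableEq F]

noncomputable instance : Fintype (MulChar F ℂ) := Fintype.ofFinite _

instance : NeZero ((Monoid.exponent Fˣ : ℂ)) :=
  ⟨by exact_mod_cast Nat.cast_ne_zero.mpr (Monoid.exponent_ne_zero_of_finite)⟩

lemma card_mulChar (F : Type) [Field F] [Fintype F] [DecidableEq F] :
    Fintype.card (MulChar F ℂ) = Fintype.card F - 1 := by
  have := MulChar.card_eq_card_units_of_hasEnoughRootsOfUnity F ℂ
  rw [Nat.card_eq_fintype_card, Nat.card_eq_fintype_card] at this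
  rw [this, Fintype.card_units]

lemma sum_one_char : ∑ t : F, (1 : MulChar F ℂ) t = (Fintype.card F : ℂ) - 1 := by
  have h : ∀ t : F, (1 : MulChar F ℂ) t = 1 - (if t = 0 then 1 else 0) := by
    intro t
    by_cases ht : t = 0
    · simp [ht, (1 : MulChar F ℂ).map_zero]
    · simp [ht, MulChar.one_apply (isUnit_iff_ne_zero.mpr ht)]
  rw [Finset.sum_congr rfl fun t _ => h t, Finset.sum_sub_distrib,
    Finset.sum_ite_eq' Finset.univ (0 : F) (fun _ => (1:ℂ))]
  simp [Finset.card_univ]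

lemma sum_char_eq (χ : MulChar F ℂ) :
    ∑ t : F, χ t = if χ = 1 then (Fintype.card F : ℂ) - 1 else 0 := by
  by_cases h : χ = 1
  · simp [h, sum_one_char]
  · simp [h, MulChar.sum_eq_zero_of_ne_one h]

lemma sum_chars (b : F) :
    ∑ χ : MulChar F ℂ, χ b = if b = 1 then (Fintype.card F : ℂ) - 1 else 0 := by
  by_cases hb : b = 1
  · simp only [hb, if_pos rfl, MulChar.map_one]
    rw [Finset.sum_const, Finset.card_univ, card_mulChar, nsmul_eq_mul,
      Nat.cast_sub Fintype.one_lt_card.le]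
    simp
  · rw [if_neg hb]
    by_cases hu : IsUnit b
    · obtain ⟨χ₀, hχ₀⟩ := MulChar.exists_apply_ne_one_of_hasEnoughRootsOfUnity F ℂ hb
      have hb0 : b ≠ 0 := hu.ne_zero
      have key : ∑ χ : MulChar F ℂ, χ b = χ₀ b * ∑ χ : MulChar F ℂ, χ b := by
        rw [Finset.mul_sum]
        refine Fintype.sum_bijective (fun χ => χ₀⁻¹ * χ)
          (Group.mulLeft_bijective χ₀⁻¹) _ _ (fun χ => ?_)
        rw [MulChar.mul_apply, ← mul_assoc, MulChar.inv_apply' χ₀ b, ← map_mul,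
          mul_inv_cancel₀ hb0, MulChar.map_one, one_mul]
      have h2 : (1 - χ₀ b) * ∑ χ : MulChar F ℂ, χ b = 0 := by
        rw [sub_mul, one_mul]
        rw [← key]
        ring
      rcases mul_eq_zero.mp h2 with h | h
      · exact absurd (sub_eq_zero.mp h).symm hχ₀
      · exact h
    · exact Finset.sum_eq_zero fun χ _ => χ.map_nonunit hu

instance : IsCyclic (MulChar F ℂ) := by
  obtain ⟨e⟩ := MulChar.mulEquiv_units F ℂ
  exact isCyclic_of_surjective e.symm e.symm.surjective

variable (F) in
noncomputable def Sd (d : ℕ) : Finset (MulChar F ℂ) :=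
  Finset.univ.filter (fun χ => χ ^ d = 1)

lemma mem_Sd {d : ℕ} {χ : MulChar F ℂ} : χ ∈ Sd F d ↔ χ ^ d = 1 := by
  simp [Sd]

lemma one_mem_Sd {d : ℕ} : (1 : MulChar F ℂ) ∈ Sd F d := mem_Sd.mpr (one_pow d)

lemma card_Sd_le {d : ℕ} (hd : 0 < d) : (Sd F d).card ≤ d := by
  classical
  have := IsCyclic.card_pow_eq_one_le (α := MulChar F ℂ) hd
  refine le_trans (le_of_eq ?_) this
  congr 1

lemma card_q_ne : ((Fintype.card F : ℂ) - 1) ≠ 0 := by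
  have : (1:ℕ) < Fintype.card F := Fintype.one_lt_card
  have h2 : ((Fintype.card F : ℂ)) ≠ 1 := by
    intro h
    rw [show (1:ℂ) = ((1:ℕ):ℂ) by norm_num] at h
    exact (by omega : Fintype.card F ≠ 1) (Nat.cast_injective h)
  exact sub_ne_zero.mpr h2

lemma count_pow {d : ℕ} (hd : 0 < d) (a c : F) (ha : a ≠ 0) :
    ((Finset.univ.filter (fun t : F => a * t ^ d = c)).card : ℂ)
      = (if c = 0 then 1 else 0) + ∑ χ ∈ Sd F d, χ a⁻¹ * χ c := by
  by_cases hc : c = 0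
  · subst hc
    have hfi : (Finset.univ.filter (fun t : F => a * t ^ d = 0)) = {0} := by
      ext t
      simp [ha, pow_eq_zero_iff hd.ne']
    rw [hfi]
    simp [MulChar.map_zero]
  · have hu : a⁻¹ * c ≠ 0 := by
      simp [ha, hc]
    have hiff : ∀ t : F, (t ^ d * (a⁻¹ * c)⁻¹ = 1) ↔ (a * t ^ d = c) := by
      intro t
      rw [mul_inv_eq_one₀ hu]
      constructor
      · intro h; rw [h]; field_simp
      · intro h; rw [← h]; field_simp
    have claim1 : ∀ t : F, ∑ χ : MulChar F ℂ, χ (t ^ d * (a⁻¹ * c)⁻¹)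
        = if a * t ^ d = c then (Fintype.card F : ℂ) - 1 else 0 := by
      intro t
      rw [sum_chars, if_congr (hiff t) rfl rfl]
    have lhs2 : ∑ t : F, ∑ χ : MulChar F ℂ, χ (t ^ d * (a⁻¹ * c)⁻¹)
        = ((Fintype.card F : ℂ) - 1) * ((Finset.univ.filter (fun t : F => a * t ^ d = c)).card : ℂ) := by
      rw [Finset.sum_congr rfl fun t _ => claim1 t, ← Finset.sum_filter, Finset.sum_const,
        nsmul_eq_mul, mul_comm]
    have rhs2 : ∑ t : F, ∑ χ : MulChar F ℂ, χ (t ^ d * (a⁻¹ * c)⁻¹)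
        = ((Fintype.card F : ℂ) - 1) * ∑ χ ∈ Sd F d, χ (a⁻¹ * c)⁻¹ := by
      rw [Finset.sum_comm]
      have step : ∀ χ : MulChar F ℂ, ∑ t : F, χ (t ^ d * (a⁻¹ * c)⁻¹)
          = if χ ^ d = 1 then χ (a⁻¹ * c)⁻¹ * ((Fintype.card F : ℂ) - 1) else 0 := by
        intro χ
        have h1 : ∀ t : F, χ (t ^ d * (a⁻¹ * c)⁻¹) = (χ ^ d) t * χ (a⁻¹ * c)⁻¹ := by
          intro t
          rw [map_mul, map_pow, MulChar.pow_apply' χ hd.ne' t]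
        rw [Finset.sum_congr rfl fun t _ => h1 t, ← Finset.sum_mul, sum_char_eq]
        by_cases h : χ ^ d = 1 <;> simp [h, mul_comm]
      rw [Finset.sum_congr rfl fun χ _ => step χ, ← Finset.sum_filter]
      show ∑ χ ∈ Sd F d, _ = _
      rw [Finset.mul_sum]
      exact Finset.sum_congr rfl fun χ _ => mul_comm _ _
    have key : ((Finset.univ.filter (fun t : F => a * t ^ d = c)).card : ℂ)
        = ∑ χ ∈ Sd F d, χ (a⁻¹ * c)⁻¹ :=
      mul_left_cancel₀ card_q_ne (lhs2 ▸ rhs2)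
    rw [key, if_neg hc, zero_add]
    rw [show ∑ χ ∈ Sd F d, χ a⁻¹ * χ c = ∑ χ ∈ Sd F d, χ (a⁻¹ * c) from
      Finset.sum_congr rfl fun χ _ => (map_mul χ _ _).symm]
    refine Finset.sum_nbij' (fun χ => χ⁻¹) (fun χ => χ⁻¹) ?_ ?_ ?_ ?_ ?_
    · intro χ hχ
      rw [mem_Sd] at hχ ⊢
      show χ⁻¹ ^ d = 1
      rw [inv_pow, hχ, inv_one]
    · intro χ hχ
      rw [mem_Sd] at hχ ⊢
      show χ⁻¹ ^ d = 1
      rw [inv_pow, hχ, inv_one]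
    · intro χ _; simp
    · intro χ _; simp
    · intro χ _
      show χ (a⁻¹ * c)⁻¹ = χ⁻¹ (a⁻¹ * c)
      rw [MulChar.inv_apply' χ]

lemma triv_term (Φ : F → ℂ) (hΦ : ∑ c : F, Φ c = 0) (u : F) :
    ∑ c : F, (1 : MulChar F ℂ) c * Φ (c + u) = -Φ u := by
  have h : ∀ c : F, (1 : MulChar F ℂ) c * Φ (c + u)
      = Φ (c + u) - (if c = 0 then Φ (c + u) else 0) := by
    intro c
    by_cases hc : c = 0
    · simp [hc, (1 : MulChar F ℂ).map_zero]
    · simp [hc, MulChar.one_apply (isUnit_iff_ne_zero.mpr hc)]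
  rw [Finset.sum_congr rfl fun c _ => h c, Finset.sum_sub_distrib,
    Finset.sum_ite_eq' Finset.univ (0 : F) (fun c => Φ (c + u))]
  have h2 : ∑ c : F, Φ (c + u) = 0 := by
    rw [Fintype.sum_equiv (Equiv.addRight u) (fun c => Φ (c + u)) Φ (fun c => rfl)]
    exact hΦ
  simp [h2]

lemma master {d : ℕ} (hd : 0 < d) (m : ℕ) (a : Fin (m + 1) → F) (ha : ∀ i, a i ≠ 0)
    (Φ : F → ℂ) (hΦ : ∑ c : F, Φ c = 0) :
    ∑ x : Fin (m + 1) → F, Φ (∑ i, a i * x i ^ d)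
      = ∑ χ ∈ Sd F d \ {1}, χ ((a 0)⁻¹) *
          ∑ y : Fin m → F, ∑ c : F, χ c * Φ ((∑ i, a i.succ * y i ^ d) + c) := by
  have step1 : ∑ x : Fin (m + 1) → F, Φ (∑ i, a i * x i ^ d)
      = ∑ y : Fin m → F, ∑ t : F, Φ (a 0 * t ^ d + ∑ i, a i.succ * y i ^ d) := by
    rw [← Fintype.sum_equiv (Fin.consEquiv fun _ : Fin (m + 1) => F)
      (fun p => Φ (a 0 * p.1 ^ d + ∑ i, a i.succ * p.2 i ^ d))
      (fun x => Φ (∑ i, a i * x i ^ d))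
      (fun p => by
        show Φ _ = Φ (∑ i, a i * ((Fin.consEquiv fun _ : Fin (m + 1) => F) p) i ^ d)
        congr 1
        rw [Fin.sum_univ_succ]
        simp [Fin.consEquiv])]
    rw [Fintype.sum_prod_type, Finset.sum_comm]
  have step2 : ∀ u : F, ∑ t : F, Φ (a 0 * t ^ d + u)
      = ∑ c : F, ((Finset.univ.filter (fun t : F => a 0 * t ^ d = c)).card : ℂ) * Φ (c + u) := by
    intro u
    rw [← Finset.sum_fiberwise_of_maps_to' (g := fun t : F => a 0 * t ^ d)
      (fun t _ => Finset.mem_univ _) (fun c => Φ (c + u))]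
    exact Finset.sum_congr rfl fun c _ => by rw [Finset.sum_const, nsmul_eq_mul]
  have step3 : ∀ u : F, ∑ t : F, Φ (a 0 * t ^ d + u)
      = ∑ χ ∈ Sd F d \ {1}, χ ((a 0)⁻¹) * ∑ c : F, χ c * Φ (u + c) := by
    intro u
    rw [step2 u]
    have e1 : ∀ c : F, ((Finset.univ.filter (fun t : F => a 0 * t ^ d = c)).card : ℂ) * Φ (c + u)
        = (if c = 0 then Φ (c + u) else 0) + ∑ χ ∈ Sd F d, χ ((a 0)⁻¹) * (χ c * Φ (c + u)) := by
      intro c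
      rw [count_pow hd (a 0) c (ha 0), add_mul, Finset.sum_mul, ite_mul, zero_mul, one_mul]
      congr 1
      exact Finset.sum_congr rfl fun χ _ => by ring
    rw [Finset.sum_congr rfl fun c _ => e1 c, Finset.sum_add_distrib,
      Finset.sum_ite_eq' Finset.univ (0 : F) (fun c => Φ (c + u)), Finset.sum_comm]
    simp only [Finset.mem_univ, if_pos, zero_add]
    have e2 : ∀ χ : MulChar F ℂ, ∑ c : F, χ ((a 0)⁻¹) * (χ c * Φ (c + u))
        = χ ((a 0)⁻¹) * ∑ c : F, χ c * Φ (u + c) := by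
      intro χ
      rw [Finset.mul_sum]
      exact Finset.sum_congr rfl fun c _ => by rw [add_comm u c]
    rw [Finset.sum_congr rfl fun χ _ => e2 χ,
      Finset.sum_eq_sum_sdiff_singleton_add (one_mem_Sd (d := d)) ]
    have h1 : (1 : MulChar F ℂ) ((a 0)⁻¹) = 1 :=
      MulChar.one_apply (isUnit_iff_ne_zero.mpr (inv_ne_zero (ha 0)))
    have h2 : ∑ c : F, (1 : MulChar F ℂ) c * Φ (u + c) = -Φ u := by
      rw [Finset.sum_congr rfl fun c _ => by rw [add_comm u c]]
      exact triv_term Φ hΦ u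
    rw [h1, h2]
    ring
  rw [step1, Finset.sum_congr rfl fun y (_ : y ∈ Finset.univ) =>
    step3 (∑ i, a i.succ * y i ^ d), Finset.sum_comm]
  exact Finset.sum_congr rfl fun χ _ => by rw [Finset.mul_sum]

lemma inner_psi (χ ψ : MulChar F ℂ) (u : F) :
    ∑ c : F, χ c * ψ (u + c)
      = if u = 0 then (if χ * ψ = 1 then ((Fintype.card F : ℂ) - 1) else 0)
        else χ (-1) * jacobiSum χ ψ * ((χ * ψ) u) := by
  by_cases hu : u = 0
  · subst hu
    rw [if_pos rfl, ← sum_char_eq (χ * ψ)]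
    exact Finset.sum_congr rfl fun c _ => by rw [MulChar.mul_apply, zero_add]
  · rw [if_neg hu]
    have h1 : ∑ c : F, χ c * ψ (u + c) = χ u * ψ u * ∑ z : F, χ z * ψ (z + 1) := by
      rw [Finset.mul_sum]
      refine (Fintype.sum_bijective (fun z : F => u * z)
        ((Equiv.mulLeft₀ u hu).bijective)
        (fun z => χ u * ψ u * (χ z * ψ (z + 1)))
        (fun c => χ c * ψ (u + c)) (fun z => ?_)).symm
      show _ = χ (u * z) * ψ (u + u * z)
      rw [show u + u * z = u * (z + 1) by ring, map_mul, map_mul]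
      ring
    have h2 : ∑ z : F, χ z * ψ (z + 1) = χ (-1) * jacobiSum χ ψ := by
      rw [jacobiSum, Finset.mul_sum]
      refine (Fintype.sum_bijective (fun w : F => -w) neg_involutive.bijective
        (fun w => χ (-1) * (χ w * ψ (1 - w)))
        (fun z => χ z * ψ (z + 1)) (fun w => ?_)).symm
      show χ (-1) * (χ w * ψ (1 - w)) = χ (-w) * ψ (-w + 1)
      rw [show (-w : F) = -1 * w by ring, map_mul, show (-1 * w + 1 : F) = 1 - w by ring]
      ring
    rw [h1, h2, MulChar.mul_apply]
    ring

lemma inner_delta (χ : MulChar F ℂ) (hχ : χ ≠ 1) (u : F) :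
    ∑ c : F, χ c * ((if u + c = 0 then (Fintype.card F : ℂ) else 0) - 1)
      = (Fintype.card F : ℂ) * χ (-u) := by
  have h : ∀ c : F, χ c * ((if u + c = 0 then (Fintype.card F : ℂ) else 0) - 1)
      = (if c = -u then (Fintype.card F : ℂ) * χ c else 0) - χ c := by
    intro c
    by_cases hc : c = -u
    · rw [if_pos hc, if_pos (by rw [hc]; ring)]; ring
    · rw [if_neg hc, if_neg (by intro h; exact hc (by linear_combination h))]; ring
  rw [Finset.sum_congr rfl fun c _ => h c, Finset.sum_sub_distrib,
    Finset.sum_ite_eq' Finset.univ (-u : F) (fun c => (Fintype.card F : ℂ) * χ c),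
    MulChar.sum_eq_zero_of_ne_one hχ]
  simp

lemma norm_char_le (χ : MulChar F ℂ) (b : F) : ‖χ b‖ ≤ 1 := by
  by_cases hb : IsUnit b
  · lift b to Fˣ using hb
    haveI : NeZero (Fintype.card Fˣ) := ⟨Fintype.card_pos.ne'⟩
    have := Complex.norm_eq_one_of_mem_rootsOfUnity (χ.apply_mem_rootsOfUnity b)
    rw [MulChar.coe_equivToUnitHom] at this
    rw [this]
  · rw [χ.map_nonunit hb]
    simp

lemma norm_jacobi (χ ψ : MulChar F ℂ) (hχ : χ ≠ 1) (hψ : ψ ≠ 1) (hχψ : χ * ψ ≠ 1) :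
    ‖jacobiSum χ ψ‖ = Real.sqrt (Fintype.card F) := by
  have hchar : ringChar ℂ ≠ ringChar F := by
    rw [ringChar.eq_zero]
    exact fun h => CharP.char_ne_zero_of_finite F (ringChar F) h.symm
  have h := jacobiSum_mul_jacobiSum_inv hchar hχ hψ hχψ
  have hstar : jacobiSum χ⁻¹ ψ⁻¹ = star (jacobiSum χ ψ) := by
    rw [jacobiSum, jacobiSum, star_sum]
    exact Finset.sum_congr rfl fun x _ => by
      rw [star_mul', MulChar.star_apply', MulChar.star_apply']
  rw [hstar, RCLike.star_def, Complex.mul_conj] at h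
  have h2 : Complex.normSq (jacobiSum χ ψ) = (Fintype.card F : ℝ) := by exact_mod_cast h
  rw [Complex.norm_def, h2]

lemma q1_nonneg : (0:ℝ) ≤ (Fintype.card F : ℝ) - 1 := by
  have : (1:ℕ) ≤ Fintype.card F := Fintype.card_pos
  have : (1:ℝ) ≤ (Fintype.card F : ℝ) := by exact_mod_cast this
  linarith

lemma hJneg (χ ψ : MulChar F ℂ) (hψ : ψ ≠ 1) (hmul : χ * ψ = 1) :
    χ (-1) * jacobiSum χ ψ = -1 := by
  have hχ : χ = ψ⁻¹ := eq_inv_of_mul_eq_one_left hmul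
  subst hχ
  rw [jacobiSum_comm, jacobiSum_nontrivial_inv hψ, MulChar.inv_apply' ψ, inv_neg, inv_one]
  have h1 : ψ (-1) * ψ (-1) = 1 := by rw [← map_mul, neg_mul_neg, one_mul, map_one]
  linear_combination -h1

lemma delta_sum_zero :
    ∑ c : F, ((if c = 0 then (Fintype.card F : ℂ) else 0) - 1) = 0 := by
  rw [Finset.sum_sub_distrib, Finset.sum_ite_eq' Finset.univ (0:F)
    (fun _ => (Fintype.card F : ℂ))]
  simp [Finset.card_univ]

theorem key (d : ℕ) (hd2 : 2 ≤ d) : ∀ m : ℕ, ∀ a : Fin (m + 1) → F, (∀ i, a i ≠ 0) →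
    (∀ ψ : MulChar F ℂ, ψ ≠ 1 →
      ‖∑ x : Fin (m + 1) → F, ψ (∑ i, a i * x i ^ d)‖
        ≤ (d : ℝ) ^ m * ((Fintype.card F : ℝ) - 1) * Real.sqrt (Fintype.card F) ^ m)
    ∧ ‖∑ x : Fin (m + 1) → F, ((if (∑ i, a i * x i ^ d) = 0 then (Fintype.card F : ℂ) else 0) - 1)‖
        ≤ (d : ℝ) ^ m * ((Fintype.card F : ℝ) - 1) * Real.sqrt (Fintype.card F) ^ (m + 1) := by
  have hd : 0 < d := by omega
  have hq1 : (0:ℝ) ≤ (Fintype.card F : ℝ) - 1 := q1_nonneg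
  have hsq : (0:ℝ) ≤ Real.sqrt (Fintype.card F) := Real.sqrt_nonneg _
  have hqsq : (Fintype.card F : ℝ) = Real.sqrt (Fintype.card F) * Real.sqrt (Fintype.card F) :=
    (Real.mul_self_sqrt (by positivity)).symm
  intro m
  induction m with
  | zero =>
    intro a ha
    have conv1 : ∀ G : F → ℂ,
        ∑ x : Fin (0 + 1) → F, G (∑ i, a i * x i ^ d) = ∑ t : F, G (a 0 * t ^ d) := by
      intro G
      refine Fintype.sum_equiv (Equiv.funUnique (Fin 1) F) _ _ (fun x => ?_)
      congr 1
      rw [Fin.sum_univ_one]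
      rfl
    constructor
    · intro ψ hψ
      rw [conv1]
      have : ∀ t : F, ψ (a 0 * t ^ d) = ψ (a 0) * (ψ ^ d) t := by
        intro t
        rw [map_mul, map_pow, MulChar.pow_apply' ψ hd.ne' t]
      rw [Finset.sum_congr rfl fun t _ => this t, ← Finset.mul_sum, sum_char_eq]
      simp only [pow_zero, one_mul, mul_one]
      by_cases h : (ψ ^ d : MulChar F ℂ) = 1
      · rw [if_pos h, norm_mul]
        have h2 : ‖((Fintype.card F : ℂ) - 1)‖ = (Fintype.card F : ℝ) - 1 := by
          rw [show ((Fintype.card F : ℂ) - 1) = (((Fintype.card F : ℝ) - 1 : ℝ) : ℂ) by push_cast; ring,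
            Complex.norm_real, Real.norm_of_nonneg hq1]
        rw [h2]
        calc ‖ψ (a 0)‖ * ((Fintype.card F:ℝ) - 1) ≤ 1 * ((Fintype.card F:ℝ) - 1) :=
          mul_le_mul_of_nonneg_right (norm_char_le ψ (a 0)) hq1
        _ = (Fintype.card F:ℝ) - 1 := one_mul _
      · rw [if_neg h]
        simpa using hq1
    · rw [conv1 (fun v => (if v = 0 then (Fintype.card F : ℂ) else 0) - 1)]
      have : ∀ t : F, ((if a 0 * t ^ d = 0 then (Fintype.card F : ℂ) else 0) - 1)
          = ((if t = 0 then (Fintype.card F : ℂ) else 0) - 1) := by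
        intro t
        congr 1
        refine if_congr ?_ rfl rfl
        rw [mul_eq_zero, pow_eq_zero_iff hd.ne']
        simp [ha 0]
      rw [Finset.sum_congr rfl fun t _ => this t, delta_sum_zero]
      simp only [norm_zero, pow_zero, one_mul]
      positivity
  | succ m IH =>
    intro a ha
    set Q := Real.sqrt (Fintype.card F) with hQ
    set a' : Fin (m + 1) → F := fun i => a i.succ with ha'def
    have ha' : ∀ i, a' i ≠ 0 := fun i => ha i.succ
    obtain ⟨IH1, IH2⟩ := IH a' ha'
    have hcard : ((Sd F d \ {1}).card : ℝ) ≤ (d : ℝ) := by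
      have h1 : (Sd F d \ {1}).card ≤ (Sd F d).card := Finset.card_le_card (Finset.sdiff_subset)
      have := le_trans h1 (card_Sd_le hd)
      exact_mod_cast this
    constructor
    · -- character sum bound
      intro ψ hψ
      rw [master hd (m + 1) a ha (fun v => ψ v) (MulChar.sum_eq_zero_of_ne_one hψ)]
      have hterm : ∀ χ ∈ Sd F d \ {1},
          ‖χ ((a 0)⁻¹) * ∑ y : Fin (m + 1) → F, ∑ c : F,
            χ c * ψ ((∑ i, a' i * y i ^ d) + c)‖
          ≤ (d : ℝ) ^ m * ((Fintype.card F : ℝ) - 1) * Q ^ (m + 1) := by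
        intro χ hχmem
        have hχ1 : χ ≠ 1 := by
          intro h
          rw [Finset.mem_sdiff, Finset.mem_singleton] at hχmem
          exact hχmem.2 h
        rw [norm_mul]
        have hbW : ‖∑ y : Fin (m + 1) → F, ∑ c : F, χ c * ψ ((∑ i, a' i * y i ^ d) + c)‖
            ≤ (d : ℝ) ^ m * ((Fintype.card F : ℝ) - 1) * Q ^ (m + 1) := by
          by_cases hmul : χ * ψ = 1
          · have hterm2 : ∀ y : Fin (m + 1) → F, ∑ c : F, χ c * ψ ((∑ i, a' i * y i ^ d) + c)
                = ((if (∑ i, a' i * y i ^ d) = 0 then (Fintype.card F : ℂ) else 0) - 1) := by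
              intro y
              rw [inner_psi]
              by_cases hu : (∑ i, a' i * y i ^ d) = 0
              · rw [if_pos hu, if_pos hmul, if_pos hu]
              · rw [if_neg hu, if_neg hu, hJneg χ ψ hψ hmul, hmul,
                  MulChar.one_apply (isUnit_iff_ne_zero.mpr hu)]
                ring
            rw [Finset.sum_congr rfl fun y _ => hterm2 y]
            exact IH2
          · have hterm2 : ∀ y : Fin (m + 1) → F, ∑ c : F, χ c * ψ ((∑ i, a' i * y i ^ d) + c)
                = χ (-1) * jacobiSum χ ψ * ((χ * ψ) (∑ i, a' i * y i ^ d)) := by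
              intro y
              rw [inner_psi]
              by_cases hu : (∑ i, a' i * y i ^ d) = 0
              · rw [if_pos hu, if_neg hmul, hu, MulChar.map_zero, mul_zero]
              · rw [if_neg hu]
            rw [Finset.sum_congr rfl fun y _ => hterm2 y, ← Finset.mul_sum, norm_mul, norm_mul,
              norm_jacobi χ ψ hχ1 hψ hmul, ← hQ]
            calc ‖χ (-1)‖ * Q * ‖∑ y : Fin (m+1) → F, (χ * ψ) (∑ i, a' i * y i ^ d)‖
                ≤ 1 * Q * ((d : ℝ) ^ m * ((Fintype.card F : ℝ) - 1) * Q ^ m) := by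
                  refine mul_le_mul (mul_le_mul_of_nonneg_right (norm_char_le _ _) hsq)
                    (IH1 (χ * ψ) hmul) (norm_nonneg _) (by positivity)
              _ = (d : ℝ) ^ m * ((Fintype.card F : ℝ) - 1) * Q ^ (m + 1) := by ring
        calc ‖χ ((a 0)⁻¹)‖ * ‖∑ y : Fin (m + 1) → F, ∑ c : F,
              χ c * ψ ((∑ i, a' i * y i ^ d) + c)‖
            ≤ 1 * ((d : ℝ) ^ m * ((Fintype.card F : ℝ) - 1) * Q ^ (m + 1)) :=
              mul_le_mul (norm_char_le _ _) hbW (norm_nonneg _) (by norm_num)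
          _ = (d : ℝ) ^ m * ((Fintype.card F : ℝ) - 1) * Q ^ (m + 1) := one_mul _
      calc ‖∑ χ ∈ Sd F d \ {1}, χ ((a 0)⁻¹) * ∑ y : Fin (m + 1) → F, ∑ c : F,
              χ c * ψ ((∑ i, a' i * y i ^ d) + c)‖
          ≤ ∑ χ ∈ Sd F d \ {1}, ‖χ ((a 0)⁻¹) * ∑ y : Fin (m + 1) → F, ∑ c : F,
              χ c * ψ ((∑ i, a' i * y i ^ d) + c)‖ := norm_sum_le _ _
        _ ≤ ∑ _χ ∈ Sd F d \ {1}, (d : ℝ) ^ m * ((Fintype.card F : ℝ) - 1) * Q ^ (m + 1) :=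
            Finset.sum_le_sum hterm
        _ = ((Sd F d \ {1}).card : ℝ) * ((d : ℝ) ^ m * ((Fintype.card F : ℝ) - 1) * Q ^ (m + 1)) := by
            rw [Finset.sum_const, nsmul_eq_mul]
        _ ≤ (d : ℝ) * ((d : ℝ) ^ m * ((Fintype.card F : ℝ) - 1) * Q ^ (m + 1)) :=
            mul_le_mul_of_nonneg_right hcard (by positivity)
        _ = (d : ℝ) ^ (m + 1) * ((Fintype.card F : ℝ) - 1) * Q ^ (m + 1) := by ring
    · -- delta sum bound
      rw [master hd (m + 1) a ha (fun v => (if v = 0 then (Fintype.card F : ℂ) else 0) - 1)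
        delta_sum_zero]
      have hterm : ∀ χ ∈ Sd F d \ {1},
          ‖χ ((a 0)⁻¹) * ∑ y : Fin (m + 1) → F, ∑ c : F,
            χ c * ((if (∑ i, a' i * y i ^ d) + c = 0 then (Fintype.card F : ℂ) else 0) - 1)‖
          ≤ (d : ℝ) ^ m * ((Fintype.card F : ℝ) - 1) * Q ^ (m + 2) := by
        intro χ hχmem
        have hχ1 : χ ≠ 1 := by
          intro h
          rw [Finset.mem_sdiff, Finset.mem_singleton] at hχmem
          exact hχmem.2 h
        have hterm2 : ∀ y : Fin (m + 1) → F,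
            ∑ c : F, χ c * ((if (∑ i, a' i * y i ^ d) + c = 0 then (Fintype.card F : ℂ) else 0) - 1)
            = (Fintype.card F : ℂ) * χ (-1) * χ (∑ i, a' i * y i ^ d) := by
          intro y
          rw [inner_delta χ hχ1, show -(∑ i, a' i * y i ^ d) = -1 * (∑ i, a' i * y i ^ d) by ring,
            map_mul, mul_assoc]
        have hbW : ‖∑ y : Fin (m + 1) → F, ∑ c : F,
            χ c * ((if (∑ i, a' i * y i ^ d) + c = 0 then (Fintype.card F : ℂ) else 0) - 1)‖
            ≤ (d : ℝ) ^ m * ((Fintype.card F : ℝ) - 1) * Q ^ (m + 2) := by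
          have hpull : ∑ y : Fin (m + 1) → F,
              (Fintype.card F : ℂ) * χ (-1) * χ (∑ i, a' i * y i ^ d)
              = (Fintype.card F : ℂ) * χ (-1) * ∑ y : Fin (m + 1) → F, χ (∑ i, a' i * y i ^ d) :=
            (Finset.mul_sum _ _ _).symm
          rw [Finset.sum_congr rfl fun y _ => hterm2 y, hpull]
          simp only [norm_mul, Complex.norm_natCast]
          calc (Fintype.card F : ℝ) * ‖χ (-1)‖ * ‖∑ y : Fin (m+1) → F, χ (∑ i, a' i * y i ^ d)‖
              ≤ (Fintype.card F : ℝ) * 1 * ((d : ℝ) ^ m * ((Fintype.card F : ℝ) - 1) * Q ^ m) := by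
                refine mul_le_mul (mul_le_mul_of_nonneg_left (norm_char_le _ _) (by positivity))
                  (IH1 χ hχ1) (norm_nonneg _) (by positivity)
            _ = (d : ℝ) ^ m * ((Fintype.card F : ℝ) - 1) * Q ^ (m + 2) := by
                rw [hqsq]; ring
        rw [norm_mul]
        calc ‖χ ((a 0)⁻¹)‖ * ‖∑ y : Fin (m + 1) → F, ∑ c : F,
              χ c * ((if (∑ i, a' i * y i ^ d) + c = 0 then (Fintype.card F : ℂ) else 0) - 1)‖
            ≤ 1 * ((d : ℝ) ^ m * ((Fintype.card F : ℝ) - 1) * Q ^ (m + 2)) :=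
              mul_le_mul (norm_char_le _ _) hbW (norm_nonneg _) (by norm_num)
          _ = (d : ℝ) ^ m * ((Fintype.card F : ℝ) - 1) * Q ^ (m + 2) := one_mul _
      calc ‖∑ χ ∈ Sd F d \ {1}, χ ((a 0)⁻¹) * ∑ y : Fin (m + 1) → F, ∑ c : F,
              χ c * ((if (∑ i, a' i * y i ^ d) + c = 0 then (Fintype.card F : ℂ) else 0) - 1)‖
          ≤ ∑ χ ∈ Sd F d \ {1}, ‖χ ((a 0)⁻¹) * ∑ y : Fin (m + 1) → F, ∑ c : F,
              χ c * ((if (∑ i, a' i * y i ^ d) + c = 0 then (Fintype.card F : ℂ) else 0) - 1)‖ :=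
            norm_sum_le _ _
        _ ≤ ∑ _χ ∈ Sd F d \ {1}, (d : ℝ) ^ m * ((Fintype.card F : ℝ) - 1) * Q ^ (m + 2) :=
            Finset.sum_le_sum hterm
        _ = ((Sd F d \ {1}).card : ℝ) * ((d : ℝ) ^ m * ((Fintype.card F : ℝ) - 1) * Q ^ (m + 2)) := by
            rw [Finset.sum_const, nsmul_eq_mul]
        _ ≤ (d : ℝ) * ((d : ℝ) ^ m * ((Fintype.card F : ℝ) - 1) * Q ^ (m + 2)) :=
            mul_le_mul_of_nonneg_right hcard (by positivity)
        _ = (d : ℝ) ^ (m + 1) * ((Fintype.card F : ℝ) - 1) * Q ^ (m + 1 + 1) := by ring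

end Stmt11Aux

/-- Bound for the complete sum of the quadratic character of a diagonal form
with even exponent d. -/
theorem stmt11 (F : Type) [Field F] [Fintype F] [DecidableEq F]
    (hodd : Odd (Fintype.card F))
    (d : ℕ) (hd2 : 2 ≤ d) (hde : Even d) (hdq : Nat.Coprime d (Fintype.card F))
    (m : ℕ) (hm : 1 ≤ m) (a : Fin m → F) (ha : ∀ i, a i ≠ 0) :
    |∑ x : Fin m → F, ((quadraticChar F (∑ i, a i * (x i) ^ d) : ℤ) : ℝ)|
      ≤ (d : ℝ) ^ (m - 1) * ((Fintype.card F : ℝ) - 1) *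
          (Fintype.card F : ℝ) ^ (((m : ℝ) - 1) / 2) := by
  obtain ⟨k, rfl⟩ : ∃ k, m = k + 1 := ⟨m - 1, by omega⟩
  have hchar2 : ringChar F ≠ 2 := by
    intro h
    have h2 := FiniteField.even_card_iff_char_two.mp h
    rw [Nat.odd_iff] at hodd
    omega
  set ψ : MulChar F ℂ := (quadraticChar F).ringHomComp (Int.castRingHom ℂ) with hψdef
  have hψ : ψ ≠ 1 := by
    obtain ⟨b, hb⟩ := quadraticChar_exists_neg_one hchar2
    have hb0 : b ≠ 0 := by
      intro h
      rw [h, quadraticChar_zero] at hb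
      norm_num at hb
    intro h
    have h1 : ψ b = 1 := by rw [h, MulChar.one_apply (isUnit_iff_ne_zero.mpr hb0)]
    rw [hψdef, MulChar.ringHomComp_apply, hb] at h1
    norm_num at h1
  have hkey := (Stmt11Aux.key d hd2 k a ha).1 ψ hψ
  set S : ℤ := ∑ x : Fin (k + 1) → F, (quadraticChar F (∑ i, a i * (x i) ^ d) : ℤ) with hS
  have hL : ∑ x : Fin (k + 1) → F, ((quadraticChar F (∑ i, a i * (x i) ^ d) : ℤ) : ℝ)
      = (S : ℝ) := by
    rw [hS]
    push_cast
    rfl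
  have hC : ∑ x : Fin (k + 1) → F, ψ (∑ i, a i * (x i) ^ d) = (S : ℂ) := by
    rw [hS]
    push_cast
    exact Finset.sum_congr rfl fun x _ => by rw [hψdef, MulChar.ringHomComp_apply]; push_cast; rfl
  have hnorm : ‖∑ x : Fin (k + 1) → F, ψ (∑ i, a i * (x i) ^ d)‖ = |(S : ℝ)| := by
    rw [hC]
    rw [show ((S : ℂ)) = (((S : ℝ) : ℂ)) by push_cast; rfl, Complex.norm_real, Real.norm_eq_abs]
  rw [hL, ← hnorm]
  refine le_trans hkey (le_of_eq ?_)
  simp only [Nat.add_sub_cancel]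
  congr 1
  have hq0 : (0:ℝ) ≤ (Fintype.card F : ℝ) := Nat.cast_nonneg _
  rw [Real.sqrt_eq_rpow, ← Real.rpow_natCast ((Fintype.card F : ℝ) ^ ((1:ℝ)/2)) k,
    ← Real.rpow_mul hq0]
  congr 1
  push_cast
  ring
end

section
/- Let $q$ be an odd prime power, $d \geq 2$ an integer coprime to $q$, $m \geq 1$, $a_1, \ldots, a_m \in \mathbb{F}_q^*$, $\eta$ the quadratic character of $\mathbb{F}_q$, and $\chi_1, \ldots, \chi_m$ arbitrary multiplicative characters of $\mathbb{F}_q$. Then $\sum_{x_1, \ldots, x_m \in \mathbb{F}_q} \eta(a_1 x_1^d + \cdots + a_m x_m^d) \chi_1(x_1) \cdots \chi_m(x_m) = O(d^m q^{(m+1)/2})$, with implied constant depending only on $m$. -/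
open Finset

section Aux

variable {F : Type} [Field F] [Fintype F] [DecidableEq F]

private lemma ac_map_sum {ι : Type*} (ψ : AddChar F ℂ) (s : Finset ι) (f : ι → F) :
    ψ (∑ i ∈ s, f i) = ∏ i ∈ s, ψ (f i) := by
  classical
  induction s using Finset.cons_induction with
  | empty => simp
  | cons a s ha ih => rw [Finset.sum_cons, Finset.prod_cons, AddChar.map_add_eq_mul, ih]

private lemma neZeroExp : NeZero ((Monoid.exponent Fˣ : ℕ) : ℂ) :=
  ⟨by exact_mod_cast (Monoid.exponent_ne_zero_of_finite (G := Fˣ))⟩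

noncomputable local instance : Fintype (MulChar F ℂ) := Fintype.ofFinite _

/-- Orthogonality: sum of all multiplicative characters at a point. -/
private lemma sum_mulChar_eq (s : F) :
    ∑ ρ : MulChar F ℂ, ρ s
      = if s = 1 then ((Fintype.card F - 1 : ℕ) : ℂ) else 0 := by
  haveI := neZeroExp (F := F)
  split_ifs with hs
  · subst hs
    simp only [MulChar.map_one, Finset.sum_const, Finset.card_univ, nsmul_eq_mul, mul_one]
    congr 1
    rw [← Fintype.card_units (α := F), ← Nat.card_eq_fintype_card, ← Nat.card_eq_fintype_card]
    exact MulChar.card_eq_card_units_of_hasEnoughRootsOfUnity F ℂ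
  · obtain ⟨χ₀, hχ₀⟩ := MulChar.exists_apply_ne_one_of_hasEnoughRootsOfUnity F ℂ hs
    refine eq_zero_of_mul_eq_self_left hχ₀ ?_
    simp only [Finset.mul_sum, ← MulChar.mul_apply]
    exact Fintype.sum_bijective _ (Group.mulLeft_bijective χ₀) _ _ fun χ' ↦ rfl

private lemma card_F_pred_ne_zero : ((Fintype.card F - 1 : ℕ) : ℂ) ≠ 0 :=
  Nat.cast_ne_zero.mpr (by have := Fintype.one_lt_card (α := F); omega)

/-- Fiber identity: the weighted count of `d`-th roots equals a sum over characters. -/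
private lemma fiber_eq (d : ℕ) (hd : d ≠ 0) (χ : MulChar F ℂ) (t : F) :
    ∑ x : F, (if x ^ d = t then χ x else 0)
      = ∑ ρ ∈ Finset.univ.filter (fun ρ : MulChar F ℂ => χ * ρ ^ d = 1), ρ⁻¹ t := by
  rcases eq_or_ne t 0 with rfl | ht
  · rw [Finset.sum_eq_zero, Finset.sum_eq_zero]
    · intro ρ _
      exact ρ⁻¹.map_nonunit (by simp)
    · intro x _
      split_ifs with h
      · rw [(pow_eq_zero_iff hd).mp h, MulChar.map_zero]
      · rfl
  · apply mul_left_cancel₀ (card_F_pred_ne_zero (F := F))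
    calc ((Fintype.card F - 1 : ℕ) : ℂ) * ∑ x : F, (if x ^ d = t then χ x else 0)
        = ∑ x : F, ∑ ρ : MulChar F ℂ, χ x * (ρ x ^ d * ρ t⁻¹) := by
          rw [Finset.mul_sum]
          refine Finset.sum_congr rfl fun x _ => ?_
          have : ∑ ρ : MulChar F ℂ, χ x * (ρ x ^ d * ρ t⁻¹)
              = χ x * ∑ ρ : MulChar F ℂ, ρ (x ^ d * t⁻¹) := by
            rw [Finset.mul_sum]
            refine Finset.sum_congr rfl fun ρ _ => ?_
            rw [map_mul, map_pow]
          rw [this, sum_mulChar_eq]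
          by_cases h : x ^ d = t
          · have h1 : x ^ d * t⁻¹ = 1 := by rw [h, mul_inv_cancel₀ ht]
            rw [if_pos h, if_pos h1]
            ring
          · have h1 : x ^ d * t⁻¹ ≠ 1 := by
              intro hc
              apply h
              field_simp at hc
              exact hc
            rw [if_neg h, if_neg h1, mul_zero, mul_zero]
      _ = ∑ ρ : MulChar F ℂ, ρ t⁻¹ * ∑ x : F, (χ * ρ ^ d) x := by
          rw [Finset.sum_comm]
          refine Finset.sum_congr rfl fun ρ _ => ?_
          rw [Finset.mul_sum]
          refine Finset.sum_congr rfl fun x _ => ?_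
          rw [MulChar.mul_apply, MulChar.pow_apply' ρ hd]
          ring
      _ = ∑ ρ ∈ Finset.univ.filter (fun ρ : MulChar F ℂ => χ * ρ ^ d = 1),
            ρ t⁻¹ * ((Fintype.card F - 1 : ℕ) : ℂ) := by
          rw [Finset.sum_filter]
          refine Finset.sum_congr rfl fun ρ _ => ?_
          by_cases h : χ * ρ ^ d = 1
          · rw [if_pos h, h]
            congr 1
            rw [MulChar.sum_one_eq_card_units, Fintype.card_units]
          · rw [if_neg h, MulChar.sum_eq_zero_of_ne_one h, mul_zero]
      _ = ((Fintype.card F - 1 : ℕ) : ℂ)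
            * ∑ ρ ∈ Finset.univ.filter (fun ρ : MulChar F ℂ => χ * ρ ^ d = 1), ρ⁻¹ t := by
          rw [Finset.mul_sum]
          refine Finset.sum_congr rfl fun ρ _ => ?_
          rw [MulChar.inv_apply']
          ring

/-- The number of characters `ρ` with `χ * ρ ^ d = 1` is at most `d`. -/
private lemma card_solutions_le (d : ℕ) (hd : d ≠ 0) (χ : MulChar F ℂ) :
    (Finset.univ.filter (fun ρ : MulChar F ℂ => χ * ρ ^ d = 1)).card ≤ d := by
  haveI := neZeroExp (F := F)
  set S := Finset.univ.filter (fun ρ : MulChar F ℂ => χ * ρ ^ d = 1) with hS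
  rcases S.eq_empty_or_nonempty with h | ⟨ρ₀, hρ₀⟩
  · rw [h]; simpa using Nat.zero_le d
  · obtain ⟨e⟩ := MulChar.mulEquiv_units F ℂ
    have hρ₀' : ρ₀ ^ d = χ⁻¹ := by
      have := (Finset.mem_filter.mp hρ₀).2
      exact eq_inv_of_mul_eq_one_left (by rw [mul_comm]; exact this)
    have hmem : ∀ ρ ∈ S, ((e ρ * (e ρ₀)⁻¹ : Fˣ) : F) ∈ (Polynomial.nthRoots d (1 : F)).toFinset := by
      intro ρ hρ
      have hρ' : ρ ^ d = χ⁻¹ := by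
        have := (Finset.mem_filter.mp hρ).2
        exact eq_inv_of_mul_eq_one_left (by rw [mul_comm]; exact this)
      rw [Multiset.mem_toFinset, Polynomial.mem_nthRoots (Nat.pos_of_ne_zero hd)]
      have : (e ρ * (e ρ₀)⁻¹) ^ d = 1 := by
        rw [mul_pow, inv_pow, ← map_pow, ← map_pow, hρ', hρ₀', mul_inv_cancel]
      calc ((e ρ * (e ρ₀)⁻¹ : Fˣ) : F) ^ d = (((e ρ * (e ρ₀)⁻¹) ^ d : Fˣ) : F) := by
            rw [Units.val_pow_eq_pow_val]
        _ = 1 := by rw [this, Units.val_one]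
    have hinj : Set.InjOn (fun ρ => ((e ρ * (e ρ₀)⁻¹ : Fˣ) : F)) S := by
      intro ρ₁ h₁ ρ₂ h₂ h
      exact e.injective (mul_right_cancel (Units.ext h))
    calc S.card ≤ (Polynomial.nthRoots d (1 : F)).toFinset.card :=
          Finset.card_le_card_of_injOn _ hmem hinj
      _ ≤ Multiset.card (Polynomial.nthRoots d (1 : F)) := Multiset.toFinset_card_le _
      _ ≤ d := Polynomial.card_nthRoots d 1

/-- Norm of a Gauss sum for a nontrivial character: exactly `√q`. -/
private lemma norm_gaussSum_eq {ρ : MulChar F ℂ} (hρ : ρ ≠ 1) {ψ : AddChar F ℂ}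
    (hψ : ψ.IsPrimitive) :
    ‖gaussSum ρ ψ‖ = Real.sqrt (Fintype.card F) := by
  have hchar : 0 < ringChar F := Nat.pos_of_ne_zero (CharP.ringChar_ne_zero_of_finite F)
  have hconj : gaussSum ρ⁻¹ ψ⁻¹ = (starRingEnd ℂ) (gaussSum ρ ψ) := by
    rw [gaussSum, gaussSum, map_sum]
    refine Finset.sum_congr rfl fun x _ => ?_
    rw [map_mul]
    congr 1
    · rw [← MulChar.star_apply' ρ x, RCLike.star_def]
    · rw [AddChar.starComp_apply hchar]
  have h2 := gaussSum_mul_gaussSum_eq_card hρ hψ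
  rw [hconj, Complex.mul_conj] at h2
  have h3 : Complex.normSq (gaussSum ρ ψ) = (Fintype.card F : ℝ) := by
    exact_mod_cast h2
  rw [Complex.norm_def, h3]

/-- Norm of a Gauss sum: at most `√q`. -/
private lemma norm_gaussSum_le (ρ : MulChar F ℂ) {ψ : AddChar F ℂ} (hψ : ψ.IsPrimitive) :
    ‖gaussSum ρ ψ‖ ≤ Real.sqrt (Fintype.card F) := by
  rcases eq_or_ne ρ (1 : MulChar F ℂ) with rfl | hρ
  · have hψne : ψ ≠ 1 := by
      intro h
      refine hψ (a := 1) one_ne_zero ?_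
      rw [h]
      ext x
      simp [AddChar.mulShift_apply]
    have : gaussSum 1 ψ = -1 := by
      rw [gaussSum]
      have h1 : ∀ x : F, (1 : MulChar F ℂ) x * ψ x = ψ x - (if x = 0 then 1 else 0) := by
        intro x
        rcases eq_or_ne x 0 with rfl | hx
        · simp [MulChar.map_nonunit (1 : MulChar F ℂ) (by simp : ¬ IsUnit (0 : F))]
        · rw [MulChar.one_apply (isUnit_iff_ne_zero.mpr hx), if_neg hx, one_mul, sub_zero]
      rw [Finset.sum_congr rfl fun x _ => h1 x, Finset.sum_sub_distrib,
        AddChar.sum_eq_zero_of_ne_one hψne, Finset.sum_ite_eq' Finset.univ (0 : F) fun _ => 1]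
      simp
    rw [this]
    simp only [norm_neg, norm_one]
    rw [show (1 : ℝ) = Real.sqrt 1 by simp]
    exact Real.sqrt_le_sqrt (by exact_mod_cast Fintype.card_pos)
  · exact le_of_eq (norm_gaussSum_eq hρ hψ)

/-- Weil-type bound for mixed character sums with `x ↦ ψ(c x^d) χ(x)`. -/
private lemma weil_bound {ψ : AddChar F ℂ} (hψ : ψ.IsPrimitive) (d : ℕ) (hd : d ≠ 0)
    {c : F} (hc : c ≠ 0) (χ : MulChar F ℂ) :
    ‖∑ x : F, ψ (c * x ^ d) * χ x‖ ≤ (d : ℝ) * Real.sqrt (Fintype.card F) := by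
  have hψc : (ψ.mulShift c).IsPrimitive := by
    refine AddChar.IsPrimitive.of_ne_one ?_
    exact hψ hc
  set S := Finset.univ.filter (fun ρ : MulChar F ℂ => χ * ρ ^ d = 1) with hS
  have key : ∑ x : F, ψ (c * x ^ d) * χ x = ∑ ρ ∈ S, gaussSum ρ⁻¹ (ψ.mulShift c) := by
    calc ∑ x : F, ψ (c * x ^ d) * χ x
        = ∑ x : F, ∑ t : F, (if x ^ d = t then ψ (c * t) * χ x else 0) := by
          refine Finset.sum_congr rfl fun x _ => ?_
          rw [Finset.sum_ite_eq Finset.univ (x ^ d) fun t => ψ (c * t) * χ x]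
          simp
      _ = ∑ t : F, ψ (c * t) * ∑ x : F, (if x ^ d = t then χ x else 0) := by
          rw [Finset.sum_comm]
          refine Finset.sum_congr rfl fun t _ => ?_
          rw [Finset.mul_sum]
          refine Finset.sum_congr rfl fun x _ => ?_
          rw [mul_ite, mul_zero]
      _ = ∑ t : F, ψ (c * t) * ∑ ρ ∈ S, ρ⁻¹ t := by
          refine Finset.sum_congr rfl fun t _ => ?_
          rw [fiber_eq d hd χ t]
      _ = ∑ ρ ∈ S, ∑ t : F, ρ⁻¹ t * (ψ.mulShift c) t := by
          simp_rw [Finset.mul_sum]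
          rw [Finset.sum_comm]
          refine Finset.sum_congr rfl fun ρ _ => ?_
          refine Finset.sum_congr rfl fun t _ => ?_
          rw [AddChar.mulShift_apply]
          ring
      _ = ∑ ρ ∈ S, gaussSum ρ⁻¹ (ψ.mulShift c) := rfl
  rw [key]
  calc ‖∑ ρ ∈ S, gaussSum ρ⁻¹ (ψ.mulShift c)‖
      ≤ ∑ ρ ∈ S, ‖gaussSum ρ⁻¹ (ψ.mulShift c)‖ := norm_sum_le _ _
    _ ≤ ∑ _ρ ∈ S, Real.sqrt (Fintype.card F) :=
        Finset.sum_le_sum fun ρ _ => norm_gaussSum_le ρ⁻¹ hψc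
    _ = (S.card : ℝ) * Real.sqrt (Fintype.card F) := by
        rw [Finset.sum_const, nsmul_eq_mul]
    _ ≤ (d : ℝ) * Real.sqrt (Fintype.card F) := by
        have := card_solutions_le d hd χ
        exact mul_le_mul_of_nonneg_right (by exact_mod_cast this) (Real.sqrt_nonneg _)

end Aux

/-- Bound for twisted sums of the quadratic character of a diagonal form,
with implied constant depending only on m. -/
theorem stmt12 (m : ℕ) (hm : 1 ≤ m) :
    ∃ C : ℝ, 0 < C ∧ ∀ (F : Type) [Field F] [Fintype F] [DecidableEq F],
      Odd (Fintype.card F) →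
      ∀ d : ℕ, 2 ≤ d → Nat.Coprime d (Fintype.card F) →
      ∀ a : Fin m → F, (∀ i, a i ≠ 0) →
      ∀ χ : Fin m → MulChar F ℂ,
      ‖(∑ x : Fin m → F,
          ((quadraticChar F (∑ i, a i * (x i) ^ d) : ℤ) : ℂ) * ∏ i, χ i (x i))‖
        ≤ C * (d : ℝ) ^ m * (Fintype.card F : ℝ) ^ (((m : ℝ) + 1) / 2) := by
  refine ⟨1, one_pos, ?_⟩
  intro F _ _ _ hodd d hd2 _hcop a ha χ
  set q := Fintype.card F with hq
  have hd0 : d ≠ 0 := by omega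
  have hq1 : 1 < q := Fintype.one_lt_card
  -- the quadratic character, valued in ℂ
  set η : MulChar F ℂ := (quadraticChar F).ringHomComp (Int.castRingHom ℂ) with hη
  have hηapp : ∀ t : F, ((quadraticChar F t : ℤ) : ℂ) = η t := fun t => rfl
  have hchar2 : ringChar F ≠ 2 := by
    intro h
    have := FiniteField.even_card_iff_char_two.mp h
    rw [Nat.odd_iff] at hodd
    omega
  have hηne : η ≠ 1 :=
    (MulChar.ringHomComp_ne_one_iff (Int.cast_injective (α := ℂ))).mpr
      (quadraticChar_ne_one hchar2)
  -- a primitive additive character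
  set ψ : AddChar F ℂ := AddChar.FiniteField.primitiveChar_to_Complex F with hψdef
  have hψ : ψ.IsPrimitive := AddChar.FiniteField.primitiveChar_to_Complex_isPrimitive F
  set g : ℂ := gaussSum η ψ with hg
  have hgnorm : ‖g‖ = Real.sqrt q := norm_gaussSum_eq hηne hψ
  have hsq : (0:ℝ) < Real.sqrt q := Real.sqrt_pos.mpr (by positivity)
  -- Gauss sum inversion: g * η t = ∑ y, η y * ψ (t * y)
  have hinv : ∀ t : F, g * η t = ∑ y : F, η y * ψ (t * y) := by
    intro t
    rcases eq_or_ne t 0 with rfl | ht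
    · simp only [MulChar.map_zero, mul_zero, zero_mul, AddChar.map_zero_eq_one, mul_one]
      exact (MulChar.sum_eq_zero_of_ne_one hηne).symm
    · have hmain : ∑ y : F, η y * ψ (t * y) = gaussSum η (ψ.mulShift t) := by
        rw [gaussSum]
        refine Finset.sum_congr rfl fun y _ => ?_
        rw [AddChar.mulShift_apply]
      rw [hmain]
      have hshift := gaussSum_mulShift η ψ (Units.mk0 t ht)
      simp only [Units.val_mk0] at hshift
      have hη2 : η t * η t = 1 := by
        have := quadraticChar_sq_one (F := F) ht
        calc η t * η t = (((quadraticChar F t : ℤ) : ℂ)) * (((quadraticChar F t : ℤ) : ℂ)) := rfl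
          _ = (((quadraticChar F t ^ 2 : ℤ) : ℂ)) := by push_cast; ring
          _ = 1 := by exact_mod_cast this
      calc g * η t = (η t * gaussSum η (ψ.mulShift t)) * η t := by rw [hshift]
        _ = (η t * η t) * gaussSum η (ψ.mulShift t) := by ring
        _ = gaussSum η (ψ.mulShift t) := by rw [hη2, one_mul]
  -- the sum in question
  set S : ℂ := ∑ x : Fin m → F,
      ((quadraticChar F (∑ i, a i * (x i) ^ d) : ℤ) : ℂ) * ∏ i, χ i (x i) with hSdef
  -- main identity: g * S = ∑ y, η y * ∏ i, (∑ z, ψ (y * a i * z ^ d) * χ i z)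
  have main : g * S = ∑ y : F, η y * ∏ i, (∑ z : F, ψ (y * a i * z ^ d) * χ i z) := by
    calc g * S = ∑ x : Fin m → F,
          (g * η (∑ i, a i * (x i) ^ d)) * ∏ i, χ i (x i) := by
          rw [hSdef, Finset.mul_sum]
          refine Finset.sum_congr rfl fun x _ => ?_
          rw [hηapp]
          ring
      _ = ∑ x : Fin m → F, ∑ y : F,
            η y * ψ ((∑ i, a i * (x i) ^ d) * y) * ∏ i, χ i (x i) := by
          refine Finset.sum_congr rfl fun x _ => ?_
          rw [hinv, Finset.sum_mul]
      _ = ∑ y : F, η y * ∑ x : Fin m → F, ∏ i, (ψ (y * a i * (x i) ^ d) * χ i (x i)) := by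
          rw [Finset.sum_comm]
          refine Finset.sum_congr rfl fun y _ => ?_
          rw [Finset.mul_sum]
          refine Finset.sum_congr rfl fun x _ => ?_
          have hsum : (∑ i, a i * (x i) ^ d) * y = ∑ i, y * a i * (x i) ^ d := by
            rw [Finset.sum_mul]
            exact Finset.sum_congr rfl fun i _ => by ring
          rw [hsum, ac_map_sum ψ, Finset.prod_mul_distrib]
          ring
      _ = ∑ y : F, η y * ∏ i, (∑ z : F, ψ (y * a i * z ^ d) * χ i z) := by
          refine Finset.sum_congr rfl fun y _ => ?_
          congr 1
          rw [Finset.prod_univ_sum (fun _ => (Finset.univ : Finset F))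
            (fun i z => ψ (y * a i * z ^ d) * χ i z), Fintype.piFinset_univ]
  -- norm bound on the right-hand side
  set B : ℝ := ((d : ℝ) * Real.sqrt q) ^ m with hB
  have hBnn : 0 ≤ B := by positivity
  have hbound : ‖g * S‖ ≤ ((q : ℝ) - 1) * B := by
    rw [main]
    calc ‖∑ y : F, η y * ∏ i, (∑ z : F, ψ (y * a i * z ^ d) * χ i z)‖
        ≤ ∑ y : F, ‖η y * ∏ i, (∑ z : F, ψ (y * a i * z ^ d) * χ i z)‖ := norm_sum_le _ _
      _ ≤ ∑ y : F, (if y = (0:F) then 0 else B) := by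
          refine Finset.sum_le_sum fun y _ => ?_
          by_cases hy0 : y = 0
          · subst hy0
            rw [if_pos rfl, MulChar.map_zero, zero_mul, norm_zero]
          · rw [if_neg hy0, norm_mul]
            have hηy : ‖η y‖ ≤ 1 := by
              rcases (quadraticChar_isQuadratic F) y with h | h | h <;>
                · have hh : η y = (((quadraticChar F y : ℤ)) : ℂ) := rfl
                  rw [hh, h] <;> norm_num
            have hprod : ‖∏ i, (∑ z : F, ψ (y * a i * z ^ d) * χ i z)‖ ≤ B := by
              rw [norm_prod, hB]
              calc ∏ i, ‖∑ z : F, ψ (y * a i * z ^ d) * χ i z‖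
                  ≤ ∏ _i : Fin m, ((d:ℝ) * Real.sqrt q) :=
                    Finset.prod_le_prod (fun i _ => norm_nonneg _) fun i _ =>
                      weil_bound hψ d hd0 (mul_ne_zero hy0 (ha i)) (χ i)
                _ = ((d:ℝ) * Real.sqrt q) ^ m := by
                    rw [Finset.prod_const, Finset.card_univ, Fintype.card_fin]
            calc ‖η y‖ * ‖∏ i, (∑ z : F, ψ (y * a i * z ^ d) * χ i z)‖
                ≤ 1 * B := mul_le_mul hηy hprod (norm_nonneg _) one_pos.le
              _ = B := one_mul B
      _ = ∑ y : F, (B - (if y = (0:F) then B else 0)) := by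
          refine Finset.sum_congr rfl fun y _ => ?_
          split_ifs <;> ring
      _ = ((q : ℝ) - 1) * B := by
          rw [Finset.sum_sub_distrib, Finset.sum_const, Finset.card_univ,
            Finset.sum_ite_eq' Finset.univ (0 : F) fun _ => B]
          simp only [Finset.mem_univ, if_true, nsmul_eq_mul, ← hq]
          ring
  -- conclude
  rw [norm_mul, hgnorm] at hbound
  have hS : ‖S‖ ≤ ((q : ℝ) - 1) * B / Real.sqrt q := by
    rw [le_div_iff₀ hsq]
    calc ‖S‖ * Real.sqrt q = Real.sqrt q * ‖S‖ := by ring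
      _ ≤ ((q : ℝ) - 1) * B := hbound
  refine le_trans (show ‖S‖ ≤ ((q : ℝ) - 1) * B / Real.sqrt q from hS) ?_
  -- arithmetic: ((q-1) * (d √q)^m) / √q ≤ d^m * q^((m+1)/2)
  rw [div_le_iff₀ hsq, hB, mul_pow]
  have hq0 : (0:ℝ) < (q:ℝ) := by positivity
  have hsqrt_rpow : Real.sqrt (q:ℝ) = (q:ℝ) ^ ((1:ℝ)/2) := Real.sqrt_eq_rpow _
  have hsqpow : (Real.sqrt (q:ℝ)) ^ m = (q:ℝ) ^ ((m:ℝ)/2) := by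
    rw [hsqrt_rpow, ← Real.rpow_natCast ((q:ℝ) ^ ((1:ℝ)/2)) m, ← Real.rpow_mul hq0.le]
    congr 1
    ring
  rw [hsqpow, hsqrt_rpow]
  have hrpow_mul : (q:ℝ) ^ (((m:ℝ) + 1) / 2) * (q:ℝ) ^ ((1:ℝ)/2)
      = (q:ℝ) * (q:ℝ) ^ ((m:ℝ)/2) := by
    rw [← Real.rpow_add hq0]
    have hexp : ((m:ℝ) + 1) / 2 + 1/2 = (m:ℝ)/2 + 1 := by ring
    rw [hexp, Real.rpow_add hq0, Real.rpow_one]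
    ring
  rw [one_mul, mul_assoc, hrpow_mul]
  have h1 : ((q:ℝ) - 1) ≤ (q:ℝ) := by linarith
  have h2 : (0:ℝ) ≤ (d:ℝ) ^ m * (q:ℝ) ^ ((m:ℝ)/2) := by positivity
  calc ((q:ℝ) - 1) * ((d:ℝ) ^ m * (q:ℝ) ^ ((m:ℝ)/2))
      ≤ (q:ℝ) * ((d:ℝ) ^ m * (q:ℝ) ^ ((m:ℝ)/2)) := mul_le_mul_of_nonneg_right h1 h2
    _ = (d:ℝ) ^ m * ((q:ℝ) * (q:ℝ) ^ ((m:ℝ)/2)) := by ring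
end

section
/- Let $\vartheta \geq 2$ be an integer, $m \geq 1$, $a_1, b_1, \ldots, a_m, b_m \in \mathbb{Z}$, and let $\ell, r$ be distinct odd primes with $t_\ell = \tau_\ell(\vartheta)$, $t_r = \tau_r(\vartheta)$, $t = \tau_{\ell r}(\vartheta)$, satisfying $\gcd(\ell r, a_1 \cdots a_m \vartheta) = \gcd(t_\ell, t_r) = 1$. Define $b_{i,\ell}, b_{i,r}$ by $b_{i,\ell} t_r + b_{i,r} t_\ell \equiv b_i \pmod{t}$ with $0 \leq b_{i,\ell} < t_\ell$, $0 \leq b_{i,r} < t_r$. Then $S = S_\ell \cdot S_r$, where $S = \sum_{k_1, \ldots, k_m = 1}^{t} \left(\frac{a_1 \vartheta^{k_1} + \cdots + a_m \vartheta^{k_m}}{\ell r}\right) e\left(\frac{b_1 k_1 + \cdots + b_m k_m}{t}\right)$, $S_\ell = \sum_{x_1, \ldots, x_m = 1}^{t_\ell} \left(\frac{a_1 \vartheta^{x_1} + \cdots + a_m \vartheta^{x_m}}{\ell}\right) e\left(\frac{b_{1,\ell} x_1 + \cdots + b_{m,\ell} x_m}{t_\ell}\right)$, and $S_r$ is defined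 analogously modulo $r$. -/
/-- CRT-splitting multiplicativity of hybrid Jacobi-symbol/exponential sums
with exponential-function arguments. -/
theorem stmt13 (θ : ℕ) (hθ : 2 ≤ θ) (m : ℕ) (hm : 1 ≤ m)
    (a b : Fin m → ℤ) (ℓ r : ℕ) (hℓ : ℓ.Prime) (hr : r.Prime)
    (hℓo : Odd ℓ) (hro : Odd r) (hne : ℓ ≠ r)
    (tℓ tr t : ℕ)
    (htℓ : tℓ = orderOf (θ : ZMod ℓ)) (htr : tr = orderOf (θ : ZMod r))
    (ht : t = orderOf (θ : ZMod (ℓ * r)))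
    (hcop : IsCoprime ((ℓ * r : ℕ) : ℤ) ((θ : ℤ) * ∏ i, a i))
    (hcopt : Nat.Coprime tℓ tr)
    (bl br : Fin m → ℕ)
    (hbl : ∀ i, bl i < tℓ) (hbr : ∀ i, br i < tr)
    (hcong : ∀ i, ((bl i : ℤ) * tr + (br i : ℤ) * tℓ) ≡ b i [ZMOD (t : ℤ)]) :
    (∑ k : Fin m → Fin t,
        (jacobiSym (∑ i, a i * (θ : ℤ) ^ ((k i : ℕ) + 1)) (ℓ * r) : ℂ) *
          Complex.exp (2 * Real.pi * Complex.I *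
            (∑ i, (b i : ℂ) * (((k i : ℕ) : ℂ) + 1)) / (t : ℂ)))
      = (∑ x : Fin m → Fin tℓ,
          (jacobiSym (∑ i, a i * (θ : ℤ) ^ ((x i : ℕ) + 1)) ℓ : ℂ) *
            Complex.exp (2 * Real.pi * Complex.I *
              (∑ i, (bl i : ℂ) * (((x i : ℕ) : ℂ) + 1)) / (tℓ : ℂ)))
        * (∑ y : Fin m → Fin tr,
          (jacobiSym (∑ i, a i * (θ : ℤ) ^ ((y i : ℕ) + 1)) r : ℂ) *
            Complex.exp (2 * Real.pi * Complex.I *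
              (∑ i, (br i : ℂ) * (((y i : ℕ) : ℂ) + 1)) / (tr : ℂ))) := by
  classical
  have hℓr : Nat.Coprime ℓ r := (Nat.coprime_primes hℓ hr).mpr hne
  haveI : NeZero ℓ := ⟨hℓ.pos.ne'⟩
  haveI : NeZero r := ⟨hr.pos.ne'⟩
  haveI : NeZero (ℓ * r) := ⟨Nat.mul_ne_zero hℓ.pos.ne' hr.pos.ne'⟩
  have hθint : IsCoprime ((ℓ * r : ℕ) : ℤ) (θ : ℤ) := hcop.of_mul_right_left
  have hθn : Nat.Coprime θ (ℓ * r) := (Nat.isCoprime_iff_coprime.mp hθint).symm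
  have hθℓ : Nat.Coprime θ ℓ := Nat.Coprime.coprime_dvd_right (dvd_mul_right ℓ r) hθn
  have hθr : Nat.Coprime θ r := Nat.Coprime.coprime_dvd_right (dvd_mul_left r ℓ) hθn
  have hpos : ∀ (n : ℕ) [NeZero n], Nat.Coprime θ n → 0 < orderOf ((θ : ℕ) : ZMod n) := by
    intro n _ h
    obtain ⟨u, hu⟩ := (ZMod.isUnit_iff_coprime θ n).mpr h
    rw [← hu, orderOf_units]
    exact orderOf_pos u
  have htℓ0 : 0 < tℓ := htℓ ▸ hpos ℓ hθℓ
  have htr0 : 0 < tr := htr ▸ hpos r hθr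
  have ht0 : 0 < t := ht ▸ hpos (ℓ * r) hθn
  -- t = tℓ * tr
  have htt : t = tℓ * tr := by
    let e := ZMod.chineseRemainder hℓr
    have h1 := orderOf_injective e.toRingHom.toMonoidHom e.injective ((θ : ℕ) : ZMod (ℓ * r))
    have h2 : e.toRingHom.toMonoidHom ((θ : ℕ) : ZMod (ℓ * r))
        = (((θ : ℕ) : ZMod ℓ), ((θ : ℕ) : ZMod r)) := by
      simp [Prod.ext_iff]
    rw [h2] at h1
    rw [ht, ← h1, Prod.orderOf]
    simp only [← htℓ, ← htr]
    exact hcopt.lcm_eq_mul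
  -- jacobi part: reduction of exponents mod the order
  have hjac : ∀ (p tp : ℕ), tp = orderOf ((θ : ℕ) : ZMod p) →
      ∀ K : Fin m → Fin t,
      jacobiSym (∑ i, a i * (θ : ℤ) ^ ((K i : ℕ) + 1)) p
        = jacobiSym (∑ i, a i * (θ : ℤ) ^ ((K i : ℕ) % tp + 1)) p := by
    intro p tp htp K
    apply jacobiSym.mod_left'
    have hz : ((∑ i, a i * (θ : ℤ) ^ ((K i : ℕ) + 1) : ℤ) : ZMod p)
        = ((∑ i, a i * (θ : ℤ) ^ ((K i : ℕ) % tp + 1) : ℤ) : ZMod p) := by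
      push_cast
      refine Finset.sum_congr rfl fun i _ => ?_
      congr 1
      subst htp
      have hmod : ((K i : ℕ) % orderOf ((θ : ℕ) : ZMod p) + 1) % orderOf ((θ : ℕ) : ZMod p)
          = ((K i : ℕ) + 1) % orderOf ((θ : ℕ) : ZMod p) :=
        (Nat.mod_modEq (K i : ℕ) _).add_right 1
      calc ((θ : ℕ) : ZMod p) ^ ((K i : ℕ) + 1)
          = ((θ : ℕ) : ZMod p) ^ (((K i : ℕ) + 1) % orderOf ((θ : ℕ) : ZMod p)) :=
            (pow_mod_orderOf _ _).symm
        _ = ((θ : ℕ) : ZMod p) ^ (((K i : ℕ) % orderOf ((θ : ℕ) : ZMod p) + 1)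
              % orderOf ((θ : ℕ) : ZMod p)) := by rw [hmod]
        _ = ((θ : ℕ) : ZMod p) ^ ((K i : ℕ) % orderOf ((θ : ℕ) : ZMod p) + 1) :=
            pow_mod_orderOf _ _
    exact (ZMod.intCast_eq_intCast_iff _ _ _).mp hz
  -- exponential part
  have htℓC : (tℓ : ℂ) ≠ 0 := Nat.cast_ne_zero.mpr htℓ0.ne'
  have htrC : (tr : ℂ) ≠ 0 := Nat.cast_ne_zero.mpr htr0.ne'
  have httC : (t : ℂ) = (tℓ : ℂ) * tr := by rw [htt]; push_cast; ring
  have httZ : (t : ℤ) = (tℓ : ℤ) * tr := by rw [htt]; push_cast; ring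
  have hexp : ∀ K : Fin m → Fin t,
      Complex.exp (2 * Real.pi * Complex.I *
          (∑ i, (b i : ℂ) * (((K i : ℕ) : ℂ) + 1)) / (t : ℂ))
        = Complex.exp (2 * Real.pi * Complex.I *
            (∑ i, (bl i : ℂ) * ((((K i : ℕ) % tℓ : ℕ) : ℂ) + 1)) / (tℓ : ℂ))
          * Complex.exp (2 * Real.pi * Complex.I *
            (∑ i, (br i : ℂ) * ((((K i : ℕ) % tr : ℕ) : ℂ) + 1)) / (tr : ℂ)) := by
    intro K
    have hdvd : ∀ i, ∃ c : ℤ,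
        b i * ((K i : ℕ) + 1) - (bl i : ℤ) * (((K i : ℕ) % tℓ : ℕ) + 1) * tr
          - (br i : ℤ) * (((K i : ℕ) % tr : ℕ) + 1) * tℓ = (t : ℤ) * c := by
      intro i
      obtain ⟨u, hu⟩ := (hcong i).dvd
      obtain ⟨s, hs⟩ := Int.dvd_self_sub_of_emod_eq
        ((Int.natCast_mod (K i : ℕ) tℓ).symm :
          ((K i : ℕ) : ℤ) % (tℓ : ℤ) = (((K i : ℕ) % tℓ : ℕ) : ℤ))
      obtain ⟨w, hw⟩ := Int.dvd_self_sub_of_emod_eq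
        ((Int.natCast_mod (K i : ℕ) tr).symm :
          ((K i : ℕ) : ℤ) % (tr : ℤ) = (((K i : ℕ) % tr : ℕ) : ℤ))
      refine ⟨u * (((K i : ℕ) : ℤ) + 1) + (bl i : ℤ) * s + (br i : ℤ) * w, ?_⟩
      rw [httZ]
      linear_combination (((K i : ℕ) : ℤ) + 1) * hu + (bl i : ℤ) * (tr : ℤ) * hs
        + (br i : ℤ) * (tℓ : ℤ) * hw + ((((K i : ℕ) : ℤ) + 1) * u) * httZ
    choose c hc using hdvd
    rw [← Complex.exp_add, Complex.exp_eq_exp_iff_exists_int]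
    refine ⟨∑ i, c i, ?_⟩
    have expand : ∀ (B : Fin m → ℂ) (d : ℂ),
        2 * Real.pi * Complex.I * (∑ i, B i) / d = ∑ i, 2 * Real.pi * Complex.I * B i / d := by
      intro B d
      rw [Finset.mul_sum, Finset.sum_div]
    rw [expand, expand, expand]
    push_cast
    rw [Finset.sum_mul, ← Finset.sum_add_distrib, ← Finset.sum_add_distrib]
    refine Finset.sum_congr rfl fun i _ => ?_
    have h5 := hc i
    set A := (K i : ℕ) % tℓ with hA
    set B := (K i : ℕ) % tr with hB
    have hcC := congrArg (fun z : ℤ => (z : ℂ)) h5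
    push_cast at hcC
    rw [httC] at hcC ⊢
    field_simp
    linear_combination hcC
  -- the CRT bijection on exponent tuples
  let Φ : (Fin m → Fin t) → ((Fin m → Fin tℓ) × (Fin m → Fin tr)) :=
    fun K => (fun i => ⟨(K i : ℕ) % tℓ, Nat.mod_lt _ htℓ0⟩,
              fun i => ⟨(K i : ℕ) % tr, Nat.mod_lt _ htr0⟩)
  have hΦbij : Function.Bijective Φ := by
    rw [Fintype.bijective_iff_injective_and_card]
    constructor
    · intro K K' h
      funext i
      have h1 : (K i : ℕ) % tℓ = (K' i : ℕ) % tℓ := by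
        have := congrArg (fun p => ((p.1 i : ℕ) : ℕ)) h
        simpa [Φ] using this
      have h2 : (K i : ℕ) % tr = (K' i : ℕ) % tr := by
        have := congrArg (fun p => ((p.2 i : ℕ) : ℕ)) h
        simpa [Φ] using this
      have h3 : (K i : ℕ) % t = (K' i : ℕ) % t := by
        have h4 := (Nat.modEq_and_modEq_iff_modEq_mul hcopt).mp ⟨h1, h2⟩
        rwa [← htt] at h4
      apply Fin.ext
      rwa [Nat.mod_eq_of_lt (K i).isLt, Nat.mod_eq_of_lt (K' i).isLt] at h3
    · simp only [Fintype.card_fun, Fintype.card_prod, Fintype.card_fin]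
      rw [htt, mul_pow]
  have key : ∀ K : Fin m → Fin t,
      (jacobiSym (∑ i, a i * (θ : ℤ) ^ ((K i : ℕ) + 1)) (ℓ * r) : ℂ) *
          Complex.exp (2 * Real.pi * Complex.I *
            (∑ i, (b i : ℂ) * (((K i : ℕ) : ℂ) + 1)) / (t : ℂ))
        = ((jacobiSym (∑ i, a i * (θ : ℤ) ^ (((Φ K).1 i : ℕ) + 1)) ℓ : ℂ) *
            Complex.exp (2 * Real.pi * Complex.I *
              (∑ i, (bl i : ℂ) * ((((Φ K).1 i : ℕ) : ℂ) + 1)) / (tℓ : ℂ)))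
          * ((jacobiSym (∑ i, a i * (θ : ℤ) ^ (((Φ K).2 i : ℕ) + 1)) r : ℂ) *
            Complex.exp (2 * Real.pi * Complex.I *
              (∑ i, (br i : ℂ) * ((((Φ K).2 i : ℕ) : ℂ) + 1)) / (tr : ℂ))) := by
    intro K
    have hΦ1 : ∀ i, ((Φ K).1 i : ℕ) = (K i : ℕ) % tℓ := fun i => rfl
    have hΦ2 : ∀ i, ((Φ K).2 i : ℕ) = (K i : ℕ) % tr := fun i => rfl
    simp only [hΦ1, hΦ2]
    rw [jacobiSym.mul_right, hjac ℓ tℓ htℓ K, hjac r tr htr K, hexp K]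
    push_cast
    ring
  calc (∑ k : Fin m → Fin t,
        (jacobiSym (∑ i, a i * (θ : ℤ) ^ ((k i : ℕ) + 1)) (ℓ * r) : ℂ) *
          Complex.exp (2 * Real.pi * Complex.I *
            (∑ i, (b i : ℂ) * (((k i : ℕ) : ℂ) + 1)) / (t : ℂ)))
      = ∑ p : (Fin m → Fin tℓ) × (Fin m → Fin tr),
          ((jacobiSym (∑ i, a i * (θ : ℤ) ^ ((p.1 i : ℕ) + 1)) ℓ : ℂ) *
            Complex.exp (2 * Real.pi * Complex.I *
              (∑ i, (bl i : ℂ) * (((p.1 i : ℕ) : ℂ) + 1)) / (tℓ : ℂ)))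
          * ((jacobiSym (∑ i, a i * (θ : ℤ) ^ ((p.2 i : ℕ) + 1)) r : ℂ) *
            Complex.exp (2 * Real.pi * Complex.I *
              (∑ i, (br i : ℂ) * (((p.2 i : ℕ) : ℂ) + 1)) / (tr : ℂ))) :=
        Fintype.sum_bijective Φ hΦbij _ _ key
    _ = _ := by
        rw [Finset.sum_mul_sum]
        exact Fintype.sum_prod_type _
end

section
/- Let $\vartheta \geq 2$ be an integer, $m \geq 1$, $a_1, b_1, \ldots, a_m, b_m \in \mathbb{Z}$, and let $\ell$ be a prime with $t_\ell = \tau_\ell(\vartheta)$ odd and $\gcd(\ell, a_1 \cdots a_m \vartheta) = 1$. Then $S_\ell = \sum_{x_1, \ldots, x_m = 1}^{t_\ell} \left(\frac{a_1 \vartheta^{x_1} + \cdots + a_m \vartheta^{x_m}}{\ell}\right) e\left(\frac{b_1 x_1 + \cdots + b_m x_m}{t_\ell}\right) = O(\ell^{(m+1)/2})$ in general, and $S_\ell = O(t_\ell \cdot \ell^{(m-1)/2})$ when $b_1 = \cdots = b_m = 0$, with implied constants depending only on $m$. -/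
open Finset Complex

namespace Aux14

noncomputable section

variable {ℓ : ℕ}

lemma abs_psi [NeZero ℓ] (x : ZMod ℓ) : ‖ZMod.stdAddChar x‖ = 1 := by
  rw [ZMod.stdAddChar_apply]; exact Circle.norm_coe _

lemma conj_psi [NeZero ℓ] (x : ZMod ℓ) :
    (starRingEnd ℂ) (ZMod.stdAddChar x) = ZMod.stdAddChar (-x) := by
  have h1 : ZMod.stdAddChar x * ZMod.stdAddChar (-x) = 1 := by
    rw [← AddChar.map_add_eq_mul, add_neg_cancel, AddChar.map_zero_eq_one]
  rw [← Complex.inv_eq_conj (abs_psi x), inv_eq_of_mul_eq_one_right h1]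

lemma sum_psi [NeZero ℓ] (v : ZMod ℓ) :
    ∑ c : ZMod ℓ, ZMod.stdAddChar (c * v) = if v = 0 then (ℓ : ℂ) else 0 := by
  have := AddChar.sum_mulShift (R := ZMod ℓ) (R' := ℂ) v (ZMod.isPrimitive_stdAddChar ℓ)
  rw [ZMod.card] at this
  rw [this]; split <;> simp

lemma psi_map_sum [NeZero ℓ] {ι : Type*} (s : Finset ι) (f : ι → ZMod ℓ) :
    ZMod.stdAddChar (∑ i ∈ s, f i) = ∏ i ∈ s, ZMod.stdAddChar (f i) := by
  induction s using Finset.cons_induction with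
  | empty => simp
  | cons i s hi ih => rw [Finset.sum_cons, Finset.prod_cons, AddChar.map_add_eq_mul, ih]

variable [Fact ℓ.Prime]

lemma pow_succ_inj {θ : ZMod ℓ} (hθ0 : θ ≠ 0) {n k : ℕ}
    (hn : n < orderOf θ) (hk : k < orderOf θ) (h : θ ^ (n+1) = θ ^ (k+1)) : n = k := by
  set u : (ZMod ℓ)ˣ := Units.mk0 θ hθ0 with hu
  have huv : (u : ZMod ℓ) = θ := rfl
  have hcoe : ∀ j : ℕ, ((u ^ j : (ZMod ℓ)ˣ) : ZMod ℓ) = θ ^ j := by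
    intro j; rw [Units.val_pow_eq_pow_val, huv]
  have hord : orderOf u = orderOf θ := by rw [← orderOf_units, huv]
  have h' : u ^ (n+1) = u ^ (k+1) := Units.ext (by rw [hcoe, hcoe]; exact h)
  rw [pow_eq_pow_iff_modEq, hord] at h'
  exact (Nat.ModEq.add_right_cancel' 1 h').eq_of_lt_of_lt hn hk

/-- The incomplete twisted exponential sum over the subgroup generated by `θ`. -/
def G [NeZero ℓ] (t : ℕ) (θ : ZMod ℓ) (E : ℕ → ℂ) (c : ZMod ℓ) : ℂ :=
  ∑ n ∈ Finset.range t, E (n+1) * ZMod.stdAddChar (c * θ ^ (n+1))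

lemma sum_sq_abs_G [NeZero ℓ] {t : ℕ} {θ : ZMod ℓ} (hθ0 : θ ≠ 0) (hord : orderOf θ = t)
    (E : ℕ → ℂ) (hE : ∀ n, ‖E n‖ = 1) :
    ∑ c : ZMod ℓ, (‖G t θ E c‖)^2 = ℓ * t := by
  have key : ((∑ c : ZMod ℓ, (‖G t θ E c‖)^2 : ℝ) : ℂ) = ((ℓ : ℂ) * t) := by
    push_cast
    calc ∑ c : ZMod ℓ, ((‖G t θ E c‖ : ℂ))^2
        = ∑ c : ZMod ℓ, G t θ E c * (starRingEnd ℂ) (G t θ E c) := by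
          refine Finset.sum_congr rfl fun c _ => ?_
          rw [Complex.mul_conj]
          norm_cast
          rw [← Complex.sq_norm]
      _ = ∑ c : ZMod ℓ, ∑ n ∈ Finset.range t, ∑ k ∈ Finset.range t,
            (E (n+1) * (starRingEnd ℂ) (E (k+1))) *
              ZMod.stdAddChar (c * (θ^(n+1) - θ^(k+1))) := by
          refine Finset.sum_congr rfl fun c _ => ?_
          rw [G, map_sum, Finset.sum_mul_sum]
          refine Finset.sum_congr rfl fun n _ => Finset.sum_congr rfl fun k _ => ?_
          rw [map_mul (starRingEnd ℂ), conj_psi,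
            show c * (θ^(n+1) - θ^(k+1)) = c * θ^(n+1) + -(c * θ^(k+1)) by ring,
            AddChar.map_add_eq_mul]
          ring
      _ = ∑ n ∈ Finset.range t, ∑ k ∈ Finset.range t,
            (E (n+1) * (starRingEnd ℂ) (E (k+1))) *
              ∑ c : ZMod ℓ, ZMod.stdAddChar (c * (θ^(n+1) - θ^(k+1))) := by
          rw [Finset.sum_comm]
          refine Finset.sum_congr rfl fun n _ => ?_
          rw [Finset.sum_comm]
          refine Finset.sum_congr rfl fun k _ => ?_
          rw [Finset.mul_sum]
      _ = ∑ n ∈ Finset.range t, (ℓ : ℂ) := by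
          refine Finset.sum_congr rfl fun n hn => ?_
          rw [Finset.sum_eq_single_of_mem n hn]
          · rw [sum_psi, if_pos (sub_self _)]
            have h1 : E (n+1) * (starRingEnd ℂ) (E (n+1)) = 1 := by
              rw [Complex.mul_conj]
              norm_cast
              rw [← Complex.sq_norm, hE, one_pow]
            rw [h1, one_mul]
          · intro k hk hkn
            rw [sum_psi, if_neg, mul_zero]
            intro hzero
            exact hkn (pow_succ_inj hθ0
              (by rw [hord]; exact Finset.mem_range.1 hn)
              (by rw [hord]; exact Finset.mem_range.1 hk)
              (sub_eq_zero.1 hzero)).symm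
      _ = (ℓ : ℂ) * t := by
          rw [Finset.sum_const, Finset.card_range, nsmul_eq_mul, mul_comm]
  exact_mod_cast key

lemma G_shift [NeZero ℓ] {t : ℕ} {θ : ZMod ℓ} (hord : orderOf θ = t)
    (E : ℕ → ℂ) (ε : ℂ) (hε0 : ε ≠ 0) (hstep : ∀ n, E (n+1) = ε * E n) (hεt : ε ^ t = 1)
    (c : ZMod ℓ) : G t θ E (c * θ) = ε⁻¹ * G t θ E c := by
  set h : ℕ → ℂ := fun n => E n * ZMod.stdAddChar (c * θ ^ (n+1)) with hh
  have hgen : ∀ s n, E (n + s) = ε ^ s * E n := by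
    intro s
    induction s with
    | zero => intro n; simp
    | succ s ih => intro n; rw [← Nat.add_assoc, hstep, ih, pow_succ]; ring
  have hθt : θ ^ t = 1 := by rw [← hord]; exact pow_orderOf_eq_one θ
  have hht : h t = h 0 := by
    simp only [hh]
    rw [show (t:ℕ) = 0 + t by omega, hgen, hεt, one_mul, pow_succ, zero_add, pow_one,
      hθt, one_mul]
  have h1 : G t θ E (c * θ) = ∑ n ∈ Finset.range t, h (n+1) := by
    rw [G]
    refine Finset.sum_congr rfl fun n _ => ?_
    simp only [hh]
    rw [show c * θ * θ ^ (n+1) = c * θ ^ (n+1+1) by rw [pow_succ]; ring]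
  have h2 : ∑ n ∈ Finset.range t, h (n+1) = ∑ n ∈ Finset.range t, h n := by
    calc ∑ n ∈ Finset.range t, h (n+1)
        = ∑ n ∈ Finset.range (t+1), h n - h 0 := by rw [Finset.sum_range_succ']; ring
      _ = (∑ n ∈ Finset.range t, h n + h t) - h 0 := by rw [Finset.sum_range_succ]
      _ = ∑ n ∈ Finset.range t, h n := by rw [hht]; ring
  have h3 : ∑ n ∈ Finset.range t, h n = ε⁻¹ * G t θ E c := by
    rw [G, Finset.mul_sum]
    refine Finset.sum_congr rfl fun n _ => ?_
    simp only [hh]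
    rw [hstep n, ← mul_assoc, ← mul_assoc, inv_mul_cancel₀ hε0, one_mul]
  rw [h1, h2, h3]

lemma abs_G_shift_pow [NeZero ℓ] {t : ℕ} {θ : ZMod ℓ} (hord : orderOf θ = t)
    (E : ℕ → ℂ) (ε : ℂ) (hεabs : ‖ε‖ = 1) (hstep : ∀ n, E (n+1) = ε * E n)
    (hεt : ε ^ t = 1) (c : ZMod ℓ) (k : ℕ) :
    ‖G t θ E (c * θ ^ k)‖ = ‖G t θ E c‖ := by
  have hε0 : ε ≠ 0 := by intro h; rw [h] at hεabs; simp at hεabs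
  induction k with
  | zero => simp
  | succ k ih =>
      rw [show c * θ ^ (k+1) = (c * θ ^ k) * θ by rw [pow_succ]; ring,
        G_shift hord E ε hε0 hstep hεt, norm_mul, norm_inv, hεabs]
      simpa using ih

lemma sq_abs_G_le [NeZero ℓ] {t : ℕ} {θ : ZMod ℓ} (hθ0 : θ ≠ 0) (hord : orderOf θ = t)
    (ht : 0 < t) (E : ℕ → ℂ) (hE : ∀ n, ‖E n‖ = 1)
    (ε : ℂ) (hεabs : ‖ε‖ = 1) (hstep : ∀ n, E (n+1) = ε * E n) (hεt : ε ^ t = 1)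
    {c : ZMod ℓ} (hc : c ≠ 0) : (‖G t θ E c‖)^2 ≤ ℓ := by
  have key : (t : ℝ) * (‖G t θ E c‖)^2 ≤ (ℓ : ℝ) * t := by
    have h1 : (t : ℝ) * (‖G t θ E c‖)^2
        = ∑ k ∈ Finset.range t, (‖G t θ E (c * θ ^ (k+1))‖)^2 := by
      rw [Finset.sum_congr rfl fun k _ => by
        rw [abs_G_shift_pow hord E ε hεabs hstep hεt c (k+1)]]
      rw [Finset.sum_const, Finset.card_range, nsmul_eq_mul]
    have h2 : ∑ k ∈ Finset.range t, (‖G t θ E (c * θ ^ (k+1))‖)^2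
        = ∑ c' ∈ (Finset.range t).image (fun k => c * θ ^ (k+1)),
            (‖G t θ E c'‖)^2 := by
      rw [Finset.sum_image]
      intro n hn k hk hnk
      exact pow_succ_inj hθ0 (by rw [hord]; exact Finset.mem_range.1 hn)
        (by rw [hord]; exact Finset.mem_range.1 hk) (mul_left_cancel₀ hc hnk)
    have h3 : ∑ c' ∈ (Finset.range t).image (fun k => c * θ ^ (k+1)),
            (‖G t θ E c'‖)^2 ≤ ∑ c' : ZMod ℓ, (‖G t θ E c'‖)^2 :=
      Finset.sum_le_sum_of_subset_of_nonneg (Finset.subset_univ _)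
        (fun _ _ _ => sq_nonneg _)
    rw [h1, h2]
    rw [sum_sq_abs_G hθ0 hord E hE] at h3
    exact h3
  have ht' : (0:ℝ) < t := by exact_mod_cast ht
  nlinarith [key]

lemma abs_G_le [NeZero ℓ] {t : ℕ} {θ : ZMod ℓ} (hθ0 : θ ≠ 0) (hord : orderOf θ = t)
    (ht : 0 < t) (E : ℕ → ℂ) (hE : ∀ n, ‖E n‖ = 1)
    (ε : ℂ) (hεabs : ‖ε‖ = 1) (hstep : ∀ n, E (n+1) = ε * E n) (hεt : ε ^ t = 1)
    {c : ZMod ℓ} (hc : c ≠ 0) : ‖G t θ E c‖ ≤ Real.sqrt ℓ := by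
  have h := sq_abs_G_le hθ0 hord ht E hE ε hεabs hstep hεt hc
  calc ‖G t θ E c‖ = Real.sqrt ((‖G t θ E c‖)^2) := by
        rw [Real.sqrt_sq (norm_nonneg _)]
    _ ≤ Real.sqrt ℓ := Real.sqrt_le_sqrt h

/-- The complex-valued quadratic character mod `ℓ`. -/
def χℓ (ℓ : ℕ) [Fact ℓ.Prime] : MulChar (ZMod ℓ) ℂ :=
  (quadraticChar (ZMod ℓ)).ringHomComp (Int.castRingHom ℂ)

def gℓ (ℓ : ℕ) [Fact ℓ.Prime] [NeZero ℓ] : ℂ := gaussSum (χℓ ℓ) ZMod.stdAddChar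

lemma chi_apply (s : ZMod ℓ) : χℓ ℓ s = ((quadraticChar (ZMod ℓ) s : ℤ) : ℂ) := rfl

lemma chi_ne_one (hℓ2 : ℓ ≠ 2) : χℓ ℓ ≠ 1 := by
  have h2 : ringChar (ZMod ℓ) ≠ 2 := by rw [ZMod.ringChar_zmod_n]; exact hℓ2
  exact (MulChar.ringHomComp_ne_one_iff (fun a b h => by
    simpa using congrArg Complex.re h)).mpr (quadraticChar_ne_one h2)

lemma chi_quad : (χℓ ℓ).IsQuadratic := (quadraticChar_isQuadratic _).comp _

lemma chi_ne_zero {s : ZMod ℓ} (hs : s ≠ 0) : χℓ ℓ s ≠ 0 := by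
  rw [chi_apply]
  exact_mod_cast (quadraticChar_eq_zero_iff.not.mpr hs : quadraticChar (ZMod ℓ) s ≠ 0)

lemma chi_mul_self {s : ZMod ℓ} (hs : s ≠ 0) : χℓ ℓ s * χℓ ℓ s = 1 := by
  rcases chi_quad (ℓ := ℓ) s with h | h | h
  · exact absurd h (chi_ne_zero hs)
  · rw [h]; ring
  · rw [h]; ring

lemma abs_chi_le_one (s : ZMod ℓ) : ‖χℓ ℓ s‖ ≤ 1 := by
  rcases chi_quad (ℓ := ℓ) s with h | h | h <;> rw [h] <;> simp

lemma chi_zero : χℓ ℓ (0 : ZMod ℓ) = 0 := by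
  haveI : Nontrivial (ZMod ℓ) := by
    haveI hp := Fact.out (p := ℓ.Prime)
    exact ZMod.nontrivial_iff.mpr hp.ne_one
  exact MulChar.map_zero _

lemma gauss_inv [NeZero ℓ] (hℓ2 : ℓ ≠ 2) (s : ZMod ℓ) :
    ∑ c : ZMod ℓ, χℓ ℓ c * ZMod.stdAddChar (c * s) = χℓ ℓ s * gℓ ℓ := by
  rcases eq_or_ne s 0 with rfl | hs
  · simp only [mul_zero, AddChar.map_zero_eq_one, mul_one]
    rw [MulChar.sum_eq_zero_of_ne_one (chi_ne_one hℓ2), chi_zero, zero_mul]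
  · set u : (ZMod ℓ)ˣ := Units.mk0 s hs with hu
    have huv : (u : ZMod ℓ) = s := rfl
    have h := gaussSum_mulShift (χℓ ℓ) (ZMod.stdAddChar (N := ℓ)) u
    have h2 : gaussSum (χℓ ℓ) (AddChar.mulShift ZMod.stdAddChar (u : ZMod ℓ))
        = ∑ c : ZMod ℓ, χℓ ℓ c * ZMod.stdAddChar (c * s) := by
      rw [gaussSum]
      refine Finset.sum_congr rfl fun c _ => ?_
      rw [AddChar.mulShift_apply, huv, mul_comm s c]
    rw [h2, huv] at h
    calc ∑ c : ZMod ℓ, χℓ ℓ c * ZMod.stdAddChar (c * s)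
        = (χℓ ℓ s * χℓ ℓ s) * (∑ c : ZMod ℓ, χℓ ℓ c * ZMod.stdAddChar (c * s)) := by
          rw [chi_mul_self hs, one_mul]
      _ = χℓ ℓ s * gℓ ℓ := by rw [mul_assoc, h]; rfl

lemma abs_gauss [NeZero ℓ] (hℓ2 : ℓ ≠ 2) : ‖gℓ ℓ‖ = Real.sqrt ℓ := by
  have hsq : gℓ ℓ ^ 2 = χℓ ℓ (-1 : ZMod ℓ) * (Fintype.card (ZMod ℓ) : ℂ) :=
    gaussSum_sq (chi_ne_one hℓ2) chi_quad (ZMod.isPrimitive_stdAddChar ℓ)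
  have habs1 : ‖χℓ ℓ (-1 : ZMod ℓ)‖ = 1 := by
    have h1 : χℓ ℓ (-1 : ZMod ℓ) * χℓ ℓ (-1 : ZMod ℓ) = 1 := by
      apply chi_mul_self
      intro h
      haveI : Nontrivial (ZMod ℓ) := by
        haveI hp := Fact.out (p := ℓ.Prime)
        exact ZMod.nontrivial_iff.mpr hp.ne_one
      exact one_ne_zero (neg_eq_zero.mp h)
    have h2 := congrArg (‖·‖) h1
    rw [norm_mul, norm_one] at h2
    nlinarith [norm_nonneg (χℓ ℓ (-1 : ZMod ℓ))]
  have h2 : (‖gℓ ℓ‖)^2 = (ℓ : ℝ) := by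
    have h3 := congrArg (‖·‖) hsq
    rw [norm_pow, norm_mul, habs1, one_mul, ZMod.card] at h3
    rw [h3]
    simp
  rw [← h2, Real.sqrt_sq (norm_nonneg _)]

def Efun (t : ℕ) (b : ℤ) (n : ℕ) : ℂ :=
  Complex.exp (2 * Real.pi * Complex.I * b * n / t)

def eps (t : ℕ) (b : ℤ) : ℂ := Complex.exp (2 * Real.pi * Complex.I * b / t)

lemma abs_Efun (t : ℕ) (b : ℤ) (n : ℕ) : ‖Efun t b n‖ = 1 := by
  rw [Efun, show 2 * (Real.pi : ℂ) * Complex.I * b * n / t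
      = ((2 * Real.pi * b * n / t : ℝ) : ℂ) * Complex.I by push_cast; ring]
  exact Complex.norm_exp_ofReal_mul_I _

lemma abs_eps (t : ℕ) (b : ℤ) : ‖eps t b‖ = 1 := by
  rw [eps, show 2 * (Real.pi : ℂ) * Complex.I * b / t
      = ((2 * Real.pi * b / t : ℝ) : ℂ) * Complex.I by push_cast; ring]
  exact Complex.norm_exp_ofReal_mul_I _

lemma Efun_step (t : ℕ) (b : ℤ) (n : ℕ) : Efun t b (n + 1) = eps t b * Efun t b n := by
  rw [Efun, Efun, eps, ← Complex.exp_add]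
  congr 1
  push_cast
  ring

lemma eps_pow (t : ℕ) (ht : t ≠ 0) (b : ℤ) : eps t b ^ t = 1 := by
  rw [eps, ← Complex.exp_nat_mul]
  have htC : (t : ℂ) ≠ 0 := Nat.cast_ne_zero.mpr ht
  rw [show (t : ℂ) * (2 * Real.pi * Complex.I * b / t) = b * (2 * Real.pi * Complex.I) by
    field_simp]
  exact Complex.exp_int_mul_two_pi_mul_I b

lemma jacobi_chi (z : ℤ) :
    ((jacobiSym z ℓ : ℤ) : ℂ) = χℓ ℓ ((z : ZMod ℓ)) := by
  rw [← jacobiSym.legendreSym.to_jacobiSym, legendreSym, chi_apply]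

lemma abs_exp_term (t : ℕ) {m : ℕ} (b : Fin m → ℤ) (x : Fin m → Fin t) :
    ‖Complex.exp (2 * Real.pi * Complex.I *
      (∑ i, (b i : ℂ) * (((x i : ℕ) : ℂ) + 1)) / (t : ℂ))‖ = 1 := by
  have hW : (∑ i, (b i : ℂ) * (((x i : ℕ) : ℂ) + 1))
      = ((∑ i, b i * ((x i : ℕ) + 1) : ℤ) : ℂ) := by push_cast; ring
  rw [hW, show 2 * (Real.pi : ℂ) * Complex.I * ((∑ i, b i * ((x i : ℕ) + 1) : ℤ) : ℂ) / t
      = ((2 * Real.pi * (∑ i, b i * ((x i : ℕ) + 1) : ℤ) / t : ℝ) : ℂ) * Complex.I by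
        push_cast; ring]
  exact Complex.norm_exp_ofReal_mul_I _

lemma abs_jacobi_le (z : ℤ) (n : ℕ) : ‖((jacobiSym z n : ℤ) : ℂ)‖ ≤ 1 := by
  rcases jacobiSym.trichotomy z n with h | h | h <;> rw [h] <;> simp

end

end Aux14

open Aux14 in
set_option maxHeartbeats 2000000 in
/-- Bounds for complete hybrid Legendre-symbol/exponential sums with
exponential-function arguments, constants depending only on m. -/
theorem stmt14 (m : ℕ) (hm : 1 ≤ m) :
    ∃ C : ℝ, 0 < C ∧ ∀ (θ : ℕ), 2 ≤ θ → ∀ (a b : Fin m → ℤ) (ℓ tℓ : ℕ),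
      ℓ.Prime → tℓ = orderOf (θ : ZMod ℓ) → Odd tℓ →
      IsCoprime ((ℓ : ℤ)) ((θ : ℤ) * ∏ i, a i) →
      (‖∑ x : Fin m → Fin tℓ,
          (jacobiSym (∑ i, a i * (θ : ℤ) ^ ((x i : ℕ) + 1)) ℓ : ℂ) *
            Complex.exp (2 * Real.pi * Complex.I *
              (∑ i, (b i : ℂ) * (((x i : ℕ) : ℂ) + 1)) / (tℓ : ℂ))‖
        ≤ C * (ℓ : ℝ) ^ (((m : ℝ) + 1) / 2)) ∧
      ((∀ i, b i = 0) →
        ‖∑ x : Fin m → Fin tℓ,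
          (jacobiSym (∑ i, a i * (θ : ℤ) ^ ((x i : ℕ) + 1)) ℓ : ℂ) *
            Complex.exp (2 * Real.pi * Complex.I *
              (∑ i, (b i : ℂ) * (((x i : ℕ) : ℂ) + 1)) / (tℓ : ℂ))‖
          ≤ C * (tℓ : ℝ) * (ℓ : ℝ) ^ (((m : ℝ) - 1) / 2)) := by
  refine ⟨1, one_pos, ?_⟩
  intro θ hθ2 a b ℓ t hp ht _hodd hcop
  haveI : Fact ℓ.Prime := ⟨hp⟩
  haveI : NeZero ℓ := ⟨hp.ne_zero⟩
  have hℓ1 : 1 < ℓ := hp.one_lt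
  have hℓ0R : (0:ℝ) < (ℓ:ℝ) := by positivity
  set θc : ZMod ℓ := (θ : ZMod ℓ) with hθc
  have hunit : ¬ IsUnit (ℓ : ℤ) := by
    rw [Int.isUnit_iff]
    push_neg
    constructor <;> omega
  have hθ0 : θc ≠ 0 := by
    intro h
    rw [hθc, ZMod.natCast_eq_zero_iff] at h
    exact hunit (hcop.isUnit_of_dvd' dvd_rfl
      (Dvd.dvd.mul_right (Int.natCast_dvd_natCast.mpr h) _))
  have ha0 : ∀ i, ((a i : ℤ) : ZMod ℓ) ≠ 0 := by
    intro i h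
    rw [ZMod.intCast_zmod_eq_zero_iff_dvd] at h
    exact hunit (hcop.isUnit_of_dvd' dvd_rfl
      (Dvd.dvd.mul_left (h.trans (Finset.dvd_prod_of_mem a (Finset.mem_univ i))) _))
  have hord : orderOf θc = t := ht.symm
  have hordu : orderOf (Units.mk0 θc hθ0) = t := by
    rw [← hord, ← orderOf_units]; rfl
  have htpos : 0 < t := by rw [← hordu]; exact orderOf_pos _
  have htle : t ≤ ℓ := by
    have h1 : orderOf (Units.mk0 θc hθ0) ∣ Fintype.card (ZMod ℓ)ˣ := orderOf_dvd_card
    rw [ZMod.card_units_eq_totient, hordu] at h1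
    have h2 := Nat.le_of_dvd (Nat.totient_pos.mpr (by omega)) h1
    have h3 := Nat.totient_le ℓ
    omega
  -- the key bound
  have key : ‖∑ x : Fin m → Fin t,
      (jacobiSym (∑ i, a i * (θ : ℤ) ^ ((x i : ℕ) + 1)) ℓ : ℂ) *
        Complex.exp (2 * Real.pi * Complex.I *
          (∑ i, (b i : ℂ) * (((x i : ℕ) : ℂ) + 1)) / (t : ℂ))‖
      ≤ (t : ℝ) * (ℓ : ℝ) ^ (((m : ℝ) - 1) / 2) := by
    have htriv : ‖∑ x : Fin m → Fin t,
        (jacobiSym (∑ i, a i * (θ : ℤ) ^ ((x i : ℕ) + 1)) ℓ : ℂ) *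
          Complex.exp (2 * Real.pi * Complex.I *
            (∑ i, (b i : ℂ) * (((x i : ℕ) : ℂ) + 1)) / (t : ℂ))‖ ≤ (t : ℝ)^m := by
      calc ‖∑ x : Fin m → Fin t,
          (jacobiSym (∑ i, a i * (θ : ℤ) ^ ((x i : ℕ) + 1)) ℓ : ℂ) *
            Complex.exp (2 * Real.pi * Complex.I *
              (∑ i, (b i : ℂ) * (((x i : ℕ) : ℂ) + 1)) / (t : ℂ))‖
          ≤ ∑ x : Fin m → Fin t, ‖(jacobiSym (∑ i, a i * (θ : ℤ) ^ ((x i : ℕ) + 1)) ℓ : ℂ) *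
              Complex.exp (2 * Real.pi * Complex.I *
                (∑ i, (b i : ℂ) * (((x i : ℕ) : ℂ) + 1)) / (t : ℂ))‖ :=
            norm_sum_le _ _
        _ ≤ ∑ _x : Fin m → Fin t, (1:ℝ) := by
            refine Finset.sum_le_sum fun x _ => ?_
            rw [norm_mul]
            have hle := mul_le_mul (abs_jacobi_le (∑ i, a i * (θ : ℤ) ^ ((x i : ℕ) + 1)) ℓ)
              (le_of_eq (abs_exp_term t b x)) (norm_nonneg _) one_pos.le
            simpa using hle
        _ = ((Fintype.card (Fin m → Fin t) : ℕ) : ℝ) := by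
            rw [Finset.sum_const, Finset.card_univ, nsmul_eq_mul, mul_one]
        _ = (t : ℝ)^m := by
            rw [Fintype.card_fun, Fintype.card_fin, Fintype.card_fin]
            push_cast
            ring
    rcases eq_or_lt_of_le hm with hm1 | hm2
    · -- m = 1 : trivial bound suffices
      subst hm1
      rw [show (((1:ℕ):ℝ) - 1)/2 = 0 by norm_num, Real.rpow_zero, mul_one]
      calc ‖_‖ ≤ (t:ℝ)^1 := htriv
        _ = (t:ℝ) := pow_one _
    rcases eq_or_ne ℓ 2 with hℓ2 | hℓ2
    · -- ℓ = 2 : then t = 1 and the trivial bound suffices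
      subst hℓ2
      have ht1 : t = 1 := by
        have hθ1 : θc = 1 := by
          have hz : ∀ z : ZMod 2, z ≠ 0 → z = 1 := by
            intro z h0
            fin_cases z
            · exact absurd rfl h0
            · rfl
          exact hz θc hθ0
        rw [← hord, hθ1, orderOf_one]
      calc ‖_‖ ≤ (t:ℝ)^m := htriv
        _ = 1 := by rw [ht1]; simp
        _ ≤ (t:ℝ) * ((2:ℕ):ℝ) ^ (((m:ℝ) - 1)/2) := by
            rw [ht1]
            have h1 : (1:ℝ) ≤ ((2:ℕ):ℝ) ^ (((m:ℝ) - 1)/2) := by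
              have hmR : (1:ℝ) ≤ (m:ℝ) := by exact_mod_cast hm
              have he : (0:ℝ) ≤ ((m:ℝ) - 1)/2 := by linarith
              have h2 := Real.rpow_le_rpow_of_exponent_le
                (by norm_num : (1:ℝ) ≤ ((2:ℕ):ℝ)) he
              rw [Real.rpow_zero] at h2
              simpa using h2
            rw [Nat.cast_one, one_mul]
            exact h1
    -- main case : 2 ≤ m and ℓ odd
    have hm2' : 2 ≤ m := hm2
    set i0 : Fin m := ⟨0, by omega⟩ with hi0
    set i1 : Fin m := ⟨1, by omega⟩ with hi1
    have hi01 : i1 ≠ i0 := by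
      simp only [hi0, hi1, Ne, Fin.mk.injEq]
      omega
    set Ei : Fin m → ℕ → ℂ := fun i => Efun t (b i) with hEi
    set F : Fin m → ZMod ℓ → ℂ :=
      fun i c => G t θc (Ei i) (c * ((a i : ℤ) : ZMod ℓ)) with hF
    have hFi : ∀ (i : Fin m) (c : ZMod ℓ), F i c
        = ∑ j : Fin t, Ei i ((j:ℕ)+1) *
            ZMod.stdAddChar (c * (((a i : ℤ) : ZMod ℓ) * θc ^ ((j:ℕ)+1))) := by
      intro i c
      show G t θc (Ei i) (c * ((a i : ℤ) : ZMod ℓ)) = _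
      rw [G, ← Fin.sum_univ_eq_sum_range (fun n => Ei i (n+1) *
        ZMod.stdAddChar (c * ((a i : ℤ) : ZMod ℓ) * θc ^ (n+1))) t]
      exact Finset.sum_congr rfl fun j _ => by rw [mul_assoc]
    have hFle : ∀ (i : Fin m) {c : ZMod ℓ}, c ≠ 0 →
        ‖F i c‖ ≤ Real.sqrt ℓ := by
      intro i c hc
      exact abs_G_le hθ0 hord htpos (Ei i) (fun n => abs_Efun t (b i) n) (eps t (b i))
        (abs_eps t (b i)) (fun n => Efun_step t (b i) n) (eps_pow t htpos.ne' (b i))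
        (mul_ne_zero hc (ha0 i))
    have hsumF : ∀ i : Fin m, ∑ c : ZMod ℓ, (‖F i c‖)^2 = (ℓ:ℝ) * t := by
      intro i
      have hb := (Equiv.mulRight₀ ((a i : ℤ) : ZMod ℓ) (ha0 i)).bijective
      calc ∑ c : ZMod ℓ, (‖F i c‖)^2
          = ∑ c : ZMod ℓ, (‖G t θc (Ei i) c‖)^2 :=
            Fintype.sum_bijective _ hb _ _ (fun c => rfl)
        _ = (ℓ:ℝ) * t := sum_sq_abs_G hθ0 hord (Ei i) (fun n => abs_Efun t (b i) n)
    have hid : gℓ ℓ * (∑ x : Fin m → Fin t,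
        (jacobiSym (∑ i, a i * (θ : ℤ) ^ ((x i : ℕ) + 1)) ℓ : ℂ) *
          Complex.exp (2 * Real.pi * Complex.I *
            (∑ i, (b i : ℂ) * (((x i : ℕ) : ℂ) + 1)) / (t : ℂ)))
        = ∑ c : ZMod ℓ, χℓ ℓ c * ∏ i, F i c := by
      rw [Finset.mul_sum]
      have step1 : ∀ x : Fin m → Fin t,
          gℓ ℓ * ((jacobiSym (∑ i, a i * (θ : ℤ) ^ ((x i : ℕ) + 1)) ℓ : ℂ) *
            Complex.exp (2 * Real.pi * Complex.I *
              (∑ i, (b i : ℂ) * (((x i : ℕ) : ℂ) + 1)) / (t : ℂ)))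
          = ∑ c : ZMod ℓ, χℓ ℓ c * ((∏ i, Ei i ((x i : ℕ)+1)) *
              ZMod.stdAddChar (c *
                (((∑ i, a i * (θ : ℤ) ^ ((x i : ℕ) + 1) : ℤ)) : ZMod ℓ))) := by
        intro x
        have hexp : Complex.exp (2 * Real.pi * Complex.I *
            (∑ i, (b i : ℂ) * (((x i : ℕ) : ℂ) + 1)) / (t : ℂ))
            = ∏ i, Ei i ((x i : ℕ)+1) := by
          rw [Finset.mul_sum, Finset.sum_div, Complex.exp_sum]
          refine Finset.prod_congr rfl fun i _ => ?_
          show _ = Efun t (b i) ((x i : ℕ)+1)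
          rw [Efun]
          congr 1
          push_cast
          ring
        calc gℓ ℓ * ((jacobiSym (∑ i, a i * (θ : ℤ) ^ ((x i : ℕ) + 1)) ℓ : ℂ) *
              Complex.exp (2 * Real.pi * Complex.I *
                (∑ i, (b i : ℂ) * (((x i : ℕ) : ℂ) + 1)) / (t : ℂ)))
            = (χℓ ℓ (((∑ i, a i * (θ : ℤ) ^ ((x i : ℕ) + 1) : ℤ)) : ZMod ℓ) * gℓ ℓ) *
                ∏ i, Ei i ((x i : ℕ)+1) := by rw [jacobi_chi, hexp]; ring
          _ = (∑ c : ZMod ℓ, χℓ ℓ c * ZMod.stdAddChar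
                (c * (((∑ i, a i * (θ : ℤ) ^ ((x i : ℕ) + 1) : ℤ)) : ZMod ℓ))) *
                ∏ i, Ei i ((x i : ℕ)+1) := by rw [gauss_inv hℓ2]
          _ = ∑ c : ZMod ℓ, χℓ ℓ c * ((∏ i, Ei i ((x i : ℕ)+1)) *
                ZMod.stdAddChar (c *
                  (((∑ i, a i * (θ : ℤ) ^ ((x i : ℕ) + 1) : ℤ)) : ZMod ℓ))) := by
              rw [Finset.sum_mul]
              exact Finset.sum_congr rfl fun c _ => by ring
      calc ∑ x : Fin m → Fin t, gℓ ℓ *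
            ((jacobiSym (∑ i, a i * (θ : ℤ) ^ ((x i : ℕ) + 1)) ℓ : ℂ) *
              Complex.exp (2 * Real.pi * Complex.I *
                (∑ i, (b i : ℂ) * (((x i : ℕ) : ℂ) + 1)) / (t : ℂ)))
          = ∑ x : Fin m → Fin t, ∑ c : ZMod ℓ, χℓ ℓ c * ((∏ i, Ei i ((x i : ℕ)+1)) *
              ZMod.stdAddChar (c *
                (((∑ i, a i * (θ : ℤ) ^ ((x i : ℕ) + 1) : ℤ)) : ZMod ℓ))) :=
            Finset.sum_congr rfl fun x _ => step1 x
        _ = ∑ c : ZMod ℓ, ∑ x : Fin m → Fin t, χℓ ℓ c * ((∏ i, Ei i ((x i : ℕ)+1)) *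
              ZMod.stdAddChar (c *
                (((∑ i, a i * (θ : ℤ) ^ ((x i : ℕ) + 1) : ℤ)) : ZMod ℓ))) :=
            Finset.sum_comm
        _ = ∑ c : ZMod ℓ, χℓ ℓ c * ∏ i, F i c := by
            refine Finset.sum_congr rfl fun c _ => ?_
            rw [← Finset.mul_sum]
            congr 1
            calc ∑ x : Fin m → Fin t, (∏ i, Ei i ((x i : ℕ)+1)) *
                  ZMod.stdAddChar (c *
                    (((∑ i, a i * (θ : ℤ) ^ ((x i : ℕ) + 1) : ℤ)) : ZMod ℓ))
                = ∑ x : Fin m → Fin t, ∏ i, (Ei i ((x i : ℕ)+1) *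
                    ZMod.stdAddChar (c * (((a i : ℤ) : ZMod ℓ) * θc ^ ((x i : ℕ)+1)))) := by
                  refine Finset.sum_congr rfl fun x _ => ?_
                  have hsx : (((∑ i, a i * (θ : ℤ) ^ ((x i : ℕ) + 1) : ℤ)) : ZMod ℓ)
                      = ∑ i, ((a i : ℤ) : ZMod ℓ) * θc ^ ((x i : ℕ)+1) := by
                    push_cast
                    rfl
                  rw [hsx, Finset.mul_sum, psi_map_sum, ← Finset.prod_mul_distrib]
              _ = ∏ i, ∑ j : Fin t, (Ei i ((j : ℕ)+1) *
                    ZMod.stdAddChar (c * (((a i : ℤ) : ZMod ℓ) * θc ^ ((j : ℕ)+1)))) :=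
                  (Fintype.prod_sum (κ := fun _ : Fin m => Fin t)
                    (fun i j => Ei i ((j : ℕ)+1) *
                      ZMod.stdAddChar (c * (((a i : ℤ) : ZMod ℓ) * θc ^ ((j : ℕ)+1))))).symm
              _ = ∏ i, F i c := Finset.prod_congr rfl fun i _ => (hFi i c).symm
    -- the absolute-value estimate
    have habs : ‖gℓ ℓ * ∑ x : Fin m → Fin t,
        (jacobiSym (∑ i, a i * (θ : ℤ) ^ ((x i : ℕ) + 1)) ℓ : ℂ) *
          Complex.exp (2 * Real.pi * Complex.I *
            (∑ i, (b i : ℂ) * (((x i : ℕ) : ℂ) + 1)) / (t : ℂ))‖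
        ≤ Real.sqrt ℓ ^ (m-2) * ((ℓ:ℝ) * t) := by
      rw [hid]
      calc ‖∑ c : ZMod ℓ, χℓ ℓ c * ∏ i, F i c‖
          ≤ ∑ c : ZMod ℓ, ‖χℓ ℓ c * ∏ i, F i c‖ :=
            norm_sum_le _ _
        _ = ∑ c ∈ Finset.univ.erase (0 : ZMod ℓ), ‖χℓ ℓ c * ∏ i, F i c‖ :=
            (Finset.sum_erase _ (by rw [chi_zero, zero_mul, norm_zero])).symm
        _ ≤ ∑ c ∈ Finset.univ.erase (0 : ZMod ℓ),
              Real.sqrt ℓ ^ (m-2) * (‖F i0 c‖ * ‖F i1 c‖) := by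
            refine Finset.sum_le_sum fun c hc => ?_
            have hc0 : c ≠ 0 := (Finset.mem_erase.1 hc).1
            rw [norm_mul, norm_prod]
            have hi1mem : i1 ∈ Finset.univ.erase i0 :=
              Finset.mem_erase.2 ⟨hi01, Finset.mem_univ _⟩
            have e1 : ∏ i, ‖F i c‖
                = ‖F i0 c‖ * ∏ i ∈ Finset.univ.erase i0, ‖F i c‖ :=
              (Finset.mul_prod_erase _ _ (Finset.mem_univ i0)).symm
            have e2 : ∏ i ∈ Finset.univ.erase i0, ‖F i c‖
                = ‖F i1 c‖ *
                    ∏ i ∈ (Finset.univ.erase i0).erase i1, ‖F i c‖ :=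
              (Finset.mul_prod_erase _ _ hi1mem).symm
            have e3 : ∏ i ∈ (Finset.univ.erase i0).erase i1, ‖F i c‖
                ≤ Real.sqrt ℓ ^ (m-2) := by
              have hcard : ((Finset.univ.erase i0).erase i1).card = m - 2 := by
                rw [Finset.card_erase_of_mem hi1mem,
                  Finset.card_erase_of_mem (Finset.mem_univ _), Finset.card_univ,
                  Fintype.card_fin]
                omega
              calc ∏ i ∈ (Finset.univ.erase i0).erase i1, ‖F i c‖
                  ≤ ∏ _i ∈ (Finset.univ.erase i0).erase i1, Real.sqrt ℓ :=
                    Finset.prod_le_prod (fun i _ => norm_nonneg _)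
                      (fun i _ => hFle i hc0)
                _ = Real.sqrt ℓ ^ (m-2) := by rw [Finset.prod_const, hcard]
            calc ‖χℓ ℓ c‖ * ∏ i, ‖F i c‖
                ≤ 1 * ∏ i, ‖F i c‖ :=
                  mul_le_mul_of_nonneg_right (abs_chi_le_one c)
                    (Finset.prod_nonneg fun i _ => norm_nonneg _)
              _ = ‖F i0 c‖ * (‖F i1 c‖ *
                    ∏ i ∈ (Finset.univ.erase i0).erase i1, ‖F i c‖) := by
                  rw [one_mul, e1, e2]
              _ ≤ ‖F i0 c‖ * (‖F i1 c‖ * Real.sqrt ℓ ^ (m-2)) := by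
                  refine mul_le_mul_of_nonneg_left ?_ (norm_nonneg _)
                  exact mul_le_mul_of_nonneg_left e3 (norm_nonneg _)
              _ = Real.sqrt ℓ ^ (m-2) * (‖F i0 c‖ * ‖F i1 c‖) := by
                  ring
        _ = Real.sqrt ℓ ^ (m-2) * ∑ c ∈ Finset.univ.erase (0 : ZMod ℓ),
              ‖F i0 c‖ * ‖F i1 c‖ := by rw [Finset.mul_sum]
        _ ≤ Real.sqrt ℓ ^ (m-2) * ((ℓ:ℝ) * t) := by
            refine mul_le_mul_of_nonneg_left ?_ (by positivity)
            calc ∑ c ∈ Finset.univ.erase (0 : ZMod ℓ),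
                  ‖F i0 c‖ * ‖F i1 c‖
                ≤ ∑ c ∈ Finset.univ.erase (0 : ZMod ℓ),
                    ((‖F i0 c‖)^2 + (‖F i1 c‖)^2)/2 := by
                  refine Finset.sum_le_sum fun c _ => ?_
                  nlinarith [sq_nonneg (‖F i0 c‖ - ‖F i1 c‖)]
              _ = ((∑ c ∈ Finset.univ.erase (0 : ZMod ℓ), (‖F i0 c‖)^2) +
                    ∑ c ∈ Finset.univ.erase (0 : ZMod ℓ), (‖F i1 c‖)^2)/2 := by
                  rw [← Finset.sum_div, Finset.sum_add_distrib]
              _ ≤ (((ℓ:ℝ)*t) + ((ℓ:ℝ)*t))/2 := by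
                  have h0 : ∀ i : Fin m, ∑ c ∈ Finset.univ.erase (0 : ZMod ℓ),
                      (‖F i c‖)^2 ≤ (ℓ:ℝ)*t := by
                    intro i
                    rw [← hsumF i]
                    exact Finset.sum_le_sum_of_subset_of_nonneg (Finset.subset_univ _)
                      (fun _ _ _ => sq_nonneg _)
                  have h1 := h0 i0
                  have h2 := h0 i1
                  linarith
              _ = (ℓ:ℝ) * t := by ring
    have hsqrtpos : 0 < Real.sqrt ℓ := Real.sqrt_pos.mpr hℓ0R
    have habs2 : ‖∑ x : Fin m → Fin t,
        (jacobiSym (∑ i, a i * (θ : ℤ) ^ ((x i : ℕ) + 1)) ℓ : ℂ) *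
          Complex.exp (2 * Real.pi * Complex.I *
            (∑ i, (b i : ℂ) * (((x i : ℕ) : ℂ) + 1)) / (t : ℂ))‖
        ≤ Real.sqrt ℓ ^ (m-2) * ((ℓ:ℝ) * t) / Real.sqrt ℓ := by
      rw [le_div_iff₀ hsqrtpos]
      have h1 : ‖∑ x : Fin m → Fin t,
          (jacobiSym (∑ i, a i * (θ : ℤ) ^ ((x i : ℕ) + 1)) ℓ : ℂ) *
            Complex.exp (2 * Real.pi * Complex.I *
              (∑ i, (b i : ℂ) * (((x i : ℕ) : ℂ) + 1)) / (t : ℂ))‖ * Real.sqrt ℓ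
          = ‖gℓ ℓ * ∑ x : Fin m → Fin t,
          (jacobiSym (∑ i, a i * (θ : ℤ) ^ ((x i : ℕ) + 1)) ℓ : ℂ) *
            Complex.exp (2 * Real.pi * Complex.I *
              (∑ i, (b i : ℂ) * (((x i : ℕ) : ℂ) + 1)) / (t : ℂ))‖ := by
        rw [norm_mul, abs_gauss hℓ2]
        ring
      rw [h1]
      exact habs
    refine le_trans habs2 (le_of_eq ?_)
    have hcast : ((m - 2 : ℕ) : ℝ) = (m:ℝ) - 2 := by
      push_cast [Nat.cast_sub hm2']
      ring
    rw [Real.sqrt_eq_rpow, div_eq_mul_inv, ← Real.rpow_natCast ((ℓ:ℝ)^((1:ℝ)/2)) (m-2),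
      ← Real.rpow_mul hℓ0R.le, ← Real.rpow_neg hℓ0R.le, hcast]
    calc (ℓ:ℝ)^((1:ℝ)/2*((m:ℝ)-2)) * ((ℓ:ℝ)*(t:ℝ)) * (ℓ:ℝ)^(-((1:ℝ)/2))
        = (t:ℝ) * ((ℓ:ℝ)^((1:ℝ)/2*((m:ℝ)-2)) * (ℓ:ℝ)^(1:ℝ) * (ℓ:ℝ)^(-((1:ℝ)/2))) := by
          rw [Real.rpow_one]; ring
      _ = (t:ℝ) * (ℓ:ℝ)^((1:ℝ)/2*((m:ℝ)-2) + 1 + -((1:ℝ)/2)) := by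
          rw [← Real.rpow_add hℓ0R, ← Real.rpow_add hℓ0R]
      _ = (t:ℝ) * (ℓ:ℝ)^(((m:ℝ)-1)/2) := by
          rw [show (1:ℝ)/2*((m:ℝ)-2) + 1 + -((1:ℝ)/2) = ((m:ℝ)-1)/2 by ring]
  constructor
  · calc ‖_‖ ≤ (t : ℝ) * (ℓ : ℝ) ^ (((m : ℝ) - 1) / 2) := key
      _ ≤ (ℓ : ℝ) * (ℓ : ℝ) ^ (((m : ℝ) - 1) / 2) := by
          apply mul_le_mul_of_nonneg_right (by exact_mod_cast htle)
          positivity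
      _ = 1 * (ℓ : ℝ) ^ (((m : ℝ) + 1) / 2) := by
          rw [one_mul]
          rw [show (ℓ:ℝ) * (ℓ:ℝ) ^ (((m:ℝ)-1)/2)
            = (ℓ:ℝ) ^ (1:ℝ) * (ℓ:ℝ) ^ (((m:ℝ)-1)/2) by rw [Real.rpow_one]]
          rw [← Real.rpow_add hℓ0R]
          congr 1
          ring
  · intro _
    rw [one_mul]
    exact key
end

section
/- Let $\vartheta \geq 2$, $g \geq 2$ be integers, $\ell$ a prime not dividing $\vartheta$, $t = \tau_\ell(\vartheta)$ the multiplicative order of $\vartheta$ modulo $\ell$, $m \geq 3$, and $c_1, \ldots, c_m$ integers all coprime to $\ell$. Let $T_m(\ell)$ denote the number of tuples $(k_1, \ldots, k_m)$ with $0 \leq k_i < t$ such that $\sum_{i=1}^m c_i \vartheta^{k_i} \equiv 0 \pmod{\ell}$. Then $T_m(\ell) \leq t^m/\ell + t \cdot \ell^{(m-2)/2}$. -/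
open Finset Complex

namespace Stmt19Aux

lemma addchar_map_sum {A : Type*} [AddCommGroup A] {ι : Type*} (ψ : AddChar A ℂ)
    (s : Finset ι) (f : ι → A) : ψ (∑ i ∈ s, f i) = ∏ i ∈ s, ψ (f i) := by
  classical
  induction s using Finset.induction_on with
  | empty => simp
  | insert _ _ h ih => rw [Finset.sum_insert h, Finset.prod_insert h, AddChar.map_add_eq_mul, ih]

variable {ℓ : ℕ} [NeZero ℓ]

lemma conj_std (y : ZMod ℓ) :
    (starRingEnd ℂ) (ZMod.stdAddChar y) = ZMod.stdAddChar (-y) := by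
  rw [AddChar.map_neg_eq_inv, Complex.inv_eq_conj]
  rw [ZMod.stdAddChar_apply]; exact Circle.norm_coe _

noncomputable def S (x : ZMod ℓ) (t : ℕ) (b : ZMod ℓ) : ℂ :=
  ∑ k ∈ Finset.range t, ZMod.stdAddChar (b * x ^ k)

lemma S_zero (x : ZMod ℓ) (t : ℕ) : S x t 0 = (t : ℂ) := by
  simp [S]

lemma mean_value (x : ZMod ℓ) (t : ℕ)
    (hinj : ∀ k k', k < t → k' < t → x ^ k = x ^ k' → k = k') :
    ∑ b : ZMod ℓ, Complex.normSq (S x t b) = ℓ * t := by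
  have h1 : ∀ b : ZMod ℓ, (S x t b) * (starRingEnd ℂ) (S x t b) =
      ∑ k ∈ Finset.range t, ∑ k' ∈ Finset.range t,
        ZMod.stdAddChar (b * (x ^ k - x ^ k')) := by
    intro b
    unfold S
    rw [map_sum, Finset.sum_mul_sum]
    refine Finset.sum_congr rfl fun k _ => Finset.sum_congr rfl fun k' _ => ?_
    rw [conj_std, ← AddChar.map_add_eq_mul]
    congr 1
    ring
  have h2 : ∑ b : ZMod ℓ, ((S x t b) * (starRingEnd ℂ) (S x t b)) = (ℓ : ℂ) * t := by
    simp_rw [h1]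
    rw [Finset.sum_comm]
    have h3 : ∀ k, ∑ b : ZMod ℓ, ∑ k' ∈ Finset.range t,
        ZMod.stdAddChar (b * (x ^ k - x ^ k')) =
        ∑ k' ∈ Finset.range t, ∑ b : ZMod ℓ,
        ZMod.stdAddChar (b * (x ^ k - x ^ k')) := fun k => Finset.sum_comm
    simp_rw [h3]
    have h4 : ∀ d : ZMod ℓ, ∑ b : ZMod ℓ, ZMod.stdAddChar (b * d) =
        if d = 0 then (Fintype.card (ZMod ℓ) : ℂ) else 0 :=
      fun d => by
        rw [AddChar.sum_mulShift d (ZMod.isPrimitive_stdAddChar ℓ)]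
        split <;> simp
    simp_rw [h4]
    have inner : ∀ k ∈ Finset.range t, (∑ k' ∈ Finset.range t,
        if x ^ k - x ^ k' = 0 then (Fintype.card (ZMod ℓ) : ℂ) else 0) = (ℓ : ℂ) := by
      intro k hk
      rw [Finset.sum_eq_single_of_mem k hk]
      · simp [ZMod.card]
      · intro k' hk' hne
        rw [if_neg]
        intro h
        rw [sub_eq_zero] at h
        exact hne (hinj k' k (Finset.mem_range.1 hk') (Finset.mem_range.1 hk) h.symm)
    rw [Finset.sum_congr rfl inner, Finset.sum_const, Finset.card_range]
    ring
  have h5 : ∀ b : ZMod ℓ, (S x t b) * (starRingEnd ℂ) (S x t b) =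
      ((Complex.normSq (S x t b) : ℝ) : ℂ) := fun b => Complex.mul_conj _
  simp_rw [h5] at h2
  exact_mod_cast h2

lemma S_shift (x : ZMod ℓ) (t : ℕ) (hx1 : x ^ t = 1) (b : ZMod ℓ) :
    S x t (b * x) = S x t b := by
  have h : ∀ k : ℕ, (b * x) * x ^ k = b * x ^ (k + 1) := by intro k; ring
  unfold S
  simp_rw [h]
  have h3 := Finset.sum_range_succ (fun k => ZMod.stdAddChar (b * x ^ k)) t
  rw [Finset.sum_range_succ' (fun k => ZMod.stdAddChar (b * x ^ k)) t] at h3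
  have h4 : ZMod.stdAddChar (b * x ^ t) = ZMod.stdAddChar (b * x ^ 0) := by
    rw [hx1, pow_zero]
  rw [h4] at h3
  exact add_right_cancel h3

lemma S_shift_pow (x : ZMod ℓ) (t : ℕ) (hx1 : x ^ t = 1) (b : ZMod ℓ) (j : ℕ) :
    S x t (b * x ^ j) = S x t b := by
  induction j with
  | zero => simp
  | succ n ih => rw [pow_succ, ← mul_assoc, S_shift x t hx1, ih]

lemma korobov [Fact ℓ.Prime] (x : ZMod ℓ) (t : ℕ) (htpos : 0 < t) (hx1 : x ^ t = 1)
    (hinj : ∀ k k', k < t → k' < t → x ^ k = x ^ k' → k = k')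
    (u : ZMod ℓ) (hu : u ≠ 0) :
    ‖S x t u‖ ≤ Real.sqrt ℓ := by
  have key : (t : ℝ) * Complex.normSq (S x t u) ≤ (ℓ : ℝ) * t := by
    calc (t : ℝ) * Complex.normSq (S x t u)
        = ∑ j ∈ Finset.range t, Complex.normSq (S x t (u * x ^ j)) := by
          rw [Finset.sum_congr rfl fun j _ => by rw [S_shift_pow x t hx1]]
          rw [Finset.sum_const, Finset.card_range, nsmul_eq_mul]
      _ = ∑ b ∈ (Finset.range t).image (fun j => u * x ^ j),
            Complex.normSq (S x t b) := by
          rw [Finset.sum_image]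
          intro j hj j' hj' he
          exact hinj j j' (Finset.mem_range.1 hj) (Finset.mem_range.1 hj')
            (mul_left_cancel₀ hu he)
      _ ≤ ∑ b : ZMod ℓ, Complex.normSq (S x t b) :=
          Finset.sum_le_sum_of_subset_of_nonneg (Finset.subset_univ _)
            (fun _ _ _ => Complex.normSq_nonneg _)
      _ = (ℓ : ℝ) * t := mean_value x t hinj
  have ht' : (0 : ℝ) < t := by exact_mod_cast htpos
  have h2 : Complex.normSq (S x t u) ≤ (ℓ : ℝ) := by nlinarith [key]
  rw [Complex.norm_def]
  exact Real.sqrt_le_sqrt h2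

lemma count_eq {m : ℕ} (x : ZMod ℓ) (t : ℕ) (d : Fin m → ZMod ℓ) :
    ((((Fintype.piFinset fun _ : Fin m => Finset.range t).filter
        (fun k => ∑ i, d i * x ^ (k i) = 0)).card : ℂ)) * ℓ =
    ∑ b : ZMod ℓ, ∏ i, S x t (b * d i) := by
  have h1 : ∀ b : ZMod ℓ, ∏ i, S x t (b * d i) =
      ∑ k ∈ Fintype.piFinset (fun _ : Fin m => Finset.range t),
        ZMod.stdAddChar (b * ∑ i, d i * x ^ (k i)) := by
    intro b
    unfold S
    rw [Finset.prod_univ_sum]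
    refine Finset.sum_congr rfl fun k _ => ?_
    rw [Finset.mul_sum, addchar_map_sum]
    refine Finset.prod_congr rfl fun i _ => ?_
    congr 1
    ring
  simp_rw [h1]
  rw [Finset.sum_comm]
  have h2 : ∀ k : Fin m → ℕ, ∑ b : ZMod ℓ,
      ZMod.stdAddChar (b * ∑ i, d i * x ^ (k i)) =
      if (∑ i, d i * x ^ (k i)) = 0 then (ℓ : ℂ) else 0 := by
    intro k
    rw [AddChar.sum_mulShift _ (ZMod.isPrimitive_stdAddChar ℓ)]
    split <;> simp [ZMod.card]
  simp_rw [h2]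
  rw [← Finset.sum_filter, Finset.sum_const, nsmul_eq_mul]

end Stmt19Aux

open Stmt19Aux

/-- Bound for the number of solutions of ∑ cᵢ θ^{kᵢ} ≡ 0 (mod ℓ) with
0 ≤ kᵢ < t, t the multiplicative order of θ modulo ℓ. -/
theorem stmt19 (θ : ℕ) (hθ : 2 ≤ θ) (ℓ : ℕ) (hℓ : ℓ.Prime) (hlθ : ¬ ℓ ∣ θ)
    (m : ℕ) (hm : 3 ≤ m) (c : Fin m → ℤ) (hc : ∀ i, IsCoprime (c i) (ℓ : ℤ))
    (t : ℕ) (ht : t = orderOf (θ : ZMod ℓ)) :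
    ({k : Fin m → ℕ | (∀ i, k i < t) ∧
        ∑ i, (c i : ZMod ℓ) * (θ : ZMod ℓ) ^ (k i) = 0}.ncard : ℝ)
      ≤ (t : ℝ) ^ m / (ℓ : ℝ) + (t : ℝ) * (ℓ : ℝ) ^ (((m : ℝ) - 2) / 2) := by
  classical
  haveI : Fact ℓ.Prime := ⟨hℓ⟩
  haveI : NeZero ℓ := ⟨hℓ.ne_zero⟩
  set x : ZMod ℓ := (θ : ZMod ℓ) with hxdef
  have hx : x ≠ 0 := by
    rw [hxdef, Ne, ZMod.natCast_eq_zero_iff]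
    exact hlθ
  have hx1 : x ^ t = 1 := by rw [ht]; exact pow_orderOf_eq_one x
  have htpos : 0 < t := by
    rw [ht]
    refine IsOfFinOrder.orderOf_pos ?_
    rw [isOfFinOrder_iff_pow_eq_one]
    exact ⟨ℓ - 1, Nat.sub_pos_of_lt hℓ.one_lt, ZMod.pow_card_sub_one_eq_one hx⟩
  have hinj : ∀ k k', k < t → k' < t → x ^ k = x ^ k' → k = k' := by
    have main : ∀ k k', k ≤ k' → k' < t → x ^ k = x ^ k' → k = k' := by
      intro k k' hle hlt he
      have h1 : x ^ k * x ^ (k' - k) = x ^ k * 1 := by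
        rw [mul_one, ← pow_add, Nat.add_sub_cancel' hle]
        exact he.symm
      have h2 : x ^ (k' - k) = 1 := mul_left_cancel₀ (pow_ne_zero _ hx) h1
      have h3 : t ∣ k' - k := by rw [ht]; exact orderOf_dvd_of_pow_eq_one h2
      have h4 : k' - k < t := by omega
      have h5 := Nat.eq_zero_of_dvd_of_lt h3 h4
      omega
    intro k k' hk hk' he
    rcases le_total k k' with h | h
    · exact main k k' h hk' he
    · exact (main k' k h hk he.symm).symm
  set d : Fin m → ZMod ℓ := fun i => ((c i : ZMod ℓ)) with hddef
  have hd : ∀ i, d i ≠ 0 := by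
    intro i h0
    obtain ⟨u, v, huv⟩ := hc i
    have h2 : ((u * c i + v * ℓ : ℤ) : ZMod ℓ) = 1 := by rw [huv]; norm_num
    push_cast at h2
    rw [show ((c i : ZMod ℓ)) = d i from rfl, h0, ZMod.natCast_self] at h2
    simp at h2
  set F := (Fintype.piFinset fun _ : Fin m => Finset.range t).filter
      (fun k => ∑ i, d i * x ^ (k i) = 0) with hF
  have hset : {k : Fin m → ℕ | (∀ i, k i < t) ∧
      ∑ i, (c i : ZMod ℓ) * (θ : ZMod ℓ) ^ (k i) = 0} = ↑F := by
    ext k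
    simp only [Set.mem_setOf_eq, hF, Finset.coe_filter, Fintype.mem_piFinset,
      Finset.mem_range]
    exact Iff.rfl
  rw [hset, Set.ncard_coe_finset]
  -- key identity
  have key := count_eq x t d
  rw [← hF] at key
  have split : ∑ b : ZMod ℓ, ∏ i, S x t (b * d i)
      = (t : ℂ) ^ m + ∑ b ∈ Finset.univ.erase (0 : ZMod ℓ), ∏ i, S x t (b * d i) := by
    rw [← Finset.add_sum_erase Finset.univ _ (Finset.mem_univ (0 : ZMod ℓ))]
    congr 1
    simp only [zero_mul, S_zero, Finset.prod_const, Finset.card_univ, Fintype.card_fin]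
  rw [split] at key
  -- index constants
  have hm0 : (0 : ℕ) < m := by omega
  have hm1 : (1 : ℕ) < m := by omega
  set i0 : Fin m := ⟨0, hm0⟩
  set i1 : Fin m := ⟨1, hm1⟩
  have h01 : i0 ≠ i1 := by simp [i0, i1, Fin.ext_iff]
  set C : ℝ := Real.sqrt ℓ ^ (m - 2) with hC
  have hCnn : 0 ≤ C := pow_nonneg (Real.sqrt_nonneg _) _
  set f : ZMod ℓ → Fin m → ℝ := fun b i => ‖S x t (b * d i)‖ with hf
  have hfnn : ∀ b i, 0 ≤ f b i := fun b i => norm_nonneg _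
  -- product bound
  have prodbound : ∀ b ∈ Finset.univ.erase (0 : ZMod ℓ),
      ‖∏ i, S x t (b * d i)‖ ≤ C * (f b i0 * f b i1) := by
    intro b hb
    have hbne : b ≠ 0 := Finset.ne_of_mem_erase hb
    rw [norm_prod]
    have hsub : ({i0, i1} : Finset (Fin m)) ⊆ Finset.univ := Finset.subset_univ _
    rw [← Finset.prod_sdiff hsub]
    have hpair : ∏ i ∈ ({i0, i1} : Finset (Fin m)), ‖S x t (b * d i)‖
        = f b i0 * f b i1 := by
      rw [Finset.prod_insert (by simp [h01]), Finset.prod_singleton]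
    have hrest : ∏ i ∈ Finset.univ \ ({i0, i1} : Finset (Fin m)),
        ‖S x t (b * d i)‖ ≤ C := by
      have hcard : (Finset.univ \ ({i0, i1} : Finset (Fin m))).card = m - 2 := by
        rw [Finset.card_sdiff_of_subset hsub, Finset.card_univ, Fintype.card_fin,
          Finset.card_insert_of_notMem (by simp [h01]), Finset.card_singleton]
      calc ∏ i ∈ Finset.univ \ ({i0, i1} : Finset (Fin m)),
            ‖S x t (b * d i)‖
          ≤ ∏ _i ∈ Finset.univ \ ({i0, i1} : Finset (Fin m)), Real.sqrt ℓ :=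
            Finset.prod_le_prod (fun _ _ => norm_nonneg _)
              (fun i _ => korobov x t htpos hx1 hinj (b * d i)
                (mul_ne_zero hbne (hd i)))
        _ = C := by rw [Finset.prod_const, hcard]
    rw [hpair]
    exact mul_le_mul_of_nonneg_right hrest (mul_nonneg (hfnn b i0) (hfnn b i1))
  -- Cauchy-Schwarz
  have sumSq : ∀ i : Fin m, ∑ b : ZMod ℓ, (f b i) ^ 2 = (ℓ : ℝ) * t := by
    intro i
    have hbij := Equiv.sum_comp (Equiv.mulRight₀ (d i) (hd i))
      (fun b => Complex.normSq (S x t b))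
    calc ∑ b : ZMod ℓ, (f b i) ^ 2
        = ∑ b : ZMod ℓ, Complex.normSq (S x t (b * d i)) := by
          refine Finset.sum_congr rfl fun b _ => ?_
          rw [hf]
          exact Complex.sq_norm _
      _ = ∑ b : ZMod ℓ, Complex.normSq (S x t b) := hbij
      _ = (ℓ : ℝ) * t := mean_value x t hinj
  have cs : ∑ b : ZMod ℓ, f b i0 * f b i1 ≤ (ℓ : ℝ) * t := by
    have h := Finset.sum_mul_sq_le_sq_mul_sq Finset.univ (fun b => f b i0)
      (fun b => f b i1)
    rw [sumSq i0, sumSq i1] at h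
    have hnn : 0 ≤ ∑ b : ZMod ℓ, f b i0 * f b i1 :=
      Finset.sum_nonneg fun b _ => mul_nonneg (hfnn b i0) (hfnn b i1)
    have hltnn : (0 : ℝ) ≤ (ℓ : ℝ) * t := by positivity
    nlinarith [h, hnn, hltnn]
  -- bound on the error sum
  have zbound : ‖∑ b ∈ Finset.univ.erase (0 : ZMod ℓ),
      ∏ i, S x t (b * d i)‖ ≤ C * ((ℓ : ℝ) * t) := by
    calc ‖∑ b ∈ Finset.univ.erase (0 : ZMod ℓ), ∏ i, S x t (b * d i)‖
        ≤ ∑ b ∈ Finset.univ.erase (0 : ZMod ℓ), ‖∏ i, S x t (b * d i)‖ :=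
          norm_sum_le _ _
      _ ≤ ∑ b ∈ Finset.univ.erase (0 : ZMod ℓ), C * (f b i0 * f b i1) :=
          Finset.sum_le_sum prodbound
      _ = C * ∑ b ∈ Finset.univ.erase (0 : ZMod ℓ), f b i0 * f b i1 := by
          rw [Finset.mul_sum]
      _ ≤ C * ∑ b : ZMod ℓ, f b i0 * f b i1 := by
          refine mul_le_mul_of_nonneg_left ?_ hCnn
          exact Finset.sum_le_sum_of_subset_of_nonneg
            (Finset.erase_subset _ _)
            (fun b _ _ => mul_nonneg (hfnn b i0) (hfnn b i1))
      _ ≤ C * ((ℓ : ℝ) * t) := mul_le_mul_of_nonneg_left cs hCnn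
  -- real inequality
  have hreal : (F.card : ℝ) * ℓ - (t : ℝ) ^ m ≤ C * ((ℓ : ℝ) * t) := by
    have hz : (((F.card : ℝ) * ℓ - (t : ℝ) ^ m : ℝ) : ℂ)
        = ∑ b ∈ Finset.univ.erase (0 : ZMod ℓ), ∏ i, S x t (b * d i) := by
      push_cast
      linear_combination key
    calc (F.card : ℝ) * ℓ - (t : ℝ) ^ m
        ≤ |(F.card : ℝ) * ℓ - (t : ℝ) ^ m| := le_abs_self _
      _ = ‖(((F.card : ℝ) * ℓ - (t : ℝ) ^ m : ℝ) : ℂ)‖ := by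
          rw [Complex.norm_real, Real.norm_eq_abs]
      _ = ‖∑ b ∈ Finset.univ.erase (0 : ZMod ℓ),
            ∏ i, S x t (b * d i)‖ := by rw [hz]
      _ ≤ C * ((ℓ : ℝ) * t) := zbound
  have hlpos : (0 : ℝ) < ℓ := by exact_mod_cast hℓ.pos
  have hfinal : (F.card : ℝ) ≤ (t : ℝ) ^ m / ℓ + (t : ℝ) * C := by
    rw [div_add' _ _ _ (ne_of_gt hlpos), le_div_iff₀ hlpos]
    nlinarith [hreal]
  -- convert the rpow
  have hrpow : (ℓ : ℝ) ^ (((m : ℝ) - 2) / 2) = C := by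
    have hm2 : ((m : ℝ) - 2) = ((m - 2 : ℕ) : ℝ) := by
      rw [Nat.cast_sub (by omega)]
      norm_num
    rw [hC, Real.sqrt_eq_rpow, ← Real.rpow_natCast ((ℓ : ℝ) ^ (1 / (2 : ℝ))) (m - 2),
      ← Real.rpow_mul (Nat.cast_nonneg ℓ), hm2]
    congr 1
    ring
  rw [hrpow]
  exact hfinal
end
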